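/- arXiv:1605.04520 — 11 statements merged into one kernel-verified Lean document; each statement's English description precedes it below -/
import Mathlib

section
/- Let X be a finite-dimensional real normed vector space and A : X ⇒ X a set-valued accretive map. If the range of A is all of X, then for every scalar α ≥ 0 the set S_α = {x ∈ X | inf_{u ∈ A(x)} ‖u‖ ≤ α} is bounded. -/
open NormedSpace ENNReal

/-- The (normalized) duality mapping: `J(x) = {x* | ‖x*‖ = ‖x‖, ⟨x,x*⟩ = ‖x*‖‖x‖}`. -/
def dualitySet {X : Type*} [NormedAddCommGroup X] [NormedSpace ℝ X] (x : X) :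
    Set (StrongDual ℝ X) := {f | ‖f‖ = ‖x‖ ∧ f x = ‖f‖ * ‖x‖}

/-- A set-valued map `A : X ⇒ X` is accretive. -/
def Accretive {X : Type*} [NormedAddCommGroup X] [NormedSpace ℝ X]
    (A : X → Set X) : Prop :=
  ∀ x y u v, u ∈ A x → v ∈ A y → ∃ f ∈ dualitySet (x - y), 0 ≤ f (u - v)

theorem stmt0 {X : Type*} [NormedAddCommGroup X] [NormedSpace ℝ X]
    [FiniteDimensional ℝ X] (A : X → Set X) (hA : Accretive A)
    (hsurj : ⋃ x, A x = Set.univ) :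
    ∀ α : ℝ, 0 ≤ α →
      Bornology.IsBounded
        {x : X | (⨅ u ∈ A x, (‖u‖₊ : ℝ≥0∞)) ≤ ENNReal.ofReal α} := by
  intro α hα
  -- choose preimages for surjectivity
  have hsurj' : ∀ v : X, ∃ y, v ∈ A y := by
    intro v
    have : v ∈ ⋃ x, A x := by rw [hsurj]; trivial
    simpa using this
  choose Y hY using hsurj'
  set lam : ℝ := 2 * α + 4 with hlamdef
  have hlam : (4:ℝ) ≤ lam := by simp [hlamdef]; linarith
  -- finite 1/4-net of the unit sphere
  obtain ⟨t, htfin, htcov⟩ :=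
    Metric.totallyBounded_iff.mp (isCompact_sphere (0:X) 1).totallyBounded
      (1/4) (by norm_num)
  obtain ⟨M0, hM0⟩ := (htfin.image (fun z => ‖Y (lam • z)‖)).bddAbove
  set M : ℝ := max M0 0 with hMdef
  have hM0' : (0:ℝ) ≤ M := le_max_right _ _
  have hMb : ∀ z ∈ t, ‖Y (lam • z)‖ ≤ M := by
    intro z hz
    exact le_trans (hM0 (Set.mem_image_of_mem _ hz)) (le_max_left _ _)
  set R : ℝ := 20 * M + 20 * lam + 20 with hRdef
  rw [Metric.isBounded_iff_subset_closedBall 0]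
  refine ⟨R, fun x hx => ?_⟩
  simp only [Set.mem_setOf_eq] at hx
  rw [Metric.mem_closedBall, dist_zero_right]
  by_contra hxR
  push_neg at hxR
  -- extract u ∈ A x with ‖u‖ < α + 1
  have hlt : (⨅ u ∈ A x, (‖u‖₊ : ℝ≥0∞)) < ENNReal.ofReal (α + 1) :=
    lt_of_le_of_lt hx (by rw [ENNReal.ofReal_lt_ofReal_iff (by linarith)]; linarith)
  simp only [iInf_lt_iff] at hlt
  obtain ⟨u, hu, hun⟩ := hlt
  rw [show ((‖u‖₊ : ℝ≥0∞)) = ENNReal.ofReal ‖u‖ from (ofReal_norm u).symm,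
    ENNReal.ofReal_lt_ofReal_iff_of_nonneg (norm_nonneg u)] at hun
  -- x has big norm
  have hxpos : (0:ℝ) < ‖x‖ := by
    have : (0:ℝ) ≤ R := by positivity
    linarith
  -- find net point near x/‖x‖
  have hmem : ‖x‖⁻¹ • x ∈ Metric.sphere (0:X) 1 := by
    simp [norm_smul, abs_of_pos (inv_pos.mpr hxpos), inv_mul_cancel₀ (ne_of_gt hxpos)]
  obtain ⟨z, hz, hzx⟩ := Set.mem_iUnion₂.mp (htcov hmem)
  rw [Metric.mem_ball, dist_eq_norm] at hzx
  set y : X := Y (lam • z) with hydef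
  have hv : lam • z ∈ A y := hY _
  have hyM : ‖y‖ ≤ M := hMb z hz
  set a : X := x - y with hadef
  have hna : ‖x‖ - M ≤ ‖a‖ := by
    have := norm_sub_norm_le x y
    have : ‖x‖ - ‖y‖ ≤ ‖a‖ := by
      calc ‖x‖ - ‖y‖ ≤ ‖x - y‖ := norm_sub_norm_le x y
        _ = ‖a‖ := rfl
    linarith
  have hnabig : lam ≤ ‖a‖ ∧ 16 * M ≤ ‖a‖ ∧ 0 < ‖a‖ := by
    refine ⟨by linarith, by linarith, by linarith⟩
  have hapos : (0:ℝ) < ‖a‖ := hnabig.2.2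
  -- accretivity inequality: ‖u‖ ≥ ‖a‖ - ‖a - lam • z‖
  obtain ⟨f, ⟨hf1, hf2⟩, hf3⟩ := hA x y u (lam • z) hu hv
  have key : ‖a‖ - ‖a - lam • z‖ ≤ ‖u‖ := by
    have e1 : f u ≤ ‖a‖ * ‖u‖ := by
      calc f u ≤ |f u| := le_abs_self _
        _ = ‖f u‖ := rfl
        _ ≤ ‖f‖ * ‖u‖ := f.le_opNorm u
        _ = ‖a‖ * ‖u‖ := by rw [hf1]
    have e2 : f (lam • z) ≤ f u := by
      have := hf3
      rw [map_sub] at this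
      linarith
    have e3 : ‖a‖ * ‖a‖ - ‖a‖ * ‖a - lam • z‖ ≤ f (lam • z) := by
      have h4 : f (a - lam • z) ≤ ‖a‖ * ‖a - lam • z‖ := by
        calc f (a - lam • z) ≤ |f (a - lam • z)| := le_abs_self _
          _ = ‖f (a - lam • z)‖ := rfl
          _ ≤ ‖f‖ * ‖a - lam • z‖ := f.le_opNorm _
          _ = ‖a‖ * ‖a - lam • z‖ := by rw [hf1]
      have h5 : f a = ‖a‖ * ‖a‖ := by
        show f (x - y) = ‖x - y‖ * ‖x - y‖
        rw [hf2, hf1]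
      have h6 : f (a - lam • z) = f a - f (lam • z) := map_sub f a (lam • z)
      linarith [h4, h5, h6]
    have : ‖a‖ * (‖a‖ - ‖a - lam • z‖) ≤ ‖a‖ * ‖u‖ := by nlinarith
    exact le_of_mul_le_mul_left (by linarith [this]) hapos
  -- estimate ‖a - lam • z‖
  set w : X := ‖a‖⁻¹ • a with hwdef
  have hwx : ‖w - ‖x‖⁻¹ • x‖ ≤ 2 * M / ‖a‖ := by
    have hid : w - ‖x‖⁻¹ • x = ‖a‖⁻¹ • (a - x) + (‖a‖⁻¹ - ‖x‖⁻¹) • x := by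
      rw [hwdef]; module
    have h1 : ‖(‖a‖:ℝ)⁻¹ • (a - x)‖ ≤ M / ‖a‖ := by
      rw [norm_smul, Real.norm_eq_abs, abs_of_pos (inv_pos.mpr hapos)]
      have : ‖a - x‖ = ‖y‖ := by rw [hadef]; rw [show x - y - x = -y by abel, norm_neg]
      rw [this, div_eq_inv_mul]
      exact mul_le_mul_of_nonneg_left hyM (le_of_lt (inv_pos.mpr hapos))
    have hdiff : |‖x‖ - ‖a‖| ≤ M := by
      refine le_trans (abs_norm_sub_norm_le x a) ?_
      rw [show x - a = y by rw [hadef]; abel]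
      exact hyM
    have h2 : ‖((‖a‖:ℝ)⁻¹ - ‖x‖⁻¹) • x‖ ≤ M / ‖a‖ := by
      rw [norm_smul, Real.norm_eq_abs]
      have e : (‖a‖:ℝ)⁻¹ - ‖x‖⁻¹ = (‖x‖ - ‖a‖) / (‖a‖ * ‖x‖) := by
        field_simp
      have e2 : |(‖x‖ - ‖a‖) / (‖a‖ * ‖x‖)| * ‖x‖ = |‖x‖ - ‖a‖| / ‖a‖ := by
        rw [abs_div, abs_of_pos (mul_pos hapos hxpos)]
        field_simp
      rw [e, e2]
      gcongr
    calc ‖w - ‖x‖⁻¹ • x‖ ≤ ‖(‖a‖:ℝ)⁻¹ • (a - x)‖ + ‖((‖a‖:ℝ)⁻¹ - ‖x‖⁻¹) • x‖ := by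
          rw [hid]; exact norm_add_le _ _
      _ ≤ M / ‖a‖ + M / ‖a‖ := add_le_add h1 h2
      _ = 2 * M / ‖a‖ := by ring
  have hwz : ‖w - z‖ ≤ 1/2 := by
    have h1 : 2 * M / ‖a‖ ≤ 1/8 := by
      rw [div_le_iff₀ hapos]
      linarith [hnabig.2.1]
    calc ‖w - z‖ ≤ ‖w - ‖x‖⁻¹ • x‖ + ‖‖x‖⁻¹ • x - z‖ := norm_sub_le_norm_sub_add_norm_sub _ _ _
      _ ≤ 1/8 + 1/4 := add_le_add (le_trans hwx h1) (le_of_lt hzx)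
      _ ≤ 1/2 := by norm_num
  have hest : ‖a - lam • z‖ ≤ (‖a‖ - lam) + lam / 2 := by
    have h1 : ‖a - lam • w‖ = ‖a‖ - lam := by
      rw [hwdef, show a - lam • (‖a‖⁻¹ • a) = (1 - lam * ‖a‖⁻¹) • a by module,
        norm_smul, Real.norm_eq_abs]
      rw [abs_of_nonneg]
      · field_simp
      · have : lam * ‖a‖⁻¹ ≤ 1 := by
          rw [mul_inv_le_iff₀ hapos]; linarith [hnabig.1]
        linarith
    calc ‖a - lam • z‖ ≤ ‖a - lam • w‖ + ‖lam • w - lam • z‖ :=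
          norm_sub_le_norm_sub_add_norm_sub _ _ _
      _ = (‖a‖ - lam) + lam * ‖w - z‖ := by
          rw [h1, ← smul_sub, norm_smul, Real.norm_eq_abs, abs_of_pos (by linarith : (0:ℝ) < lam)]
      _ ≤ (‖a‖ - lam) + lam * (1/2) := by
          have : lam * ‖w - z‖ ≤ lam * (1/2) :=
            mul_le_mul_of_nonneg_left hwz (by linarith)
          linarith
      _ = (‖a‖ - lam) + lam / 2 := by ring
  -- contradiction
  have : lam / 2 ≤ ‖u‖ := by linarith [key, hest]
  linarith [hun, hlam, this]
end

section
/- Let X be a finite-dimensional real normed vector space and A : X ⇒ X an m-accretive set-valued map. If for every scalar α ≥ 0 the set S_α = {x ∈ X | inf_{u ∈ A(x)} ‖u‖ ≤ α} is bounded, then the range of A equals X. -/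
open NormedSpace ENNReal

/-- `A` is m-accretive: accretive and `range (I + λ A) = X` for some `λ > 0`. -/
def MAccretive {X : Type*} [NormedAddCommGroup X] [NormedSpace ℝ X]
    (A : X → Set X) : Prop :=
  Accretive A ∧ ∃ lam : ℝ, 0 < lam ∧ ∀ y : X, ∃ x u, u ∈ A x ∧ x + lam • u = y

lemma acc_nonexp {X : Type*} [NormedAddCommGroup X] [NormedSpace ℝ X]
    {A : X → Set X} (hA : Accretive A) {lam : ℝ} (hlam : 0 ≤ lam)
    {x x' u v : X} (hu : u ∈ A x) (hv : v ∈ A x') :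
    ‖x - x'‖ ≤ ‖(x + lam • u) - (x' + lam • v)‖ := by
  obtain ⟨f, hf, hf3⟩ := hA x x' u v hu hv
  have h1 : f (x - x') = ‖x - x'‖ ^ 2 := by rw [hf.2, hf.1]; ring
  have h2 : f ((x + lam • u) - (x' + lam • v)) = f (x - x') + lam * f (u - v) := by
    simp only [map_sub, map_add, map_smul, smul_eq_mul]; ring
  have h3 : f ((x + lam • u) - (x' + lam • v))
      ≤ ‖f‖ * ‖(x + lam • u) - (x' + lam • v)‖ := by
    calc f ((x + lam • u) - (x' + lam • v)) ≤ |f ((x + lam • u) - (x' + lam • v))| :=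
      le_abs_self _
    _ = ‖f ((x + lam • u) - (x' + lam • v))‖ := (Real.norm_eq_abs _).symm
    _ ≤ _ := f.le_opNorm _
  rw [hf.1] at h3
  rcases eq_or_lt_of_le (norm_nonneg (x - x')) with h | h
  · rw [← h]; exact norm_nonneg _
  · nlinarith [mul_nonneg hlam hf3]

lemma maccr_surj {X : Type*} [NormedAddCommGroup X] [NormedSpace ℝ X]
    [FiniteDimensional ℝ X] {A : X → Set X} (hA : MAccretive A) :
    ∃ lam : ℝ, 0 < lam ∧ ∀ mu : ℝ, lam ≤ mu → ∀ z : X, ∃ x u, u ∈ A x ∧ x + mu • u = z := by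
  obtain ⟨hacc, lam, hlam, hsurj⟩ := hA
  refine ⟨lam, hlam, fun mu hmu z => ?_⟩
  have hmu0 : 0 < mu := hlam.trans_le hmu
  choose Jx Ju hJmem hJeq using hsurj
  have hJnonexp : ∀ z1 z2 : X, ‖Jx z1 - Jx z2‖ ≤ ‖z1 - z2‖ := by
    intro z1 z2
    have h := acc_nonexp hacc hlam.le (hJmem z1) (hJmem z2)
    rwa [hJeq, hJeq] at h
  set t : ℝ := lam / mu with ht
  have ht0 : 0 < t := div_pos hlam hmu0
  have ht1 : t ≤ 1 := (div_le_one hmu0).2 hmu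
  set T : X → X := fun w => Jx (t • z + (1 - t) • w) with hT
  have hlip : LipschitzWith (1 - t).toNNReal T := by
    apply LipschitzWith.of_dist_le_mul
    intro w1 w2
    simp only [hT, dist_eq_norm]
    calc ‖Jx (t • z + (1 - t) • w1) - Jx (t • z + (1 - t) • w2)‖
        ≤ ‖(t • z + (1 - t) • w1) - (t • z + (1 - t) • w2)‖ := hJnonexp _ _
    _ = (1 - t) * ‖w1 - w2‖ := by
        rw [add_sub_add_left_eq_sub, ← smul_sub, norm_smul, Real.norm_eq_abs,
          abs_of_nonneg (by linarith)]
    _ = (1 - t).toNNReal * ‖w1 - w2‖ := by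
        rw [Real.coe_toNNReal _ (by linarith)]
  have hcontract : ContractingWith (1 - t).toNNReal T := by
    refine ⟨?_, hlip⟩
    rw [← Real.toNNReal_one]
    exact (Real.toNNReal_lt_toNNReal_iff (by norm_num)).2 (by linarith)
  have : Nonempty X := ⟨0⟩
  set x := hcontract.fixedPoint with hxdef
  have hx : T x = x := hcontract.fixedPoint_isFixedPt
  set zx := t • z + (1 - t) • x with hzx
  have hJxzx : Jx zx = x := hx
  refine ⟨x, Ju zx, by rw [← hJxzx]; exact hJmem zx, ?_⟩
  have heq : x + lam • Ju zx = t • z + (1 - t) • x := by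
    have h := hJeq zx
    rw [hJxzx] at h
    rwa [hzx] at h
  have hlu : lam • Ju zx = t • z + (1 - t) • x - x := eq_sub_of_add_eq' heq
  have key : mu • Ju zx = (mu / lam) • (lam • Ju zx) := by
    rw [smul_smul, div_mul_cancel₀ _ hlam.ne']
  rw [key, hlu]
  rw [smul_sub, smul_add, smul_smul, smul_smul, ht]
  have e1 : mu / lam * (lam / mu) = 1 := by field_simp
  have e2 : mu / lam * (1 - lam / mu) = mu / lam - 1 := by field_simp
  rw [e1, e2, one_smul, sub_smul, one_smul]
  abel

theorem stmt1 {X : Type*} [NormedAddCommGroup X] [NormedSpace ℝ X]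
    [FiniteDimensional ℝ X] (A : X → Set X) (hA : MAccretive A)
    (hbdd : ∀ α : ℝ, 0 ≤ α →
      Bornology.IsBounded
        {x : X | (⨅ u ∈ A x, (‖u‖₊ : ℝ≥0∞)) ≤ ENNReal.ofReal α}) :
    ⋃ x, A x = Set.univ := by
  obtain ⟨lam, hlam, hres⟩ := maccr_surj hA
  have hacc := hA.1
  rw [Set.eq_univ_iff_forall]
  intro y
  rw [Set.mem_iUnion]
  obtain ⟨x₀, u₀, hu₀, -⟩ := hres lam le_rfl 0
  have hmu : ∀ n : ℕ, lam ≤ lam + n := fun n => le_add_of_nonneg_right (Nat.cast_nonneg n)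
  have hmupos : ∀ n : ℕ, (0:ℝ) < lam + n := fun n => lt_of_lt_of_le hlam (hmu n)
  choose x u hmem heq using fun n : ℕ => hres (lam + n) (hmu n) ((lam + (n:ℝ)) • y)
  have hkey : ∀ n : ℕ, (lam + (n:ℝ)) • (u n - y) = -(x n) := by
    intro n
    rw [smul_sub, ← heq n]
    abel
  have hnorm : ∀ n : ℕ, ‖u n - y‖ = ‖x n‖ / (lam + n) := by
    intro n
    have h : ‖(lam + (n:ℝ)) • (u n - y)‖ = ‖x n‖ := by rw [hkey n, norm_neg]
    rw [norm_smul, Real.norm_eq_abs, abs_of_pos (hmupos n)] at h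
    field_simp [← h, (hmupos n).ne']
    linarith
  -- bound on ‖x n - x₀‖
  have hxb : ∀ n : ℕ, ‖x n - x₀‖ ≤ ‖x₀‖ + (lam + n) * (‖y‖ + ‖u₀‖) := by
    intro n
    obtain ⟨f, hfd, hf3⟩ := hacc (x n) x₀ (u n) u₀ (hmem n) hu₀
    have hd2 : f (x n - x₀) = ‖x n - x₀‖ ^ 2 := by rw [hfd.2, hfd.1]; ring
    have hbound : ∀ w : X, |f w| ≤ ‖x n - x₀‖ * ‖w‖ := by
      intro w
      have := f.le_opNorm w
      rwa [hfd.1, Real.norm_eq_abs] at this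
    have hf4 : (lam + (n:ℝ)) * f (u n - y) = -(f (x n)) := by
      rw [← smul_eq_mul, ← map_smul, hkey n, map_neg]
    have hsplit1 : f (u n - u₀) = f (u n - y) + f (y - u₀) := by
      rw [← map_add]; congr 1; abel
    have hsplit2 : f (x n) = f (x n - x₀) + f (x₀) := by
      rw [← map_add]; congr 1; abel
    have b1 := hbound (y - u₀)
    have b2 := hbound x₀
    have hyb : ‖y - u₀‖ ≤ ‖y‖ + ‖u₀‖ := norm_sub_le _ _
    rcases eq_or_lt_of_le (norm_nonneg (x n - x₀)) with h | h
    · rw [← h]; positivity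
    · have habs1 : f (y - u₀) ≤ ‖x n - x₀‖ * (‖y‖ + ‖u₀‖) := by
        calc f (y - u₀) ≤ |f (y - u₀)| := le_abs_self _
        _ ≤ ‖x n - x₀‖ * ‖y - u₀‖ := b1
        _ ≤ ‖x n - x₀‖ * (‖y‖ + ‖u₀‖) := by
            exact mul_le_mul_of_nonneg_left hyb (norm_nonneg _)
      have habs2 : -(f x₀) ≤ ‖x n - x₀‖ * ‖x₀‖ := by
        calc -(f x₀) ≤ |f x₀| := neg_le_abs _
        _ ≤ _ := b2
      -- f (x n) = ‖d‖² + f x₀ and f (x n) = -(μ) f(u n - y) ≤ μ f(y-u₀) ≤ μ‖d‖(‖y‖+‖u₀‖)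
      have h5 : ‖x n - x₀‖ ^ 2 + f x₀ = -((lam + (n:ℝ)) * f (u n - y)) := by
        rw [hf4, neg_neg, hsplit2, hd2]
      have h6 : -((lam + (n:ℝ)) * f (u n - y)) ≤ (lam + n) * f (y - u₀) := by
        have : 0 ≤ (lam + (n:ℝ)) * f (u n - u₀) := mul_nonneg (hmupos n).le hf3
        rw [hsplit1] at this
        nlinarith
      nlinarith [mul_le_mul_of_nonneg_left habs1 (hmupos n).le]
  set C : ℝ := 2 * ‖x₀‖ / lam + 2 * ‖y‖ + ‖u₀‖ with hC
  have hC0 : 0 ≤ C := by positivity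
  have hub : ∀ n : ℕ, ‖u n‖ ≤ C := by
    intro n
    have h1 : ‖u n‖ ≤ ‖u n - y‖ + ‖y‖ := by
      have := norm_le_norm_add_norm_sub' (u n) y; linarith
    have h2 : ‖x n‖ ≤ 2 * ‖x₀‖ + (lam + n) * (‖y‖ + ‖u₀‖) := by
      have := norm_le_norm_add_norm_sub' (x n) x₀
      have h := hxb n
      calc ‖x n‖ ≤ ‖x₀‖ + ‖x n - x₀‖ := by
            have := norm_sub_norm_le (x n) x₀; linarith
      _ ≤ 2 * ‖x₀‖ + (lam + n) * (‖y‖ + ‖u₀‖) := by linarith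
    have h3 : ‖u n - y‖ ≤ 2 * ‖x₀‖ / (lam + n) + (‖y‖ + ‖u₀‖) := by
      rw [hnorm n]
      rw [div_add' _ _ _ (hmupos n).ne', div_le_div_iff₀ (hmupos n) (hmupos n)]
      nlinarith [hmupos n]
    have h4 : 2 * ‖x₀‖ / (lam + n) ≤ 2 * ‖x₀‖ / lam := by
      apply div_le_div_of_nonneg_left (by positivity) hlam (hmu n)
    rw [hC]; linarith
  have hmemS : ∀ n : ℕ, x n ∈ {z : X | (⨅ v ∈ A z, (‖v‖₊ : ℝ≥0∞)) ≤ ENNReal.ofReal C} := by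
    intro n
    have h1 : (⨅ v ∈ A (x n), (‖v‖₊ : ℝ≥0∞)) ≤ (‖u n‖₊ : ℝ≥0∞) :=
      biInf_le _ (hmem n)
    refine h1.trans ?_
    rw [← ENNReal.ofReal_coe_nnreal, coe_nnnorm]
    exact ENNReal.ofReal_le_ofReal (hub n)
  obtain ⟨R, hR⟩ := (isBounded_iff_forall_norm_le).1 (hbdd C hC0)
  have hxR : ∀ n, ‖x n‖ ≤ R := fun n => hR _ (hmemS n)
  have hR0 : 0 ≤ R := le_trans (norm_nonneg (x 0)) (hxR 0)
  -- u n → y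
  have hdiv : Filter.Tendsto (fun n : ℕ => R / (lam + n)) Filter.atTop (nhds 0) := by
    apply Filter.Tendsto.div_atTop (tendsto_const_nhds)
    exact Filter.tendsto_atTop_add_const_left _ _ tendsto_natCast_atTop_atTop
  have hulim : Filter.Tendsto u Filter.atTop (nhds y) := by
    rw [tendsto_iff_norm_sub_tendsto_zero]
    refine squeeze_zero (fun n => norm_nonneg _) (fun n => ?_) hdiv
    rw [hnorm n]
    gcongr
    exact hxR n
  -- compactness: convergent subsequence of x
  have hxball : ∀ n : ℕ, x n ∈ Metric.closedBall (0:X) R := by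
    intro n
    rw [Metric.mem_closedBall, dist_zero_right]
    exact hxR n
  obtain ⟨xb, -, φ, hφ, hxφ⟩ := (isCompact_closedBall (0:X) R).tendsto_subseq hxball
  -- resolvent at xb + lam • y
  obtain ⟨w, v, hv, hwv⟩ := hres lam le_rfl (xb + lam • y)
  have huφ : Filter.Tendsto (u ∘ φ) Filter.atTop (nhds y) :=
    hulim.comp (hφ.tendsto_atTop)
  have hsum : Filter.Tendsto (fun k => (x (φ k) + lam • u (φ k)) - (xb + lam • y))
      Filter.atTop (nhds 0) := by
    have h1 : Filter.Tendsto (fun k => x (φ k) + lam • u (φ k)) Filter.atTop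
        (nhds (xb + lam • y)) := hxφ.add ((huφ.const_smul lam))
    simpa using h1.sub_const (xb + lam • y)
  have hxw : Filter.Tendsto (fun k => x (φ k)) Filter.atTop (nhds w) := by
    rw [tendsto_iff_norm_sub_tendsto_zero]
    refine squeeze_zero (fun k => norm_nonneg _) (fun k => ?_)
      (tendsto_zero_iff_norm_tendsto_zero.1 hsum)
    have h := acc_nonexp hacc hlam.le (hmem (φ k)) hv
    rwa [hwv] at h
  have hwxb : w = xb := tendsto_nhds_unique hxw hxφ
  have hvy : v = y := by
    rw [hwxb] at hwv
    exact smul_right_injective X hlam.ne' (add_left_cancel hwv)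
  exact ⟨w, hvy ▸ hv⟩
end

section
/- Let X be a finite-dimensional real normed vector space and A : X ⇒ X a coaccretive set-valued map (i.e., A⁻¹ is accretive). If x lies in the interior of the domain of A, then A is locally bounded at x: there exists a neighborhood V of x such that A(V) = ⋃_{y ∈ V} A(y) is bounded. -/
open NormedSpace

set_option maxHeartbeats 1000000 in
theorem stmt2 {X : Type*} [NormedAddCommGroup X] [NormedSpace ℝ X]
    [FiniteDimensional ℝ X] (A : X → Set X)
    (hA : Accretive (fun y => {x | y ∈ A x}))
    (x : X) (hx : x ∈ interior {z : X | (A z).Nonempty}) :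
    ∃ V ∈ nhds x, Bornology.IsBounded (⋃ y ∈ V, A y) := by
  by_contra hcon
  push_neg at hcon
  rw [mem_interior_iff_mem_nhds, Metric.mem_nhds_iff] at hx
  obtain ⟨r, hr, hball⟩ := hx
  have hV : Metric.ball x (r/4) ∈ nhds x := Metric.ball_mem_nhds x (by linarith)
  have hub := hcon _ hV
  rw [isBounded_iff_forall_norm_le] at hub
  push_neg at hub
  -- extract sequences u n ∈ A (p n), p n close to x, ‖u n‖ > n
  have hseq : ∀ n : ℕ, ∃ uu : X, ∃ pp : X,
      pp ∈ Metric.ball x (r/4) ∧ uu ∈ A pp ∧ (n : ℝ) < ‖uu‖ := by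
    intro n
    obtain ⟨y, hy, hny⟩ := hub n
    simp only [Set.mem_iUnion] at hy
    obtain ⟨pp, hpp, hyp⟩ := hy
    exact ⟨y, pp, hpp, hyp, hny⟩
  choose u p hp hu hnorm using hseq
  have hupos : ∀ n, 0 < ‖u n‖ := fun n =>
    lt_of_le_of_lt (Nat.cast_nonneg n) (hnorm n)
  -- subsequence 1 : p converges
  obtain ⟨xb, hxbmem, φ₁, hφ₁, hp₁⟩ :=
    (isCompact_closedBall x (r/4)).tendsto_subseq
      (fun n => Metric.ball_subset_closedBall (hp n))
  -- subsequence 2 : normalized u converges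
  set w : ℕ → X := fun n => ‖u (φ₁ n)‖⁻¹ • u (φ₁ n) with hw_def
  have hwmem : ∀ n, w n ∈ Metric.sphere (0 : X) 1 := by
    intro n
    simp [w, mem_sphere_iff_norm, norm_smul, norm_inv, norm_norm,
      inv_mul_cancel₀ (hupos (φ₁ n)).ne']
  obtain ⟨wb, hwbmem, φ₂, hφ₂, hw₂⟩ :=
    (isCompact_sphere (0 : X) 1).tendsto_subseq hwmem
  have hwb1 : ‖wb‖ = 1 := by simpa [mem_sphere_iff_norm] using hwbmem
  set ψ : ℕ → ℕ := φ₁ ∘ φ₂ with hψ_def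
  have hψmono : StrictMono ψ := hφ₁.comp hφ₂
  -- the point z
  set z : X := x + (r/2) • wb with hz_def
  have hznz : z ∈ Metric.ball x r := by
    rw [Metric.mem_ball, dist_eq_norm]
    have h1 : z - x = (r/2) • wb := by simp [z]
    rw [h1, norm_smul, hwb1]
    rw [Real.norm_eq_abs, abs_of_pos (by linarith : (0:ℝ) < r/2)]
    linarith
  obtain ⟨v, hv⟩ : (A z).Nonempty := hball hznz
  -- apply accretivity
  have hacc : ∀ n : ℕ, ∃ f ∈ dualitySet (u (ψ n) - v), 0 ≤ f (p (ψ n) - z) := by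
    intro n
    exact hA (u (ψ n)) v (p (ψ n)) z (hu (ψ n)) hv
  choose f hf hf0 using hacc
  -- normalized functionals
  set g : ℕ → StrongDual ℝ X := fun n => ‖u (ψ n) - v‖⁻¹ • f n with hg_def
  have hgmem : ∀ n, g n ∈ Metric.closedBall (0 : StrongDual ℝ X) 1 := by
    intro n
    rw [Metric.mem_closedBall, dist_zero_right]
    have h1 : ‖g n‖ = ‖u (ψ n) - v‖⁻¹ * ‖u (ψ n) - v‖ := by
      rw [hg_def]
      simp [norm_smul, (hf n).1, abs_of_nonneg (inv_nonneg.mpr (norm_nonneg _))]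
    rw [h1]
    rcases eq_or_ne (‖u (ψ n) - v‖) 0 with h | h
    · simp [h]
    · rw [inv_mul_cancel₀ h]
  obtain ⟨gb, hgbmem, φ₃, hφ₃, hg₃⟩ :=
    (isCompact_closedBall (0 : StrongDual ℝ X) 1).tendsto_subseq hgmem
  set θ : ℕ → ℕ := ψ ∘ φ₃ with hθ_def
  have hθmono : StrictMono θ := hψmono.comp hφ₃
  -- norms of u (θ n) go to infinity
  have hL1 : Filter.Tendsto (fun n => ‖u (θ n)‖) Filter.atTop Filter.atTop := by
    refine Filter.tendsto_atTop_mono (fun n => ?_) tendsto_natCast_atTop_atTop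
    calc (n : ℝ) ≤ (θ n : ℝ) := Nat.cast_le.mpr (hθmono.le_apply)
      _ ≤ ‖u (θ n)‖ := (hnorm (θ n)).le
  -- evaluation continuity helper
  have heval : Continuous fun q : (StrongDual ℝ X) × X => q.1 q.2 :=
    isBoundedBilinearMap_apply.continuous
  -- p (θ n) tends to xb
  have hpθ : Filter.Tendsto (fun n => p (θ n)) Filter.atTop (nhds xb) := by
    have h1 : (fun n => p (θ n)) = (p ∘ φ₁) ∘ (φ₂ ∘ φ₃) := rfl
    rw [h1]
    exact hp₁.comp (hφ₂.comp hφ₃).tendsto_atTop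
  -- w tends to wb along θ
  have hwθ : Filter.Tendsto (fun n => ‖u (θ n)‖⁻¹ • u (θ n)) Filter.atTop (nhds wb) := by
    have h1 : (fun n => ‖u (θ n)‖⁻¹ • u (θ n)) = (w ∘ φ₂) ∘ φ₃ := rfl
    rw [h1]
    exact hw₂.comp hφ₃.tendsto_atTop
  have hinv0 : Filter.Tendsto (fun n => ‖u (θ n)‖⁻¹) Filter.atTop (nhds 0) :=
    tendsto_inv_atTop_zero.comp hL1
  -- a n := ‖u θn‖⁻¹ • (u θn - v) tends to wb
  have haθ : Filter.Tendsto (fun n => ‖u (θ n)‖⁻¹ • (u (θ n) - v))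
      Filter.atTop (nhds wb) := by
    have h1 : ∀ n, ‖u (θ n)‖⁻¹ • (u (θ n) - v)
        = ‖u (θ n)‖⁻¹ • u (θ n) - ‖u (θ n)‖⁻¹ • v := fun n => smul_sub _ _ _
    simp only [h1]
    have h2 : Filter.Tendsto (fun n => ‖u (θ n)‖⁻¹ • v) Filter.atTop
        (nhds ((0:ℝ) • v)) := hinv0.smul_const v
    rw [zero_smul] at h2
    simpa using hwθ.sub h2
  -- g (φ₃ n) applied to a n equals ‖u θn - v‖ / ‖u θn‖
  have hgan : ∀ n, g (φ₃ n) (‖u (θ n)‖⁻¹ • (u (θ n) - v))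
      = ‖u (θ n) - v‖ / ‖u (θ n)‖ := by
    intro n
    have h1 : g (φ₃ n) (‖u (θ n)‖⁻¹ • (u (θ n) - v))
        = ‖u (θ n)‖⁻¹ * (‖u (ψ (φ₃ n)) - v‖⁻¹ * (f (φ₃ n)) (u (ψ (φ₃ n)) - v)) := by
      simp [g, map_smul, hθ_def, mul_comm]
    rw [h1, (hf (φ₃ n)).2, (hf (φ₃ n)).1]
    rcases eq_or_ne (‖u (ψ (φ₃ n)) - v‖) 0 with h | h
    · simp [hθ_def, h]
    · have : θ n = ψ (φ₃ n) := rfl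
      rw [this, inv_mul_cancel_left₀ h, inv_mul_eq_div]
  -- limit of ‖u θn - v‖ / ‖u θn‖ is 1
  have hvdiv : Filter.Tendsto (fun n => ‖v‖ / ‖u (θ n)‖) Filter.atTop (nhds 0) :=
    Filter.Tendsto.div_atTop tendsto_const_nhds hL1
  have hratio : Filter.Tendsto (fun n => ‖u (θ n) - v‖ / ‖u (θ n)‖)
      Filter.atTop (nhds 1) := by
    have hlow : Filter.Tendsto (fun n => 1 - ‖v‖ / ‖u (θ n)‖) Filter.atTop (nhds 1) := by
      simpa using (tendsto_const_nhds (α := ℕ) (f := Filter.atTop) (x := (1:ℝ))).sub hvdiv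
    have hhigh : Filter.Tendsto (fun n => 1 + ‖v‖ / ‖u (θ n)‖) Filter.atTop (nhds 1) := by
      simpa using (tendsto_const_nhds (α := ℕ) (f := Filter.atTop) (x := (1:ℝ))).add hvdiv
    apply tendsto_of_tendsto_of_tendsto_of_le_of_le hlow hhigh
    · intro n
      have hpos := hupos (θ n)
      have h1 : ‖u (θ n)‖ - ‖v‖ ≤ ‖u (θ n) - v‖ := norm_sub_norm_le _ _
      calc 1 - ‖v‖ / ‖u (θ n)‖ = (‖u (θ n)‖ - ‖v‖) / ‖u (θ n)‖ := by
            rw [sub_div, div_self hpos.ne']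
        _ ≤ ‖u (θ n) - v‖ / ‖u (θ n)‖ := by gcongr
    · intro n
      have hpos := hupos (θ n)
      have h1 : ‖u (θ n) - v‖ ≤ ‖u (θ n)‖ + ‖v‖ := norm_sub_le _ _
      calc ‖u (θ n) - v‖ / ‖u (θ n)‖ ≤ (‖u (θ n)‖ + ‖v‖) / ‖u (θ n)‖ := by gcongr
        _ = 1 + ‖v‖ / ‖u (θ n)‖ := by rw [add_div, div_self hpos.ne']
  -- gb wb = 1
  have hgw : gb wb = 1 := by
    have hT : Filter.Tendsto (fun n => g (φ₃ n) (‖u (θ n)‖⁻¹ • (u (θ n) - v)))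
        Filter.atTop (nhds (gb wb)) := by
      have := heval.tendsto (gb, wb)
      exact this.comp ((hg₃.prodMk_nhds haθ))
    simp only [hgan] at hT
    exact tendsto_nhds_unique hT hratio
  -- 0 ≤ gb (xb - z)
  have hge : 0 ≤ gb (xb - z) := by
    have hT : Filter.Tendsto (fun n => g (φ₃ n) (p (θ n) - z))
        Filter.atTop (nhds (gb (xb - z))) := by
      have := heval.tendsto (gb, xb - z)
      exact this.comp (hg₃.prodMk_nhds (hpθ.sub tendsto_const_nhds))
    refine ge_of_tendsto hT (Filter.Eventually.of_forall fun n => ?_)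
    have h1 : g (φ₃ n) (p (θ n) - z)
        = ‖u (ψ (φ₃ n)) - v‖⁻¹ * (f (φ₃ n)) (p (ψ (φ₃ n)) - z) := by
      simp [g, hθ_def]
    rw [h1]
    exact mul_nonneg (inv_nonneg.mpr (norm_nonneg _)) (hf0 (φ₃ n))
  -- final contradiction
  have hgbnorm : ‖gb‖ ≤ 1 := by
    simpa [dist_zero_right] using Metric.mem_closedBall.mp hgbmem
  have hxbnorm : ‖xb - x‖ ≤ r/4 := by
    simpa [dist_eq_norm] using Metric.mem_closedBall.mp hxbmem
  have hkey : gb (xb - z) = gb (xb - x) - (r/2) * gb wb := by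
    have h1 : xb - z = (xb - x) - (r/2) • wb := by
      rw [hz_def]; abel
    rw [h1, map_sub, map_smul]
    simp
  have hbound : gb (xb - x) ≤ r/4 := by
    calc gb (xb - x) ≤ |gb (xb - x)| := le_abs_self _
      _ = ‖gb (xb - x)‖ := (Real.norm_eq_abs _).symm
      _ ≤ ‖gb‖ * ‖xb - x‖ := gb.le_opNorm _
      _ ≤ 1 * (r/4) := by
          apply mul_le_mul hgbnorm hxbnorm (norm_nonneg _) zero_le_one
      _ = r/4 := one_mul _
  rw [hkey, hgw] at hge
  linarith
end

section
/- Let X be a finite-dimensional real normed vector space and T : X → X nonexpansive. Then the following are equivalent: (i) for every vector g ∈ X, the map x ↦ g + T(x) has at least one fixed point; (ii) for every scalar α ≥ 0, the set S_α = {x ∈ X | ‖x − T(x)‖ ≤ α} is bounded. -/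
open Metric Bornology Filter

theorem stmt4 {X : Type*} [NormedAddCommGroup X] [NormedSpace ℝ X]
    [FiniteDimensional ℝ X] (T : X → X)
    (hT : ∀ x y, ‖T x - T y‖ ≤ ‖x - y‖) :
    (∀ g : X, ∃ x : X, x = g + T x) ↔
    (∀ α : ℝ, 0 ≤ α → Bornology.IsBounded {x : X | ‖x - T x‖ ≤ α}) := by
  constructor
  · -- fixed points ⟹ bounded sublevel sets
    intro hfix α hα
    by_contra hb
    rw [isBounded_iff_forall_norm_le] at hb
    push_neg at hb
    choose x hx1 hx2 using fun n : ℕ => hb n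
    -- accretivity inequality
    have hacc : ∀ p q : X, ∀ t : ℝ, 0 ≤ t →
        ‖p - q‖ ≤ ‖(p - q) + t • ((p - T p) - (q - T q))‖ := by
      intro p q t ht
      have h1 : (p - q) + t • ((p - T p) - (q - T q))
          = (1 + t) • (p - q) - t • (T p - T q) := by module
      rw [h1]
      have h2 := norm_sub_norm_le ((1 + t) • (p - q)) (t • (T p - T q))
      rw [norm_smul, norm_smul, Real.norm_eq_abs, Real.norm_eq_abs,
        abs_of_nonneg (by linarith : (0:ℝ) ≤ 1 + t), abs_of_nonneg ht] at h2
      nlinarith [hT p q, norm_nonneg (p - q)]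
    have hxpos : ∀ n : ℕ, 0 < ‖x n‖ :=
      fun n => lt_of_le_of_lt (Nat.cast_nonneg n) (hx2 n)
    set u : ℕ → X × X := fun n => (‖x n‖⁻¹ • x n, x n - T (x n)) with hu
    have hs : IsCompact (sphere (0:X) 1 ×ˢ closedBall (0:X) α) :=
      (isCompact_sphere 0 1).prod (isCompact_closedBall 0 α)
    have hmem : ∀ n, u n ∈ sphere (0:X) 1 ×ˢ closedBall (0:X) α := by
      intro n
      constructor
      · rw [mem_sphere_zero_iff_norm]
        simp only [hu]
        rw [norm_smul, norm_inv, norm_norm, inv_mul_cancel₀ (ne_of_gt (hxpos n))]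
      · simpa [hu, mem_closedBall_zero_iff] using hx1 n
    obtain ⟨⟨v, h⟩, hvh, φ, hφ, hconv⟩ := hs.tendsto_subseq hmem
    have hv : ‖v‖ = 1 := mem_sphere_zero_iff_norm.mp hvh.1
    obtain ⟨z, hz⟩ := hfix (h + v)
    have hzz : z - T z = h + v := by nth_rewrite 1 [hz]; abel
    -- componentwise convergence
    have h1 : Tendsto (fun n => ‖x (φ n)‖⁻¹ • x (φ n)) atTop (nhds v) :=
      (continuous_fst.tendsto (v, h)).comp hconv
    have h2 : Tendsto (fun n => x (φ n) - T (x (φ n))) atTop (nhds h) :=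
      (continuous_snd.tendsto (v, h)).comp hconv
    have E1 : ∀ᶠ n in atTop, dist (‖x (φ n)‖⁻¹ • x (φ n)) v < 1/6 :=
      h1 (Metric.ball_mem_nhds v (by norm_num))
    have E2 : ∀ᶠ n in atTop, dist (x (φ n) - T (x (φ n))) h < 1/6 :=
      h2 (Metric.ball_mem_nhds h (by norm_num))
    obtain ⟨N, hN⟩ := exists_nat_gt (8 * ‖z‖ + 1)
    have E3 : ∀ᶠ n : ℕ in atTop, (8 * ‖z‖ + 1 : ℝ) < (n : ℝ) := by
      rw [eventually_atTop]
      exact ⟨N, fun n hn => lt_of_lt_of_le hN (Nat.cast_le.mpr hn)⟩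
    obtain ⟨n, he1, he2, he3⟩ := (E1.and (E2.and E3)).exists
    set m := φ n with hm
    set s := ‖x m‖ with hs'
    have hs0 : s ≠ 0 := ne_of_gt (hxpos m)
    have hsbig : 8 * ‖z‖ + 1 < s := by
      calc (8 * ‖z‖ + 1 : ℝ) < (n : ℝ) := he3
        _ ≤ (m : ℝ) := Nat.cast_le.mpr hφ.le_apply
        _ < s := hx2 m
    obtain ⟨e, hxm, hen⟩ : ∃ e : X, x m = s • v + s • e ∧ ‖e‖ < 1/6 := by
      refine ⟨s⁻¹ • x m - v, ?_, ?_⟩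
      · rw [smul_sub, smul_inv_smul₀ hs0]; abel
      · rw [← dist_eq_norm]; simpa using he1
    obtain ⟨f, hAxm, hfn⟩ : ∃ f : X, x m - T (x m) = h + f ∧ ‖f‖ < 1/6 := by
      refine ⟨x m - T (x m) - h, by abel, ?_⟩
      rw [← dist_eq_norm]; simpa using he2
    have key := hacc (x m) z (s / 2) (by positivity)
    have id1 : (x m - z) + (s / 2) • ((x m - T (x m)) - (z - T z))
        = (s / 2) • v + (s • e + ((s / 2) • f - z)) := by
      rw [hAxm, hzz]
      nth_rewrite 1 [hxm]
      module
    rw [id1] at key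
    have lower : s - ‖z‖ ≤ ‖x m - z‖ := by
      simpa using norm_sub_norm_le (x m) z
    have upper : ‖(s / 2) • v + (s • e + ((s / 2) • f - z))‖
        ≤ s / 2 + (s * ‖e‖ + (s / 2 * ‖f‖ + ‖z‖)) := by
      calc ‖(s / 2) • v + (s • e + ((s / 2) • f - z))‖
          ≤ ‖(s / 2) • v‖ + ‖s • e + ((s / 2) • f - z)‖ := norm_add_le _ _
        _ ≤ ‖(s / 2) • v‖ + (‖s • e‖ + ‖(s / 2) • f - z‖) := by
            gcongr; exact norm_add_le _ _
        _ ≤ ‖(s / 2) • v‖ + (‖s • e‖ + (‖(s / 2) • f‖ + ‖z‖)) := by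
            gcongr; exact norm_sub_le _ _
        _ = s / 2 + (s * ‖e‖ + (s / 2 * ‖f‖ + ‖z‖)) := by
            rw [norm_smul, norm_smul, norm_smul, Real.norm_eq_abs,
              abs_of_nonneg (by positivity : (0:ℝ) ≤ s / 2), Real.norm_eq_abs,
              abs_of_nonneg (by positivity : (0:ℝ) ≤ s), hv, mul_one]
    have hz0 : 0 ≤ ‖z‖ := norm_nonneg z
    have hs0' : (0:ℝ) < s := hxpos m
    nlinarith [le_trans lower (le_trans key upper)]
  · -- bounded sublevel sets ⟹ fixed points
    intro hb g
    haveI : Nonempty X := ⟨0⟩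
    have hTc : Continuous T := by
      have : LipschitzWith 1 T := LipschitzWith.of_dist_le_mul fun x y => by
        rw [dist_eq_norm, dist_eq_norm]; simpa using hT x y
      exact this.continuous
    set C0 := ‖g + T 0‖ with hC0
    obtain ⟨M, hM⟩ := isBounded_iff_forall_norm_le.mp (hb (C0 + ‖g‖) (by positivity))
    -- approximate fixed points
    have hy : ∀ n : ℕ, ∃ y : X, y = ((n + 1 : ℝ) / (n + 2)) • (g + T y) := by
      intro n
      set c : ℝ := (n + 1) / (n + 2) with hc
      have hc0 : 0 ≤ c := by positivity
      have hc1 : c < 1 := by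
        rw [hc, div_lt_one (by positivity)]; linarith
      have hlip : LipschitzWith c.toNNReal (fun x => c • (g + T x)) := by
        apply LipschitzWith.of_dist_le_mul
        intro p q
        rw [dist_eq_norm, dist_eq_norm]
        have : c • (g + T p) - c • (g + T q) = c • (T p - T q) := by module
        rw [this, norm_smul, Real.norm_eq_abs, abs_of_nonneg hc0,
          Real.coe_toNNReal c hc0]
        exact mul_le_mul_of_nonneg_left (hT p q) hc0
      have hcontr : ContractingWith c.toNNReal (fun x => c • (g + T x)) :=
        ⟨Real.toNNReal_lt_one.mpr hc1, hlip⟩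
      exact ⟨hcontr.fixedPoint _, (hcontr.fixedPoint_isFixedPt).symm⟩
    choose y hy using hy
    -- bounds
    have hw : ∀ n : ℕ, ‖g + T (y n)‖ ≤ C0 + ‖y n‖ := by
      intro n
      calc ‖g + T (y n)‖ = ‖(g + T 0) + (T (y n) - T 0)‖ := by congr 1; abel
        _ ≤ ‖g + T 0‖ + ‖T (y n) - T 0‖ := norm_add_le _ _
        _ ≤ C0 + ‖y n‖ := by
            have := hT (y n) 0
            simp only [sub_zero] at this
            linarith
    have hdisp : ∀ n : ℕ, ‖y n - (g + T (y n))‖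
        = (1 / (n + 2 : ℝ)) * ‖g + T (y n)‖ := by
      intro n
      have hid : y n - (g + T (y n)) = (((n + 1 : ℝ) / (n + 2)) - 1) • (g + T (y n)) := by
        nth_rewrite 1 [hy n]; module
      have hcoef : ((n + 1 : ℝ) / (n + 2)) - 1 = -(1 / (n + 2)) := by
        field_simp
        norm_num
      rw [hid, hcoef, norm_smul, Real.norm_eq_abs, abs_neg,
        abs_of_nonneg (by positivity : (0:ℝ) ≤ 1 / (n + 2))]
    have hynorm : ∀ n : ℕ, ‖y n‖ = ((n + 1 : ℝ) / (n + 2)) * ‖g + T (y n)‖ := by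
      intro n
      conv_lhs => rw [hy n]
      rw [norm_smul, Real.norm_eq_abs, abs_of_nonneg (by positivity : (0:ℝ) ≤ (n + 1) / (n + 2))]
    have hdC0 : ∀ n : ℕ, ‖y n - (g + T (y n))‖ ≤ C0 := by
      intro n
      rw [hdisp n]
      have h1 := hw n
      have h2 := hynorm n
      have h3 : (0:ℝ) < (n:ℝ) + 2 := by positivity
      have key : ((n + 1 : ℝ) / (n + 2)) * ‖g + T (y n)‖
          + (1 / ((n:ℝ) + 2)) * ‖g + T (y n)‖ = ‖g + T (y n)‖ := by
        field_simp; ring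
      linarith
    have hymem : ∀ n : ℕ, ‖y n‖ ≤ M := by
      intro n
      apply hM
      show ‖y n - T (y n)‖ ≤ C0 + ‖g‖
      calc ‖y n - T (y n)‖ = ‖(y n - (g + T (y n))) + g‖ := by congr 1; abel
        _ ≤ ‖y n - (g + T (y n))‖ + ‖g‖ := norm_add_le _ _
        _ ≤ C0 + ‖g‖ := by linarith [hdC0 n]
    have hdsmall : ∀ n : ℕ, ‖y n - (g + T (y n))‖ ≤ (C0 + M) / (n + 2) := by
      intro n
      rw [hdisp n]
      have h1 : ‖g + T (y n)‖ ≤ C0 + M := le_trans (hw n) (by linarith [hymem n])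
      rw [div_mul_eq_mul_div, one_mul]
      apply div_le_div_of_nonneg_right h1 ?_ |>.trans_eq rfl
      · positivity
    -- minimize the displacement on the compact ball
    have hM0 : 0 ≤ M := le_trans (norm_nonneg (y 0)) (hymem 0)
    have hcf : Continuous fun x : X => ‖x - (g + T x)‖ :=
      (continuous_id.sub (continuous_const.add hTc)).norm
    obtain ⟨x₀, _, hmin⟩ := (isCompact_closedBall (0:X) M).exists_isMinOn
      ⟨0, mem_closedBall_self hM0⟩ hcf.continuousOn
    have h0 : ‖x₀ - (g + T x₀)‖ ≤ 0 := by
      by_contra hpos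
      push_neg at hpos
      obtain ⟨n, hn⟩ := exists_nat_gt ((C0 + M) / ‖x₀ - (g + T x₀)‖)
      have hle : ‖x₀ - (g + T x₀)‖ ≤ (C0 + M) / (n + 2) :=
        le_trans (hmin (mem_closedBall_zero_iff.mpr (hymem n))) (hdsmall n)
      rw [div_lt_iff₀ hpos] at hn
      rw [le_div_iff₀ (by positivity : (0:ℝ) < (n:ℝ) + 2)] at hle
      nlinarith
    exact ⟨x₀, by
      have := le_antisymm h0 (norm_nonneg _)
      rw [norm_eq_zero, sub_eq_zero] at this
      exact this⟩
end

section
/- Let X be a finite-dimensional real normed vector space and T : X → X nonexpansive such that the set {x | ‖x − T(x)‖ ≤ α} is bounded for every α ≥ 0. Define the set-valued map FP : X ⇒ X by FP(g) = {x | x − T(x) = g}. Then FP has nonempty compact values and is upper semicontinuous. -/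
open Filter Topology

section Aux
variable {X : Type*} [NormedAddCommGroup X] [NormedSpace ℝ X] [FiniteDimensional ℝ X]

/-- Subsequence extraction from a sequence with bounded displacement. -/
lemma aux_subseq (T : X → X)
    (hbdd : ∀ α : ℝ, 0 ≤ α → Bornology.IsBounded {x : X | ‖x - T x‖ ≤ α})
    (α : ℝ) (hα : 0 ≤ α) (xs : ℕ → X) (h : ∀ n, ‖xs n - T (xs n)‖ ≤ α) :
    ∃ x, ∃ φ : ℕ → ℕ, StrictMono φ ∧ Tendsto (xs ∘ φ) atTop (𝓝 x) := by
  have hc : IsCompact (closure {x : X | ‖x - T x‖ ≤ α}) := (hbdd α hα).isCompact_closure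
  obtain ⟨x, -, φ, hφ, hlim⟩ := hc.tendsto_subseq (fun n => subset_closure (h n))
  exact ⟨x, φ, hφ, hlim⟩

/-- Banach fixed point for the contraction `x ↦ t • T x + g`. -/
lemma aux_fixed (T : X → X) (hT : ∀ x y, ‖T x - T y‖ ≤ ‖x - y‖) (g : X)
    (t : ℝ) (ht0 : 0 ≤ t) (ht1 : t < 1) : ∃ x : X, x = t • T x + g := by
  haveI : Nonempty X := ⟨0⟩
  set F : X → X := fun x => t • T x + g with hF
  have hlip : LipschitzWith t.toNNReal F := by
    apply LipschitzWith.of_dist_le_mul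
    intro x y
    simp only [hF, dist_eq_norm]
    have h1 : t • T x + g - (t • T y + g) = t • (T x - T y) := by module
    rw [h1, norm_smul, Real.norm_eq_abs, abs_of_nonneg ht0, Real.coe_toNNReal _ ht0]
    exact mul_le_mul_of_nonneg_left (hT x y) ht0
  have hcon : ContractingWith t.toNNReal F := ⟨Real.toNNReal_lt_one.2 ht1, hlip⟩
  exact ⟨hcon.fixedPoint F, (hcon.fixedPoint_isFixedPt).symm⟩

end Aux

/-- A set-valued map `F` is upper semicontinuous at `g`. -/
def UpperSemicontinuousAtSV {X Y : Type*} [TopologicalSpace X] [TopologicalSpace Y]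
    (F : X → Set Y) (g : X) : Prop :=
  ∀ U : Set Y, IsOpen U → F g ⊆ U → ∃ W ∈ nhds g, ∀ g' ∈ W, F g' ⊆ U

theorem stmt5 {X : Type*} [NormedAddCommGroup X] [NormedSpace ℝ X]
    [FiniteDimensional ℝ X] (T : X → X)
    (hT : ∀ x y, ‖T x - T y‖ ≤ ‖x - y‖)
    (hbdd : ∀ α : ℝ, 0 ≤ α → Bornology.IsBounded {x : X | ‖x - T x‖ ≤ α}) :
    (∀ g : X, {x : X | x - T x = g}.Nonempty ∧ IsCompact {x : X | x - T x = g}) ∧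
    (∀ g : X, UpperSemicontinuousAtSV (fun g : X => {x : X | x - T x = g}) g) := by
  have hTc : Continuous T := by
    apply (LipschitzWith.of_dist_le_mul (K := 1) ?_).continuous
    intro x y
    simp only [dist_eq_norm, NNReal.coe_one, one_mul]
    exact hT x y
  have hfc : Continuous (fun x : X => x - T x) := continuous_id.sub hTc
  have bT : ∀ x : X, ‖T x‖ ≤ ‖x‖ + ‖T 0‖ := by
    intro x
    calc ‖T x‖ = ‖(T x - T 0) + T 0‖ := by congr 1; abel
    _ ≤ ‖T x - T 0‖ + ‖T 0‖ := norm_add_le _ _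
    _ ≤ ‖x - 0‖ + ‖T 0‖ := by linarith [hT x 0]
    _ = ‖x‖ + ‖T 0‖ := by rw [sub_zero]
  -- surjectivity of x ↦ x - T x
  have hsurj : ∀ g : X, ∃ x : X, x - T x = g := by
    intro g
    set t : ℕ → ℝ := fun n => 1 - 1 / (n + 1) with htdef
    have hinv0 : ∀ n : ℕ, (0:ℝ) < 1 / (n + 1) := by intro n; positivity
    have hinv1 : ∀ n : ℕ, (1:ℝ) / (n + 1) ≤ 1 := by
      intro n
      rw [div_le_one (by positivity)]; linarith [Nat.cast_nonneg (α := ℝ) n]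
    have ht0 : ∀ n : ℕ, 0 ≤ t n := fun n => by
      have := hinv1 n; simp only [htdef]; linarith
    have ht1 : ∀ n : ℕ, t n < 1 := fun n => by
      have := hinv0 n; simp only [htdef]; linarith
    choose xs hxs using fun n => aux_fixed T hT g (t n) (ht0 n) (ht1 n)
    have hkey : ∀ n, xs n - T (xs n) = g - (1 - t n) • T (xs n) := by
      intro n
      have h := hxs n
      generalize T (xs n) = y at h ⊢
      generalize t n = c at h ⊢
      rw [h]
      module
    -- a priori bound
    have hnorm : ∀ n, (1 - t n) * ‖xs n‖ ≤ ‖T 0‖ + ‖g‖ := by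
      intro n
      have h1 : ‖xs n‖ ≤ t n * ‖T (xs n)‖ + ‖g‖ := by
        calc ‖xs n‖ = ‖t n • T (xs n) + g‖ := by rw [← hxs n]
        _ ≤ ‖t n • T (xs n)‖ + ‖g‖ := norm_add_le _ _
        _ = t n * ‖T (xs n)‖ + ‖g‖ := by
            rw [norm_smul, Real.norm_eq_abs, abs_of_nonneg (ht0 n)]
      have h2 : t n * ‖T (xs n)‖ ≤ t n * (‖xs n‖ + ‖T 0‖) :=
        mul_le_mul_of_nonneg_left (bT (xs n)) (ht0 n)
      have h3 : t n * ‖T 0‖ ≤ 1 * ‖T 0‖ :=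
        mul_le_mul_of_nonneg_right (le_of_lt (ht1 n)) (norm_nonneg _)
      nlinarith [norm_nonneg (xs n)]
    have hbound : ∀ n, ‖xs n - T (xs n)‖ ≤ 2 * ‖g‖ + 2 * ‖T 0‖ := by
      intro n
      have hs0 : 0 ≤ 1 - t n := by linarith [ht1 n]
      have hs1 : 1 - t n ≤ 1 := by linarith [ht0 n]
      calc ‖xs n - T (xs n)‖ = ‖g - (1 - t n) • T (xs n)‖ := by rw [hkey n]
      _ ≤ ‖g‖ + ‖(1 - t n) • T (xs n)‖ := norm_sub_le _ _
      _ = ‖g‖ + (1 - t n) * ‖T (xs n)‖ := by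
          rw [norm_smul, Real.norm_eq_abs, abs_of_nonneg hs0]
      _ ≤ 2 * ‖g‖ + 2 * ‖T 0‖ := by
          have h2 : (1 - t n) * ‖T (xs n)‖ ≤ (1 - t n) * (‖xs n‖ + ‖T 0‖) :=
            mul_le_mul_of_nonneg_left (bT (xs n)) hs0
          have h3 : (1 - t n) * ‖T 0‖ ≤ 1 * ‖T 0‖ :=
            mul_le_mul_of_nonneg_right hs1 (norm_nonneg _)
          nlinarith [hnorm n]
    obtain ⟨x, φ, hφ, hlim⟩ := aux_subseq T hbdd (2 * ‖g‖ + 2 * ‖T 0‖) (by positivity)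
      xs hbound
    refine ⟨x, ?_⟩
    have h1 : Tendsto (fun n => xs (φ n) - T (xs (φ n))) atTop (𝓝 (x - T x)) :=
      (hfc.tendsto x).comp hlim
    have hstendsto : Tendsto (fun n => 1 - t (φ n)) atTop (𝓝 0) := by
      have : (fun n => 1 - t (φ n)) = (fun n : ℕ => 1 / ((n:ℝ) + 1)) ∘ φ := by
        funext n; simp [htdef]
      rw [this]
      exact tendsto_one_div_add_atTop_nhds_zero_nat.comp hφ.tendsto_atTop
    have hTtendsto : Tendsto (fun n => T (xs (φ n))) atTop (𝓝 (T x)) :=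
      (hTc.tendsto x).comp hlim
    have h2 : Tendsto (fun n => xs (φ n) - T (xs (φ n))) atTop (𝓝 g) := by
      have h3 : Tendsto (fun n => g - (1 - t (φ n)) • T (xs (φ n))) atTop
          (𝓝 (g - (0:ℝ) • T x)) := tendsto_const_nhds.sub (hstendsto.smul hTtendsto)
      rw [zero_smul, sub_zero] at h3
      convert h3 using 1
      funext n
      exact hkey (φ n)
    exact tendsto_nhds_unique h1 h2
  constructor
  · -- nonempty and compact values
    intro g
    refine ⟨hsurj g, ?_⟩
    rw [Metric.isCompact_iff_isClosed_bounded]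
    constructor
    · have : {x : X | x - T x = g} = (fun x : X => x - T x) ⁻¹' {g} := rfl
      rw [this]
      exact isClosed_singleton.preimage hfc
    · apply (hbdd ‖g‖ (norm_nonneg g)).subset
      intro x hx
      simp only [Set.mem_setOf_eq] at hx ⊢
      rw [hx]
  · -- upper semicontinuity
    intro g U hU hsub
    by_contra hcon
    push_neg at hcon
    have H : ∀ n : ℕ, ∃ g' : X, dist g' g < 1 / (n + 1) ∧ ∃ x, x - T x = g' ∧ x ∉ U := by
      intro n
      obtain ⟨g', hg', hns⟩ := hcon (Metric.ball g (1 / (n + 1)))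
        (Metric.ball_mem_nhds g (by positivity))
      rw [Set.not_subset] at hns
      obtain ⟨x, hx1, hx2⟩ := hns
      exact ⟨g', Metric.mem_ball.1 hg', x, hx1, hx2⟩
    choose gs hd xs hfx hxU using H
    have hgs : Tendsto gs atTop (𝓝 g) := by
      rw [tendsto_iff_dist_tendsto_zero]
      apply squeeze_zero (fun n => dist_nonneg) (fun n => (hd n).le)
        tendsto_one_div_add_atTop_nhds_zero_nat
    have hbound : ∀ n, ‖xs n - T (xs n)‖ ≤ ‖g‖ + 1 := by
      intro n
      have h1 : ‖gs n‖ ≤ ‖gs n - g‖ + ‖g‖ := by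
        calc ‖gs n‖ = ‖(gs n - g) + g‖ := by congr 1; abel
        _ ≤ ‖gs n - g‖ + ‖g‖ := norm_add_le _ _
      have h2 : ‖gs n - g‖ < 1 / (n + 1) := by rw [← dist_eq_norm]; exact hd n
      have h3 : (1:ℝ) / (n + 1) ≤ 1 := by
        rw [div_le_one (by positivity)]; linarith [Nat.cast_nonneg (α := ℝ) n]
      rw [hfx n]
      linarith
    obtain ⟨x, φ, hφ, hlim⟩ := aux_subseq T hbdd (‖g‖ + 1)
      (by positivity) xs hbound
    have hxnotU : x ∉ U := by
      have hclosed : IsClosed Uᶜ := hU.isClosed_compl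
      exact hclosed.mem_of_tendsto hlim (Eventually.of_forall (fun n => hxU (φ n)))
    have h1 : Tendsto (fun n => xs (φ n) - T (xs (φ n))) atTop (𝓝 (x - T x)) :=
      (hfc.tendsto x).comp hlim
    have h2 : Tendsto (fun n => xs (φ n) - T (xs (φ n))) atTop (𝓝 g) := by
      have : (fun n => xs (φ n) - T (xs (φ n))) = gs ∘ φ := by
        funext n; exact hfx (φ n)
      rw [this]
      exact hgs.comp hφ.tendsto_atTop
    have hxg : x - T x = g := tendsto_nhds_unique h1 h2
    exact hxnotU (hsub hxg)
end

section
/- Let X be a finite-dimensional real normed vector space and T : X → X nonexpansive such that {x | ‖x − T(x)‖ ≤ α} is bounded for every α ≥ 0, and let FP(g) = {x | x − T(x) = g}. Then FP is continuous (both upper and lower semicontinuous) at a point g ∈ X if and only if FP(g) is a singleton. -/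
def LowerSemicontinuousAtSV {X Y : Type*} [TopologicalSpace X] [TopologicalSpace Y]
    (F : X → Set Y) (g : X) : Prop :=
  ∀ U : Set Y, IsOpen U → (F g ∩ U).Nonempty → ∃ W ∈ nhds g, ∀ g' ∈ W, (F g' ∩ U).Nonempty

open Bornology Filter

section aux
variable {X : Type*} [NormedAddCommGroup X] [NormedSpace ℝ X] [FiniteDimensional ℝ X]

omit [NormedSpace ℝ X] [FiniteDimensional ℝ X] in
lemma cont_of_nonexp (T : X → X) (hT : ∀ x y, ‖T x - T y‖ ≤ ‖x - y‖) : Continuous T := by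
  have h : LipschitzWith 1 T := by
    apply LipschitzWith.of_dist_le_mul
    intro x y
    rw [NNReal.coe_one, one_mul, dist_eq_norm, dist_eq_norm]
    exact hT x y
  exact h.continuous

lemma exists_sol (T : X → X) (hT : ∀ x y, ‖T x - T y‖ ≤ ‖x - y‖)
    (hbdd : ∀ α : ℝ, 0 ≤ α → Bornology.IsBounded {x : X | ‖x - T x‖ ≤ α})
    (g : X) : ∃ x : X, x - T x = g := by
  classical
  set S : X → X := fun x => T x + g with hSdef
  have hSapp : ∀ x, S x = T x + g := fun x => rfl
  have hS : ∀ x y, ‖S x - S y‖ ≤ ‖x - y‖ := by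
    intro x y; simpa [hSapp] using hT x y
  set xs : ℕ → X := fun n => S^[n] 0 with hxs
  have hxs_succ : ∀ n, xs (n + 1) = S (xs n) := by
    intro n; simp [hxs, Function.iterate_succ_apply']
  have hdisp : ∀ n, ‖xs n - S (xs n)‖ ≤ ‖(0 : X) - S 0‖ := by
    intro n; induction n with
    | zero => simp [hxs]
    | succ n ih =>
      calc ‖xs (n+1) - S (xs (n+1))‖ = ‖S (xs n) - S (xs (n+1))‖ := by rw [hxs_succ]
        _ ≤ ‖xs n - xs (n+1)‖ := hS _ _
        _ = ‖xs n - S (xs n)‖ := by rw [hxs_succ]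
        _ ≤ _ := ih
  set α : ℝ := ‖(0 : X) - S 0‖ + ‖g‖ with hα
  have hmem : ∀ n, xs n ∈ {x : X | ‖x - T x‖ ≤ α} := by
    intro n
    have h1 : xs n - T (xs n) = (xs n - S (xs n)) + g := by rw [hSapp]; abel
    simp only [Set.mem_setOf_eq, h1]
    calc ‖(xs n - S (xs n)) + g‖ ≤ ‖xs n - S (xs n)‖ + ‖g‖ := norm_add_le _ _
      _ ≤ α := by have := hdisp n; rw [hα]; linarith
  have hαpos : (0:ℝ) ≤ α := by positivity
  obtain ⟨M₀, hM₀⟩ := (hbdd α hαpos).subset_closedBall 0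
  set M : ℝ := max M₀ 0 with hM
  have hMnonneg : (0:ℝ) ≤ M := le_max_right _ _
  have hxsM : ∀ n, ‖xs n‖ ≤ M := by
    intro n
    have := hM₀ (hmem n)
    simp only [Metric.mem_closedBall, dist_zero_right] at this
    exact this.trans (le_max_left _ _)
  set C : ℝ := 2 * M + 1 with hC
  have hCpos : (0:ℝ) < C := by positivity
  have key : ∀ ε : ℝ, 0 < ε → ∃ y : X, ‖y - S y‖ ≤ ε ∧ ‖y‖ ≤ C := by
    intro ε hε
    set s : ℝ := C / (C + ε) with hs
    have hs0 : 0 < s := by positivity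
    have hs1 : s < 1 := by
      rw [hs, div_lt_one (by positivity)]; linarith
    have hlip : LipschitzWith s.toNNReal (fun x => s • S x) := by
      apply LipschitzWith.of_dist_le_mul
      intro x y
      rw [dist_eq_norm, dist_eq_norm, Real.coe_toNNReal _ hs0.le, ← smul_sub]
      rw [norm_smul, Real.norm_eq_abs, abs_of_pos hs0]
      exact mul_le_mul_of_nonneg_left (hS x y) hs0.le
    have hcontr : ContractingWith s.toNNReal (fun x => s • S x) := by
      constructor
      · rw [← NNReal.coe_lt_coe, Real.coe_toNNReal _ hs0.le, NNReal.coe_one]; exact hs1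
      · exact hlip
    set y : X := hcontr.fixedPoint _ with hy
    have hfix : s • S y = y := hcontr.fixedPoint_isFixedPt
    have hcomp : ∀ n, ‖y - xs n‖ ≤ s ^ n * ‖y‖ + M := by
      intro n; induction n with
      | zero =>
        have h0 : xs 0 = 0 := rfl
        rw [h0, sub_zero, pow_zero, one_mul]
        linarith
      | succ n ih =>
        have step : y - xs (n+1) = s • (S y - S (xs n)) - (1 - s) • S (xs n) := by
          rw [hxs_succ]
          nth_rewrite 1 [← hfix]
          rw [smul_sub, sub_smul, one_smul]; abel
        have hb : ‖S (xs n)‖ ≤ M := by rw [← hxs_succ n]; exact hxsM (n+1)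
        have h1s : (0:ℝ) ≤ 1 - s := by linarith
        calc ‖y - xs (n+1)‖ = ‖s • (S y - S (xs n)) - (1 - s) • S (xs n)‖ := by rw [step]
          _ ≤ ‖s • (S y - S (xs n))‖ + ‖(1 - s) • S (xs n)‖ := norm_sub_le _ _
          _ = s * ‖S y - S (xs n)‖ + (1 - s) * ‖S (xs n)‖ := by
              rw [norm_smul, norm_smul, Real.norm_eq_abs, Real.norm_eq_abs,
                abs_of_pos hs0, abs_of_nonneg h1s]
          _ ≤ s * ‖y - xs n‖ + (1 - s) * M :=
              add_le_add (mul_le_mul_of_nonneg_left (hS _ _) hs0.le)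
                (mul_le_mul_of_nonneg_left hb h1s)
          _ ≤ s * (s ^ n * ‖y‖ + M) + (1 - s) * M :=
              add_le_add (mul_le_mul_of_nonneg_left ih hs0.le) le_rfl
          _ = s ^ (n+1) * ‖y‖ + M := by ring
    have hyC : ‖y‖ ≤ C := by
      have htend : Tendsto (fun n => s ^ n * ‖y‖ + M) atTop (nhds (0 * ‖y‖ + M)) :=
        ((tendsto_pow_atTop_nhds_zero_of_lt_one hs0.le hs1).mul_const _).add_const _
      rw [zero_mul, zero_add] at htend
      have hev : ∀ᶠ n in atTop, (s:ℝ) ^ n * ‖y‖ + M < M + 1 :=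
        htend.eventually_lt_const (by linarith)
      obtain ⟨n, hn⟩ := hev.exists
      have h1 : ‖y‖ ≤ ‖y - xs n‖ + ‖xs n‖ := by
        have := norm_add_le (y - xs n) (xs n); simpa using this
      have h2 := hcomp n
      have h3 := hxsM n
      rw [hC]; linarith
    refine ⟨y, ?_, hyC⟩
    have hSy : S y = s⁻¹ • y := by
      conv_rhs => rw [← hfix]
      rw [smul_smul, inv_mul_cancel₀ hs0.ne', one_smul]
    have hd : y - S y = (1 - s⁻¹) • y := by
      rw [hSy, sub_smul, one_smul]
    have hinv : (1:ℝ) ≤ s⁻¹ := (one_le_inv₀ hs0).mpr hs1.le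
    have habs : |1 - s⁻¹| = -(1 - s⁻¹) := abs_of_nonpos (by linarith)
    rw [hd, norm_smul, Real.norm_eq_abs, habs]
    have hcalc : -(1 - s⁻¹) * C = ε := by
      rw [hs]; field_simp; ring
    calc -(1 - s⁻¹) * ‖y‖ ≤ -(1 - s⁻¹) * C := by
          apply mul_le_mul_of_nonneg_left hyC; linarith
      _ = ε := hcalc
  -- extract a true fixed point of S as a minimizer of the displacement
  have hScont : Continuous S := (cont_of_nonexp T hT).add continuous_const
  have hqcont : Continuous fun x : X => ‖x - S x‖ := (continuous_id.sub hScont).norm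
  have hKcpt : IsCompact (Metric.closedBall (0:X) C) := isCompact_closedBall _ _
  have hKne : (Metric.closedBall (0:X) C).Nonempty := ⟨0, by simp [hCpos.le]⟩
  obtain ⟨xbar, hxbarK, hxbarmin⟩ := hKcpt.exists_isMinOn hKne hqcont.continuousOn
  have hzero : ‖xbar - S xbar‖ ≤ 0 := by
    apply le_of_forall_pos_le_add
    intro ε hε
    obtain ⟨y, hy1, hy2⟩ := key ε hε
    have hyK : y ∈ Metric.closedBall (0:X) C := by
      simpa [Metric.mem_closedBall, dist_zero_right] using hy2
    have h5 : ‖xbar - S xbar‖ ≤ ‖y - S y‖ := (isMinOn_iff.mp hxbarmin) y hyK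
    linarith
  have : xbar - S xbar = 0 := by
    have := norm_le_zero_iff.mp hzero; exact this
  refine ⟨xbar, ?_⟩
  rw [hSapp] at this
  have h := sub_eq_zero.mp this
  calc xbar - T xbar = (T xbar + g) - T xbar := by rw [← h]
    _ = g := by abel

variable (T : X → X)

lemma sub_limit (hT : ∀ x y, ‖T x - T y‖ ≤ ‖x - y‖)
    (hbdd : ∀ α : ℝ, 0 ≤ α → Bornology.IsBounded {x : X | ‖x - T x‖ ≤ α})
    {gs : ℕ → X} {g : X} (hgs : Tendsto gs atTop (nhds g))
    (xs : ℕ → X) (hxsol : ∀ n, xs n - T (xs n) = gs n) :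
    ∃ a : X, a - T a = g ∧ ∃ φ : ℕ → ℕ, StrictMono φ ∧ Tendsto (xs ∘ φ) atTop (nhds a) := by
  have hnorm : Tendsto (fun n => ‖gs n‖) atTop (nhds ‖g‖) := hgs.norm
  have hbdda : BddAbove (Set.range fun n => ‖gs n‖) := hnorm.bddAbove_range
  obtain ⟨B, hB⟩ := hbdda
  have hBmem : ∀ n, ‖gs n‖ ≤ B := fun n => hB (Set.mem_range_self n)
  set B' : ℝ := max B 0 with hB'
  have hmem : ∀ n, xs n ∈ {x : X | ‖x - T x‖ ≤ B'} := by
    intro n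
    simp only [Set.mem_setOf_eq, hxsol n]
    exact (hBmem n).trans (le_max_left _ _)
  obtain ⟨a, _, φ, hφ, hconv⟩ :=
    tendsto_subseq_of_bounded (hbdd B' (le_max_right _ _)) hmem
  refine ⟨a, ?_, φ, hφ, hconv⟩
  have hFcont : Continuous fun x : X => x - T x :=
    continuous_id.sub (cont_of_nonexp T hT)
  have h1 : Tendsto (fun n => xs (φ n) - T (xs (φ n))) atTop (nhds (a - T a)) :=
    (hFcont.tendsto a).comp hconv
  have h2 : Tendsto (fun n => xs (φ n) - T (xs (φ n))) atTop (nhds g) := by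
    have : (fun n => xs (φ n) - T (xs (φ n))) = fun n => gs (φ n) := by
      funext n; exact hxsol (φ n)
    rw [this]
    exact hgs.comp hφ.tendsto_atTop
  exact tendsto_nhds_unique h1 h2

lemma no_bad_seq (hT : ∀ x y, ‖T x - T y‖ ≤ ‖x - y‖)
    (hbdd : ∀ α : ℝ, 0 ≤ α → Bornology.IsBounded {x : X | ‖x - T x‖ ≤ α})
    {g : X} {U : Set X} (hU : IsOpen U) (haU : ∀ a : X, a - T a = g → a ∈ U)
    (hbad : ∀ n : ℕ, ∃ g' : X, dist g' g < 1/(n+1) ∧ ∃ x : X, (x - T x = g') ∧ x ∉ U) :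
    False := by
  choose gs hdist xs hsol hnotU using hbad
  have hgs : Tendsto gs atTop (nhds g) := by
    rw [tendsto_iff_dist_tendsto_zero]
    apply squeeze_zero (fun n => dist_nonneg) (fun n => (hdist n).le)
    exact tendsto_one_div_add_atTop_nhds_zero_nat
  obtain ⟨a, ha, φ, hφ, hconv⟩ := sub_limit T hT hbdd hgs xs hsol
  have haU' : a ∈ U := haU a ha
  have hev : ∀ᶠ n in atTop, (xs ∘ φ) n ∈ U := hconv.eventually (hU.mem_nhds haU')
  obtain ⟨n, hn⟩ := hev.exists
  exact hnotU (φ n) hn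

end aux

theorem stmt6 {X : Type*} [NormedAddCommGroup X] [NormedSpace ℝ X]
    [FiniteDimensional ℝ X] (T : X → X)
    (hT : ∀ x y, ‖T x - T y‖ ≤ ‖x - y‖)
    (hbdd : ∀ α : ℝ, 0 ≤ α → Bornology.IsBounded {x : X | ‖x - T x‖ ≤ α})
    (g : X) :
    (UpperSemicontinuousAtSV (fun g : X => {x : X | x - T x = g}) g ∧
      LowerSemicontinuousAtSV (fun g : X => {x : X | x - T x = g}) g) ↔
    ∃ x : X, {y : X | y - T y = g} = {x} := by
  constructor
  · rintro ⟨-, hL⟩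
    obtain ⟨x0, hx0⟩ := exists_sol T hT hbdd g
    refine ⟨x0, Set.eq_singleton_iff_unique_mem.mpr ⟨hx0, ?_⟩⟩
    intro y hy
    by_contra hne
    -- y and x0 are two distinct solutions; derive a contradiction from lower semicontinuity
    set w : X := x0 - y with hwdef
    have hw : w ≠ 0 := sub_ne_zero.mpr (Ne.symm hne)
    set ρ : ℝ := ‖w‖ with hρdef
    have hρ : 0 < ρ := norm_pos_iff.mpr hw
    set δ : ℝ := ρ / 4 with hδdef
    have hδ : 0 < δ := by positivity
    obtain ⟨W, hWnhds, hW⟩ := hL (Metric.ball y δ) Metric.isOpen_ball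
      ⟨y, hy, Metric.mem_ball_self hδ⟩
    obtain ⟨ε, hε, hball⟩ := Metric.mem_nhds_iff.mp hWnhds
    set t : ℝ := ε / (2 * ρ) with htdef
    have ht : 0 < t := by positivity
    have hwne : ‖w‖ ≠ 0 := norm_ne_zero_iff.mpr hw
    have hg'W : g + t • w ∈ W := by
      apply hball
      have heq : ‖t • w‖ = ε / 2 := by
        rw [norm_smul, Real.norm_eq_abs, abs_of_pos ht, htdef, hρdef]
        field_simp
      rw [Metric.mem_ball, dist_eq_norm, add_sub_cancel_left, heq]
      linarith
    obtain ⟨x, hxsol, hxU⟩ := hW _ hg'W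
    simp only [Set.mem_setOf_eq] at hxsol
    have hxy : ‖x - y‖ < δ := by
      rw [← dist_eq_norm]; exact hxU
    set v : X := x - x0 with hvdef
    have hvw : v + w = x - y := by rw [hvdef, hwdef]; abel
    have h1 : ‖v + w‖ < δ := by rw [hvw]; exact hxy
    have hvnorm : ρ - δ ≤ ‖v‖ := by
      have : ρ ≤ ‖v + w‖ + ‖v‖ := by
        calc ρ = ‖(v + w) - v‖ := by rw [hρdef]; congr 1; abel
          _ ≤ ‖v + w‖ + ‖v‖ := norm_sub_le _ _
      linarith
    have hv0 : v ≠ 0 := by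
      intro hv
      rw [hv, norm_zero] at hvnorm
      rw [hδdef] at hvnorm; linarith
    obtain ⟨f, hf1, hfv⟩ := exists_dual_vector ℝ v (norm_ne_zero_iff.mpr hv0)
    have hfv' : f v = ‖v‖ := hfv
    -- the nonexpansiveness inequality gives f w ≥ 0
    have hTineq : ‖v - t • w‖ ≤ ‖v‖ := by
      have h1' : T x = x - (g + t • w) := by
        conv_rhs => rw [← hxsol]
        abel
      have h2' : T x0 = x0 - g := by
        conv_rhs => rw [← hx0]
        abel
      have hcalc : v - t • w = T x - T x0 := by
        rw [h1', h2', hvdef]; abel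
      rw [hcalc]
      exact hT x x0
    have hfle : ∀ z : X, f z ≤ ‖z‖ := by
      intro z
      calc f z ≤ |f z| := le_abs_self _
        _ = ‖f z‖ := (Real.norm_eq_abs _).symm
        _ ≤ ‖f‖ * ‖z‖ := f.le_opNorm z
        _ = ‖z‖ := by rw [hf1, one_mul]
    have hA : 0 ≤ f w := by
      have h2 : f (v - t • w) ≤ ‖v‖ := (hfle _).trans hTineq
      rw [map_sub, map_smul, smul_eq_mul, hfv'] at h2
      nlinarith
    have hB : f w < 0 := by
      have h3 : f (v + w) ≤ ‖v + w‖ := hfle _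
      have h4 : f w = f (v + w) - f v := by rw [map_add]; ring
      rw [h4, hfv']
      have hδeq : δ = ρ / 4 := hδdef
      linarith
    linarith
  · rintro ⟨xbar, hset⟩
    have hxbar : xbar - T xbar = g := by
      have : xbar ∈ {y : X | y - T y = g} := hset ▸ Set.mem_singleton _
      exact this
    constructor
    · intro U hUopen hsub
      by_contra hc
      push_neg at hc
      apply no_bad_seq T hT hbdd hUopen (fun a ha => hsub ha)
      intro n
      have hWn : Metric.ball g (1/(n+1)) ∈ nhds g :=
        Metric.ball_mem_nhds _ (by positivity)
      obtain ⟨g', hg'W, hnsub⟩ := hc _ hWn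
      obtain ⟨x, hxmem, hxnot⟩ := Set.not_subset.mp hnsub
      exact ⟨g', by simpa [Metric.mem_ball] using hg'W, x, hxmem, hxnot⟩
    · intro U hUopen hne
      have hxbarU : xbar ∈ U := by
        obtain ⟨z, hz1, hz2⟩ := hne
        have hz1' : z ∈ {y : X | y - T y = g} := hz1
        rw [hset] at hz1'
        have : z = xbar := hz1'
        rwa [← this]
      by_contra hc
      push_neg at hc
      apply no_bad_seq T hT hbdd hUopen (fun a ha => ?_)
      · intro n
        have hWn : Metric.ball g (1/(n+1)) ∈ nhds g :=
          Metric.ball_mem_nhds _ (by positivity)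
        obtain ⟨g', hg'W, hempty⟩ := hc _ hWn
        obtain ⟨x, hxsol⟩ := exists_sol T hT hbdd g'
        refine ⟨g', by simpa [Metric.mem_ball] using hg'W, x, hxsol, ?_⟩
        intro hxU
        have hmem : x ∈ ({x : X | x - T x = g'} ∩ U) := ⟨hxsol, hxU⟩
        rw [hempty] at hmem
        exact hmem
      · have : a ∈ ({xbar} : Set X) := hset ▸ ha
        have := Set.mem_singleton_iff.mp this
        rwa [this]
end

section
/- Let X and Y be finite-dimensional real normed vector spaces and A : X ⇒ Y an upper semicontinuous set-valued map with compact values. Then the set of points at which A is continuous is a residual subset of X (a countable intersection of dense open sets); in particular A is continuous on a dense subset of X. -/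
open EMetric Filter Set Topology ENNReal

/-- If `A` is usc, then `x ↦ infEdist y (A x)` is lower semicontinuous. -/
lemma aux_lsc_infEdist {X Y : Type*} [TopologicalSpace X] [PseudoEMetricSpace Y]
    (A : X → Set Y) (husc : ∀ x, UpperSemicontinuousAtSV A x) (y : Y) :
    LowerSemicontinuous fun x => EMetric.infEdist y (A x) := by
  intro x c hc
  obtain ⟨c', hc1, hc2⟩ := exists_between hc
  have hsub : A x ⊆ {z | c' < edist y z} := fun z hz =>
    lt_of_lt_of_le hc2 (infEdist_le_edist_of_mem hz)
  obtain ⟨W, hW, hWU⟩ := husc x {z | c' < edist y z}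
    (isOpen_lt continuous_const (continuous_const.edist continuous_id)) hsub
  filter_upwards [hW] with x' hx'
  calc c < c' := hc1
    _ ≤ _ := le_infEdist.2 fun z hz => (hWU x' hx' hz).le

/-- The set of points where a lower semicontinuous `ℝ≥0∞`-valued function is
upper semicontinuous is residual. -/
lemma aux_residual_usc {X : Type*} [TopologicalSpace X] [BaireSpace X]
    (g : X → ℝ≥0∞) (hg : LowerSemicontinuous g) :
    {x | UpperSemicontinuousAt g x} ∈ residual X := by
  have hopen : ∀ q : ℚ, IsOpen {x | (Real.toNNReal q : ℝ≥0∞) < g x} := fun q =>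
    hg.isOpen_preimage _
  have hmem : ∀ q : ℚ, (frontier {x | (Real.toNNReal q : ℝ≥0∞) < g x})ᶜ ∈ residual X := by
    intro q
    apply residual_of_dense_open isClosed_frontier.isOpen_compl
    rw [← interior_eq_empty_iff_dense_compl, ← frontier_compl]
    exact interior_frontier (hopen q).isClosed_compl
  have hInter : (⋂ q : ℚ, (frontier {x | (Real.toNNReal q : ℝ≥0∞) < g x})ᶜ) ∈ residual X :=
    countable_iInter_mem.2 hmem
  refine mem_of_superset hInter ?_
  intro x hx c hc
  by_contra h
  obtain ⟨q, _hq0, hq1, hq2⟩ := ENNReal.lt_iff_exists_rat_btwn.1 hc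
  refine mem_iInter.1 hx q ?_
  constructor
  · rw [mem_closure_iff_frequently]
    exact ((not_eventually.1 h).mono fun x' hx' => lt_of_lt_of_le hq2 (not_lt.1 hx'))
  · rw [(hopen q).interior_eq]
    exact fun hx' => absurd hq1 (not_lt.2 hx'.le)

theorem stmt7 {X Y : Type*} [NormedAddCommGroup X] [NormedSpace ℝ X]
    [FiniteDimensional ℝ X] [NormedAddCommGroup Y] [NormedSpace ℝ Y]
    [FiniteDimensional ℝ Y] (A : X → Set Y)
    (husc : ∀ x, UpperSemicontinuousAtSV A x)
    (hcomp : ∀ x, IsCompact (A x)) :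
    {x : X | UpperSemicontinuousAtSV A x ∧ LowerSemicontinuousAtSV A x} ∈
      residual X := by
  obtain ⟨u, hu⟩ := TopologicalSpace.exists_dense_seq Y
  have key : ∀ n : ℕ,
      {x | UpperSemicontinuousAt (fun x => EMetric.infEdist (u n) (A x)) x} ∈ residual X :=
    fun n => aux_residual_usc _ (aux_lsc_infEdist A husc (u n))
  have hInter : (⋂ n : ℕ,
      {x | UpperSemicontinuousAt (fun x => EMetric.infEdist (u n) (A x)) x}) ∈ residual X :=
    countable_iInter_mem.2 key
  refine mem_of_superset hInter ?_
  intro x hx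
  refine ⟨husc x, ?_⟩
  rintro U hU ⟨z, hzA, hzU⟩
  obtain ⟨ε, hε, hball⟩ := EMetric.isOpen_iff.1 hU z hzU
  have hε2 : (0 : ℝ≥0∞) < ε / 2 := ENNReal.half_pos hε.ne'
  obtain ⟨y, ⟨n, rfl⟩, hyz⟩ := EMetric.mem_closure_iff.1 (hu z) (ε / 2) hε2
  have h1 : EMetric.infEdist (u n) (A x) < ε / 2 := by
    calc EMetric.infEdist (u n) (A x) ≤ edist (u n) z := infEdist_le_edist_of_mem hzA
      _ < ε / 2 := by rwa [edist_comm]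
  have hev := mem_iInter.1 hx n (ε / 2) h1
  refine ⟨_, hev, fun x' hx' => ?_⟩
  obtain ⟨z', hz'A, hz'⟩ := infEdist_lt_iff.1 hx'
  refine ⟨z', hz'A, hball (EMetric.mem_ball'.2 ?_)⟩
  calc edist z z' ≤ edist z (u n) + edist (u n) z' := edist_triangle _ _ _
    _ < ε / 2 + ε / 2 := ENNReal.add_lt_add hyz hz'
    _ = ε := ENNReal.add_halves ε
end

section
/- Let X be a finite-dimensional real normed vector space and T : X → X nonexpansive such that {x | ‖x − T(x)‖ ≤ α} is bounded for every α ≥ 0. Then the set of g ∈ X for which the map x ↦ g + T(x) has a unique fixed point is a residual subset of X (hence dense by Baire's theorem). -/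
set_option linter.unusedSectionVars false
set_option maxHeartbeats 1000000
open Metric MeasureTheory Set Filter Topology Bornology Module ENNReal

section Aux3
variable {X : Type*} [NormedAddCommGroup X] [NormedSpace ℝ X] [FiniteDimensional ℝ X]
variable {T : X → X}

private lemma Tlip (hT : ∀ x y, ‖T x - T y‖ ≤ ‖x - y‖) : LipschitzWith 1 T := by
  apply LipschitzWith.of_dist_le_mul
  intro x y
  simpa [dist_eq_norm] using hT x y

private lemma fLip (hT : ∀ x y, ‖T x - T y‖ ≤ ‖x - y‖) :
    LipschitzWith 2 (fun x => x - T x) := by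
  apply LipschitzWith.of_dist_le_mul
  intro x y
  simp only [dist_eq_norm]
  have : x - T x - (y - T y) = (x - y) - (T x - T y) := by abel
  rw [this]
  calc ‖(x - y) - (T x - T y)‖ ≤ ‖x - y‖ + ‖T x - T y‖ := norm_sub_le _ _
    _ ≤ ‖x - y‖ + ‖x - y‖ := by linarith [hT x y]
    _ = 2 * ‖x - y‖ := by ring

private lemma fexp (hT : ∀ x y, ‖T x - T y‖ ≤ ‖x - y‖) {ε : ℝ} (hε : 0 < ε) (x y : X) :
    ε * ‖x - y‖ ≤ ‖(x - T x + ε • x) - (y - T y + ε • y)‖ := by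
  have h1 : (x - T x + ε • x) - (y - T y + ε • y) = (1 + ε) • (x - y) - (T x - T y) := by
    rw [add_smul, one_smul, smul_sub]; abel
  rw [h1]
  have h3 : ‖(1 + ε) • (x - y)‖ = (1 + ε) * ‖x - y‖ := by
    rw [norm_smul, Real.norm_eq_abs, abs_of_pos (by linarith)]
  nlinarith [hT x y, norm_sub_norm_le ((1 + ε) • (x - y)) (T x - T y), norm_nonneg (x - y)]

private lemma fSurj' (hT : ∀ x y, ‖T x - T y‖ ≤ ‖x - y‖)
    (hbdd : ∀ α : ℝ, 0 ≤ α → Bornology.IsBounded {x : X | ‖x - T x‖ ≤ α}) (g : X) :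
    ∃ x : X, x - T x = g := by
  have hfix : ∀ r : ℝ, 0 ≤ r → r < 1 → ∃ x : X, x = g + r • T x := by
    intro r h0 h1
    have hc : ContractingWith ⟨r, h0⟩ (fun x => g + r • T x) := by
      constructor
      · exact_mod_cast h1
      · apply LipschitzWith.of_dist_le_mul
        intro x y
        simp only [dist_eq_norm]
        have h : g + r • T x - (g + r • T y) = r • (T x - T y) := by rw [smul_sub]; abel
        rw [h, norm_smul, Real.norm_eq_abs, abs_of_nonneg h0]
        exact mul_le_mul_of_nonneg_left (hT x y) h0
    obtain ⟨x, hx, -⟩ := hc.exists_fixedPoint (0 : X) (edist_ne_top _ _)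
    exact ⟨x, hx.symm⟩
  set α : ℝ := 2 * ‖g‖ + 2 * ‖T 0‖ with hα
  have hα0 : 0 ≤ α := by positivity
  obtain ⟨R, hR⟩ := (hbdd α hα0).subset_closedBall 0
  have hr : ∀ n : ℕ, (0:ℝ) ≤ 1 - 1/(n+1) ∧ (1 - 1/(n+1) : ℝ) < 1 := by
    intro n
    constructor
    · have h1 : (1:ℝ)/(n+1) ≤ 1 := by
        rw [div_le_one (by positivity)]
        linarith [Nat.cast_nonneg (α := ℝ) n]
      linarith
    · have h2 : (0:ℝ) < 1/(n+1) := by positivity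
      linarith
  have hex : ∀ n : ℕ, ∃ x : X, x = g + (1 - 1/(n+1) : ℝ) • T x :=
    fun n => hfix _ (hr n).1 (hr n).2
  choose u hu using hex
  have hmem : ∀ n, u n ∈ closedBall (0 : X) R := by
    intro n
    apply hR
    set r : ℝ := 1 - 1/(n+1) with hrdef
    set x := u n
    have h0 : 0 ≤ r := (hr n).1
    have h1 : r < 1 := (hr n).2
    have hTx : ‖T x‖ ≤ ‖T 0‖ + ‖x‖ := by
      have := hT x 0
      have h := norm_sub_norm_le (T x) (T 0)
      simp only [sub_zero] at this
      linarith
    have hxn : ‖x‖ ≤ ‖g‖ + r * ‖T x‖ := by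
      calc ‖x‖ = ‖g + r • T x‖ := by rw [← hu n]
        _ ≤ ‖g‖ + ‖r • T x‖ := norm_add_le _ _
        _ = ‖g‖ + r * ‖T x‖ := by rw [norm_smul, Real.norm_eq_abs, abs_of_nonneg h0]
    have hkey : (1 - r) * ‖x‖ ≤ ‖g‖ + ‖T 0‖ := by nlinarith [norm_nonneg x, norm_nonneg (T 0)]
    show ‖x - T x‖ ≤ α
    have hsub : x - T x = g + (r - 1) • T x := by
      have hx : x = g + r • T x := hu n
      rw [sub_smul, one_smul]
      calc x - T x = (g + r • T x) - T x := by rw [← hx]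
        _ = g + (r • T x - T x) := by abel
    calc ‖x - T x‖ = ‖g + (r-1) • T x‖ := by rw [hsub]
      _ ≤ ‖g‖ + ‖(r-1) • T x‖ := norm_add_le _ _
      _ = ‖g‖ + (1-r) * ‖T x‖ := by
          rw [norm_smul, Real.norm_eq_abs, abs_of_nonpos (by linarith)]; ring_nf
      _ ≤ α := by nlinarith [norm_nonneg (T x), norm_nonneg x, norm_nonneg (T 0)]
  obtain ⟨x, -, φ, hφ, hconv⟩ :=
    (isCompact_closedBall (0:X) R).tendsto_subseq hmem
  have hTcont : Tendsto (fun n => T (u (φ n))) atTop (𝓝 (T x)) :=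
    ((Tlip hT).continuous.tendsto x).comp hconv
  have hscal : Tendsto (fun n => (1 - 1/(φ n + 1) : ℝ)) atTop (𝓝 1) := by
    have h0 : Tendsto (fun n : ℕ => (1 / (n + 1) : ℝ)) atTop (𝓝 0) :=
      tendsto_one_div_add_atTop_nhds_zero_nat
    have := (h0.comp hφ.tendsto_atTop).const_sub 1
    simpa using this
  have hlim : Tendsto (fun n => g + (1 - 1/(φ n + 1) : ℝ) • T (u (φ n))) atTop
      (𝓝 (g + (1:ℝ) • T x)) := tendsto_const_nhds.add (hscal.smul hTcont)
  have heq : (fun n => g + (1 - 1/(φ n + 1) : ℝ) • T (u (φ n))) = u ∘ φ := by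
    funext n
    exact (hu (φ n)).symm
  rw [heq] at hlim
  have hxeq : x = g + (1:ℝ) • T x := tendsto_nhds_unique hconv hlim
  rw [one_smul] at hxeq
  exact ⟨x, by rw [sub_eq_iff_eq_add]; exact hxeq⟩

private lemma Eclosed (hT : ∀ x y, ‖T x - T y‖ ≤ ‖x - y‖)
    (hbdd : ∀ α : ℝ, 0 ≤ α → Bornology.IsBounded {x : X | ‖x - T x‖ ≤ α}) (c : ℝ) :
    IsClosed {g : X | ∃ x y, x - T x = g ∧ y - T y = g ∧ c ≤ ‖x - y‖} := by
  apply IsSeqClosed.isClosed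
  intro u p hu hup
  obtain ⟨M, hM⟩ := (isBounded_range_of_tendsto u hup).subset_closedBall 0
  have hM' : ∀ n, ‖u n‖ ≤ max M 0 := by
    intro n
    have := hM (mem_range_self n)
    rw [mem_closedBall_zero_iff] at this
    exact this.trans (le_max_left _ _)
  obtain ⟨R, hR⟩ := (hbdd (max M 0) (le_max_right _ _)).subset_closedBall 0
  choose x y hx hy hc using hu
  have hxm : ∀ n, x n ∈ closedBall (0:X) R := by
    intro n; exact hR (by simp only [mem_setOf_eq, hx n]; exact hM' n)
  have hym : ∀ n, y n ∈ closedBall (0:X) R := by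
    intro n; exact hR (by simp only [mem_setOf_eq, hy n]; exact hM' n)
  have hK : IsCompact ((closedBall (0:X) R) ×ˢ (closedBall (0:X) R)) :=
    (isCompact_closedBall _ _).prod (isCompact_closedBall _ _)
  obtain ⟨⟨a, b⟩, -, φ, hφ, hz⟩ := hK.tendsto_subseq
    (x := fun n => (x n, y n)) (fun n => ⟨hxm n, hym n⟩)
  have ha : Tendsto (fun n => x (φ n)) atTop (𝓝 a) :=
    (continuous_fst.tendsto _).comp hz
  have hb : Tendsto (fun n => y (φ n)) atTop (𝓝 b) :=
    (continuous_snd.tendsto _).comp hz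
  have hfc : Continuous (fun z : X => z - T z) := continuous_id.sub (Tlip hT).continuous
  have hpa : a - T a = p := by
    have h1 : Tendsto (fun n => x (φ n) - T (x (φ n))) atTop (𝓝 (a - T a)) :=
      (hfc.tendsto a).comp ha
    have h2 : Tendsto (fun n => x (φ n) - T (x (φ n))) atTop (𝓝 p) := by
      have := hup.comp hφ.tendsto_atTop
      apply this.congr
      intro n
      exact (hx (φ n)).symm
    exact tendsto_nhds_unique h1 h2
  have hpb : b - T b = p := by
    have h1 : Tendsto (fun n => y (φ n) - T (y (φ n))) atTop (𝓝 (b - T b)) :=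
      (hfc.tendsto b).comp hb
    have h2 : Tendsto (fun n => y (φ n) - T (y (φ n))) atTop (𝓝 p) := by
      have := hup.comp hφ.tendsto_atTop
      apply this.congr
      intro n
      exact (hy (φ n)).symm
    exact tendsto_nhds_unique h1 h2
  refine ⟨a, b, hpa, hpb, ?_⟩
  have hnorm : Tendsto (fun n => ‖x (φ n) - y (φ n)‖) atTop (𝓝 ‖a - b‖) :=
    (continuous_norm.tendsto _).comp (ha.sub hb)
  exact ge_of_tendsto hnorm (Eventually.of_forall fun n => hc (φ n))

private lemma keyDense (hT : ∀ x y, ‖T x - T y‖ ≤ ‖x - y‖)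
    (hbdd : ∀ α : ℝ, 0 ≤ α → Bornology.IsBounded {x : X | ‖x - T x‖ ≤ α})
    {c r : ℝ} (hc : 0 < c) (hr : 0 < r) (g₀ : X) :
    ¬ (ball g₀ r ⊆ {g : X | ∃ x y, x - T x = g ∧ y - T y = g ∧ c ≤ ‖x - y‖}) := by
  intro hsub
  rcases subsingleton_or_nontrivial X with hs | hs
  · obtain ⟨x, y, -, -, hxy⟩ := hsub (mem_ball_self hr)
    rw [Subsingleton.elim x y, sub_self, norm_zero] at hxy
    linarith
  borelize X
  set f : X → X := fun z => z - T z with hfdef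
  have hfc : Continuous f := (fLip hT).continuous
  have main : ∃ μ : Measure X, μ.IsAddHaarMeasure ∧ ∀ N : Set X, μ N = 0 → μ (f '' N) = 0 := by
    refine ⟨μH[(finrank ℝ X : ℝ)], isAddHaarMeasure_hausdorffMeasure, ?_⟩
    intro N hN
    have h := (fLip hT).hausdorffMeasure_image_le (d := (finrank ℝ X : ℝ)) (by positivity) N
    refine le_antisymm ?_ (zero_le)
    rw [hN, mul_zero] at h
    exact h
  obtain ⟨μ, hHaar, nullimage⟩ := main
  haveI := hHaar
  -- the compact preimage
  set K : Set X := f ⁻¹' (closedBall g₀ r) with hK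
  have hKclosed : IsClosed K := isClosed_closedBall.preimage hfc
  have hKbdd : IsBounded K := by
    apply (hbdd (‖g₀‖ + r) (by positivity)).subset
    intro x hx
    have h1 : dist (f x) g₀ ≤ r := hx
    rw [dist_eq_norm] at h1
    have h2 : ‖f x‖ ≤ ‖f x - g₀‖ + ‖g₀‖ := by
      simpa using norm_add_le (f x - g₀) g₀
    simp only [mem_setOf_eq]
    show ‖x - T x‖ ≤ ‖g₀‖ + r
    calc ‖x - T x‖ = ‖f x‖ := rfl
      _ ≤ ‖f x - g₀‖ + ‖g₀‖ := h2
      _ ≤ ‖g₀‖ + r := by linarith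
  have hKc : IsCompact K := isCompact_of_isClosed_isBounded hKclosed hKbdd
  obtain ⟨RK, hRK⟩ := hKbdd.subset_closedBall 0
  have hRK0 : 0 ≤ RK := by
    obtain ⟨x0, hx0⟩ := fSurj' hT hbdd g₀
    have : x0 ∈ K := by
      simp only [hK, mem_preimage, hfdef, hx0]
      exact mem_closedBall_self hr.le
    have := hRK this
    rw [mem_closedBall_zero_iff] at this
    exact (norm_nonneg _).trans this
  -- differentiability set
  set Dset : Set X := {z : X | DifferentiableAt ℝ f z} with hDset
  have hDmeas : MeasurableSet Dset := measurableSet_of_differentiableAt ℝ f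
  have hae : μ Dsetᶜ = 0 := by
    have h := (fLip hT).ae_differentiableAt (μ := μ)
    rwa [ae_iff] at h
  set f' : X → X →L[ℝ] X := fun z => fderiv ℝ f z with hf'def
  have hf'at : ∀ z ∈ Dset, HasFDerivAt f (f' z) z := fun z hz => hz.hasFDerivAt
  have hf'norm : ∀ z : X, ‖f' z‖ ≤ 2 := by
    intro z
    by_cases hz : DifferentiableAt ℝ f z
    · exact_mod_cast norm_fderiv_le_of_lipschitz ℝ (fLip hT)
    · simp [hf'def, fderiv_zero_of_not_differentiableAt hz]
  -- determinant bound
  obtain ⟨B, hB⟩ : ∃ B : ℝ, ∀ M : X →L[ℝ] X, ‖M‖ ≤ 3 → |M.det| ≤ B := by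
    have hcomp : IsCompact (closedBall (0 : X →L[ℝ] X) 3) := isCompact_closedBall _ _
    have hcont : ContinuousOn (fun M : X →L[ℝ] X => |M.det|)
        (closedBall (0 : X →L[ℝ] X) 3) :=
      (continuous_abs.comp ContinuousLinearMap.continuous_det).continuousOn
    obtain ⟨M0, -, hM0⟩ := hcomp.exists_isMaxOn ⟨0, mem_closedBall_self (by norm_num)⟩ hcont
    exact ⟨abs M0.det, fun M hM => hM0 (by rwa [mem_closedBall_zero_iff])⟩
  set s0 : Set X := K ∩ Dset with hs0
  have hs0meas : MeasurableSet s0 := hKclosed.measurableSet.inter hDmeas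
  have hs0fin : μ s0 ≠ ∞ := by
    have : μ s0 ≤ μ K := measure_mono inter_subset_left
    exact (this.trans_lt hKc.measure_lt_top).ne
  -- ε-sequence facts
  have hεk : ∀ k : ℕ, (0:ℝ) < 1/(k+1) ∧ (1/(k+1):ℝ) ≤ 1 := by
    intro k
    constructor
    · positivity
    · rw [div_le_one (by positivity)]
      linarith [Nat.cast_nonneg (α := ℝ) k]
  set Fdet : ℕ → X → ℝ≥0∞ := fun k z =>
    ENNReal.ofReal |((f' z) + (1/(k+1):ℝ) • ContinuousLinearMap.id ℝ X).det| with hFdet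
  have hdetbound : ∀ (k : ℕ) (z : X), Fdet k z ≤ ENNReal.ofReal B := by
    intro k z
    apply ENNReal.ofReal_le_ofReal
    apply hB
    have hid : ‖ContinuousLinearMap.id ℝ X‖ ≤ 1 := ContinuousLinearMap.norm_id_le
    have hsm : ‖(1/(k+1):ℝ) • ContinuousLinearMap.id ℝ X‖ ≤ 1 := by
      calc ‖(1/(k+1):ℝ) • ContinuousLinearMap.id ℝ X‖
          ≤ ‖(1/(k+1):ℝ)‖ * ‖ContinuousLinearMap.id ℝ X‖ := ContinuousLinearMap.opNorm_smul_le _ _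
        _ ≤ 1 := by
            rw [Real.norm_eq_abs, abs_of_pos (hεk k).1]
            nlinarith [(hεk k).1, (hεk k).2, norm_nonneg (ContinuousLinearMap.id ℝ X)]
    calc ‖f' z + (1/(k+1):ℝ) • ContinuousLinearMap.id ℝ X‖
        ≤ ‖f' z‖ + ‖(1/(k+1):ℝ) • ContinuousLinearMap.id ℝ X‖ := norm_add_le _ _
      _ ≤ 3 := by linarith [hf'norm z]
  have hFmeas : ∀ k, Measurable (Fdet k) := by
    intro k
    have m1 : Measurable (fun z => f' z + (1/(k+1):ℝ) • ContinuousLinearMap.id ℝ X) :=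
      (continuous_id.add continuous_const).measurable.comp (measurable_fderiv ℝ f)
    exact ENNReal.measurable_ofReal.comp
      ((continuous_abs.comp ContinuousLinearMap.continuous_det).measurable.comp m1)
  have step : ∀ k : ℕ, ∫⁻ z in s0, Fdet k z ∂μ ≤ μ (closedBall g₀ (r + (1/(k+1)) * RK)) := by
    intro k
    set ε : ℝ := 1/(k+1) with hεdef
    have hε0 : 0 < ε := (hεk k).1
    have hFderiv : ∀ z ∈ s0, HasFDerivWithinAt (fun z => f z + ε • z)
        ((f' z) + ε • ContinuousLinearMap.id ℝ X) s0 z := by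
      intro z hz
      exact ((hf'at z hz.2).add ((hasFDerivAt_id z).const_smul ε)).hasFDerivWithinAt
    have hFinj : InjOn (fun z => f z + ε • z) s0 := by
      intro a _ b' _ hab
      have h := fexp hT hε0 a b'
      simp only [hfdef] at hab
      rw [hab, sub_self, norm_zero] at h
      have h2 : ‖a - b'‖ ≤ 0 := by nlinarith [norm_nonneg (a - b')]
      exact sub_eq_zero.mp (norm_le_zero_iff.mp h2)
    have him : (fun z => f z + ε • z) '' s0 ⊆ closedBall g₀ (r + ε * RK) := by
      rintro _ ⟨z, hz, rfl⟩
      have h1 : dist (f z) g₀ ≤ r := hz.1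
      rw [dist_eq_norm] at h1
      have h2 : ‖z‖ ≤ RK := mem_closedBall_zero_iff.mp (hRK hz.1)
      rw [mem_closedBall, dist_eq_norm]
      have h3 : f z + ε • z - g₀ = (f z - g₀) + ε • z := by abel
      rw [h3]
      calc ‖(f z - g₀) + ε • z‖ ≤ ‖f z - g₀‖ + ‖ε • z‖ := norm_add_le _ _
        _ ≤ r + ε * RK := by
            rw [norm_smul, Real.norm_eq_abs, abs_of_pos hε0]
            exact add_le_add h1 (mul_le_mul_of_nonneg_left h2 hε0.le)
    calc ∫⁻ z in s0, Fdet k z ∂μ ≤ μ ((fun z => f z + ε • z) '' s0) :=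
        lintegral_abs_det_fderiv_le_addHaar_image μ hs0meas hFderiv hFinj
      _ ≤ _ := measure_mono him
  have hlhs : Tendsto (fun k => ∫⁻ z in s0, Fdet k z ∂μ) atTop
      (𝓝 (∫⁻ z in s0, ENNReal.ofReal |(f' z).det| ∂μ)) := by
    apply tendsto_lintegral_of_dominated_convergence (fun _ => ENNReal.ofReal B) hFmeas
    · exact fun k => Eventually.of_forall (fun z => hdetbound k z)
    · rw [lintegral_const, Measure.restrict_apply_univ]
      exact ENNReal.mul_ne_top ENNReal.ofReal_ne_top hs0fin
    · apply Eventually.of_forall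
      intro z
      have h1 : Tendsto (fun k : ℕ => (1/(k+1):ℝ) • ContinuousLinearMap.id ℝ X) atTop
          (𝓝 ((0:ℝ) • ContinuousLinearMap.id ℝ X)) :=
        tendsto_one_div_add_atTop_nhds_zero_nat.smul_const _
      rw [zero_smul] at h1
      have h2 : Tendsto (fun k : ℕ => f' z + (1/(k+1):ℝ) • ContinuousLinearMap.id ℝ X) atTop
          (𝓝 (f' z + 0)) := tendsto_const_nhds.add h1
      rw [add_zero] at h2
      exact ((ENNReal.continuous_ofReal.tendsto _).comp
        (((continuous_abs.comp ContinuousLinearMap.continuous_det).tendsto _).comp h2))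
  have hrhs : Tendsto (fun k : ℕ => μ (closedBall g₀ (r + (1/(k+1)) * RK))) atTop
      (𝓝 (μ (closedBall g₀ r))) := by
    have key : ∀ k : ℕ, μ (closedBall g₀ (r + (1/(k+1))*RK)) =
        ENNReal.ofReal ((r + (1/(k+1))*RK) ^ finrank ℝ X) * μ (ball 0 1) := fun k =>
      Measure.addHaar_closedBall μ g₀ (by positivity)
    rw [Measure.addHaar_closedBall μ g₀ hr.le]
    simp_rw [key]
    apply ENNReal.Tendsto.mul_const
    · apply ENNReal.tendsto_ofReal
      have h0 : Tendsto (fun k : ℕ => r + (1/(k+1))*RK) atTop (𝓝 (r + 0*RK)) :=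
        tendsto_const_nhds.add (tendsto_one_div_add_atTop_nhds_zero_nat.mul_const RK)
      rw [zero_mul, add_zero] at h0
      exact ((continuous_pow (finrank ℝ X)).tendsto _).comp h0
    · exact Or.inr measure_ball_lt_top.ne
  have L1 : ∫⁻ z in s0, ENNReal.ofReal |(f' z).det| ∂μ ≤ μ (closedBall g₀ r) :=
    le_of_tendsto_of_tendsto' hlhs hrhs step
  -- lower bound lemma
  have hDcnull : ∀ A : Set X, μ (A \ Dset) = 0 := fun A =>
    measure_mono_null (fun z hz => hz.2) hae
  have Ilow : ∀ A : Set X, MeasurableSet A →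
      μ (f '' A) ≤ ∫⁻ z in A ∩ Dset, ENNReal.ofReal |(f' z).det| ∂μ := by
    intro A hA
    have hsplit : f '' A ⊆ f '' (A ∩ Dset) ∪ f '' (A \ Dset) := by
      rw [← image_union]
      apply image_mono
      intro z hz
      by_cases h : z ∈ Dset
      · exact mem_union_left _ ⟨hz, h⟩
      · exact mem_union_right _ ⟨hz, h⟩
    calc μ (f '' A) ≤ μ (f '' (A ∩ Dset) ∪ f '' (A \ Dset)) := measure_mono hsplit
      _ ≤ μ (f '' (A ∩ Dset)) + μ (f '' (A \ Dset)) := measure_union_le _ _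
      _ = μ (f '' (A ∩ Dset)) := by rw [nullimage _ (hDcnull A), add_zero]
      _ ≤ ∫⁻ z in A ∩ Dset, ENNReal.ofReal |(f' z).det| ∂μ :=
          addHaar_image_le_lintegral_abs_det_fderiv μ (hA.inter hDmeas)
            (fun z hz => (hf'at z hz.2).hasFDerivWithinAt)
  -- finite cover by small balls
  obtain ⟨tset, htK, htfin, hcover⟩ := hKc.finite_cover_balls (e := c/8) (by positivity)
  set SS : X × X → Set X := fun pq =>
    f '' (K ∩ closedBall pq.1 (c/8)) ∩ f '' (K ∩ closedBall pq.2 (c/8)) ∩ ball g₀ r with hSS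
  set P : Set (X × X) := {pq | pq.1 ∈ tset ∧ pq.2 ∈ tset ∧ c/2 ≤ ‖pq.1 - pq.2‖} with hP
  have hPcount : P.Countable :=
    ((htfin.prod htfin).subset (fun pq hpq => ⟨hpq.1, hpq.2.1⟩)).countable
  have hcov : ball g₀ r ⊆ ⋃ pq ∈ P, SS pq := by
    intro g hg
    obtain ⟨x, y, hx, hy, hxy⟩ := hsub hg
    have hxK : x ∈ K := by
      show f x ∈ closedBall g₀ r
      rw [show f x = g from hx]
      exact ball_subset_closedBall hg
    have hyK : y ∈ K := by
      show f y ∈ closedBall g₀ r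
      rw [show f y = g from hy]
      exact ball_subset_closedBall hg
    obtain ⟨p, hpt, hxp⟩ := mem_iUnion₂.mp (hcover hxK)
    obtain ⟨q, hqt, hyq⟩ := mem_iUnion₂.mp (hcover hyK)
    have hd : c/2 ≤ ‖p - q‖ := by
      have t4 : dist x y ≤ dist x p + dist p q + dist q y := dist_triangle4 _ _ _ _
      have h1 : dist x p < c/8 := hxp
      have h2 : dist q y < c/8 := by rw [dist_comm]; exact hyq
      have h3 : c ≤ dist x y := by rw [dist_eq_norm]; exact hxy
      rw [← dist_eq_norm]
      linarith
    apply mem_iUnion₂.mpr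
    refine ⟨(p, q), ⟨hpt, hqt, hd⟩, ?_⟩
    exact ⟨⟨⟨x, ⟨hxK, ball_subset_closedBall hxp⟩, hx⟩,
      ⟨y, ⟨hyK, ball_subset_closedBall hyq⟩, hy⟩⟩, hg⟩
  have hμball : 0 < μ (ball g₀ r) := measure_ball_pos μ g₀ hr
  have hex : ∃ pq ∈ P, 0 < μ (SS pq) := by
    by_contra hcon
    push_neg at hcon
    have h0 : μ (⋃ pq ∈ P, SS pq) = 0 :=
      (measure_biUnion_null_iff hPcount).mpr
        (fun pq hpq => le_antisymm (hcon pq hpq) (zero_le))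
    exact hμball.ne' (le_antisymm (h0 ▸ measure_mono hcov) (zero_le))
  obtain ⟨⟨p, q⟩, hpqP, hμS⟩ := hex
  set A1 : Set X := K ∩ closedBall p (c/8) with hA1
  set A2 : Set X := K ∩ closedBall q (c/8) with hA2
  have hA1c : IsCompact A1 := hKc.inter_right isClosed_closedBall
  have hA2c : IsCompact A2 := hKc.inter_right isClosed_closedBall
  have hA1m : MeasurableSet A1 := hKclosed.measurableSet.inter isClosed_closedBall.measurableSet
  have hA2m : MeasurableSet A2 := hKclosed.measurableSet.inter isClosed_closedBall.measurableSet
  have hdisj : Disjoint A1 A2 := by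
    rw [disjoint_left]
    rintro a ⟨-, ha1⟩ ⟨-, ha2⟩
    have h1 : dist a p ≤ c/8 := ha1
    have h2 : dist a q ≤ c/8 := ha2
    have h3 : c/2 ≤ ‖p - q‖ := hpqP.2.2
    rw [← dist_eq_norm] at h3
    have h4 : dist p q ≤ dist p a + dist a q := dist_triangle _ _ _
    rw [dist_comm p a] at h4
    linarith
  set Rst : Set X := K \ (A1 ∪ A2) with hRst
  have hRm : MeasurableSet Rst := hKclosed.measurableSet.diff (hA1m.union hA2m)
  set b : Set X := ball g₀ r with hb
  set u1 : Set X := b ∩ f '' A1 with hu1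
  set u2 : Set X := b ∩ f '' A2 with hu2
  have hfA2closed : IsClosed (f '' A2) := (hA2c.image hfc).isClosed
  have hu2m : MeasurableSet u2 := measurableSet_ball.inter hfA2closed.measurableSet
  set I : Set X → ℝ≥0∞ := fun A => ∫⁻ z in A ∩ Dset, ENNReal.ofReal |(f' z).det| ∂μ with hI
  have e1 : μ u1 ≤ I A1 := le_trans (measure_mono inter_subset_right) (Ilow A1 hA1m)
  have e2 : μ u2 ≤ I A2 := le_trans (measure_mono inter_subset_right) (Ilow A2 hA2m)
  have e3 : μ b ≤ μ (u1 ∪ u2) + I Rst := by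
    have hc2 : b ⊆ (u1 ∪ u2) ∪ f '' Rst := by
      intro g hg
      obtain ⟨x, hx⟩ := fSurj' hT hbdd g
      have hxK : x ∈ K := by
        show f x ∈ closedBall g₀ r
        rw [show f x = g from hx]
        exact ball_subset_closedBall hg
      by_cases h1 : x ∈ A1
      · exact mem_union_left _ (mem_union_left _ ⟨hg, ⟨x, h1, hx⟩⟩)
      by_cases h2 : x ∈ A2
      · exact mem_union_left _ (mem_union_right _ ⟨hg, ⟨x, h2, hx⟩⟩)
      · refine mem_union_right _ ⟨x, ⟨hxK, ?_⟩, hx⟩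
        rintro (h | h)
        exacts [h1 h, h2 h]
    calc μ b ≤ μ ((u1 ∪ u2) ∪ f '' Rst) := measure_mono hc2
      _ ≤ μ (u1 ∪ u2) + μ (f '' Rst) := measure_union_le _ _
      _ ≤ μ (u1 ∪ u2) + I Rst := add_le_add_right (Ilow Rst hRm) _
  have e4 : μ u1 + μ u2 = μ (u1 ∪ u2) + μ (u1 ∩ u2) := (measure_union_add_inter u1 hu2m).symm
  have e5 : μ (SS (p,q)) ≤ μ (u1 ∩ u2) := by
    apply measure_mono
    intro g hg
    exact ⟨⟨hg.2, hg.1.1⟩, ⟨hg.2, hg.1.2⟩⟩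
  have e6 : I A1 + (I A2 + I Rst) ≤ μ (closedBall g₀ r) := by
    have d12 : Disjoint (A1 ∩ Dset) (A2 ∩ Dset) :=
      hdisj.mono inter_subset_left inter_subset_left
    have dA1R : Disjoint A1 Rst := by
      rw [disjoint_left]
      intro a ha haR
      exact haR.2 (mem_union_left _ ha)
    have dA2R : Disjoint A2 Rst := by
      rw [disjoint_left]
      intro a ha haR
      exact haR.2 (mem_union_right _ ha)
    have d1R : Disjoint (A1 ∩ Dset) (Rst ∩ Dset) :=
      dA1R.mono inter_subset_left inter_subset_left
    have d2R : Disjoint (A2 ∩ Dset) (Rst ∩ Dset) :=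
      dA2R.mono inter_subset_left inter_subset_left
    have equ : ∫⁻ z in (A1 ∩ Dset) ∪ ((A2 ∩ Dset) ∪ (Rst ∩ Dset)),
        ENNReal.ofReal |(f' z).det| ∂μ = I A1 + (I A2 + I Rst) := by
      rw [lintegral_union ((hA2m.inter hDmeas).union (hRm.inter hDmeas))
        (d12.union_right d1R), lintegral_union (hRm.inter hDmeas) d2R]
    have hsubs : (A1 ∩ Dset) ∪ ((A2 ∩ Dset) ∪ (Rst ∩ Dset)) ⊆ s0 := by
      rintro z (hz | hz | hz)
      exacts [⟨hz.1.1, hz.2⟩, ⟨hz.1.1, hz.2⟩, ⟨hz.1.1, hz.2⟩]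
    calc I A1 + (I A2 + I Rst) = _ := equ.symm
      _ ≤ ∫⁻ z in s0, ENNReal.ofReal |(f' z).det| ∂μ := lintegral_mono_set hsubs
      _ ≤ μ (closedBall g₀ r) := L1
  have hbfin : μ b ≠ ∞ := measure_ball_lt_top.ne
  have hufin : μ (u1 ∪ u2) ≠ ∞ :=
    ((measure_mono (union_subset inter_subset_left inter_subset_left)).trans_lt
      measure_ball_lt_top).ne
  have e7 : μ (closedBall g₀ r) = μ b := Measure.addHaar_closedBall_eq_addHaar_ball μ g₀ r
  have big : (μ b + μ (u1 ∪ u2)) + μ (SS (p,q)) ≤ (μ b + μ (u1 ∪ u2)) + 0 := by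
    calc (μ b + μ (u1 ∪ u2)) + μ (SS (p,q))
        ≤ (μ b + μ (u1 ∪ u2)) + μ (u1 ∩ u2) := add_le_add_right e5 _
      _ = μ b + (μ (u1 ∪ u2) + μ (u1 ∩ u2)) := add_assoc _ _ _
      _ = μ b + (μ u1 + μ u2) := by rw [← e4]
      _ ≤ (μ (u1 ∪ u2) + I Rst) + (I A1 + I A2) := add_le_add e3 (add_le_add e1 e2)
      _ = μ (u1 ∪ u2) + (I A1 + (I A2 + I Rst)) := by ring
      _ ≤ μ (u1 ∪ u2) + μ (closedBall g₀ r) := add_le_add_right e6 _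
      _ = (μ b + μ (u1 ∪ u2)) + 0 := by rw [e7, add_zero, add_comm]
  have hfin2 : μ b + μ (u1 ∪ u2) ≠ ∞ := ENNReal.add_ne_top.mpr ⟨hbfin, hufin⟩
  have hzero : μ (SS (p,q)) ≤ 0 := (ENNReal.add_le_add_iff_left hfin2).mp big
  exact hμS.ne' (le_antisymm hzero (zero_le))


private lemma Edense (hT : ∀ x y, ‖T x - T y‖ ≤ ‖x - y‖)
    (hbdd : ∀ α : ℝ, 0 ≤ α → Bornology.IsBounded {x : X | ‖x - T x‖ ≤ α}) {c : ℝ} (hc : 0 < c) :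
    Dense {g : X | ∃ x y, x - T x = g ∧ y - T y = g ∧ c ≤ ‖x - y‖}ᶜ := by
  rw [← interior_eq_empty_iff_dense_compl]
  by_contra h
  obtain ⟨g₀, hg₀⟩ := nonempty_iff_ne_empty.mpr h
  obtain ⟨ε, hε, hball⟩ := Metric.mem_nhds_iff.mp (mem_interior_iff_mem_nhds.mp hg₀)
  exact keyDense hT hbdd hc hε g₀ hball

end Aux3

theorem stmt8 {X : Type*} [NormedAddCommGroup X] [NormedSpace ℝ X]
    [FiniteDimensional ℝ X] (T : X → X)
    (hT : ∀ x y, ‖T x - T y‖ ≤ ‖x - y‖)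
    (hbdd : ∀ α : ℝ, 0 ≤ α → Bornology.IsBounded {x : X | ‖x - T x‖ ≤ α}) :
    {g : X | ∃! x : X, x = g + T x} ∈ residual X := by
  rw [mem_residual]
  set E : ℕ → Set X := fun n =>
    {g : X | ∃ x y, x - T x = g ∧ y - T y = g ∧ (1/(n+1) : ℝ) ≤ ‖x - y‖} with hE
  refine ⟨⋂ n : ℕ, (E n)ᶜ, ?_, ?_, ?_⟩
  · intro g hg
    simp only [mem_iInter, mem_compl_iff] at hg
    obtain ⟨x, hx⟩ := fSurj' hT hbdd g
    refine ⟨x, ?_, ?_⟩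
    · show x = g + T x
      rw [← sub_eq_iff_eq_add]
      exact hx
    · intro y hy
      have hy'' : y = g + T y := hy
      have hy' : y - T y = g := by rw [sub_eq_iff_eq_add]; exact hy''
      by_contra hne
      have hpos : (0:ℝ) < ‖y - x‖ := norm_pos_iff.mpr (sub_ne_zero_of_ne hne)
      obtain ⟨n, hn⟩ := exists_nat_one_div_lt hpos
      exact hg n ⟨y, x, hy', hx, hn.le⟩
  · exact IsGδ.iInter fun n => (Eclosed hT hbdd _).isOpen_compl.isGδ
  · apply dense_iInter_of_isOpen
    · exact fun n => (Eclosed hT hbdd _).isOpen_compl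
    · exact fun n => Edense hT hbdd (by positivity)
end

section
/- Let T : ℝⁿ → ℝⁿ be a Shapley operator (monotone and additively homogeneous). Then the following are equivalent: (1) for every g ∈ ℝⁿ there exist λ ∈ ℝ and u ∈ ℝⁿ with g + T(u) = λ𝟙 + u; (2) for every α ≥ 0, the set {x ∈ ℝⁿ | ‖x − T(x)‖_H ≤ α} is bounded in the Hilbert seminorm; (3) for all α, β ∈ ℝ, the slice space S_α^β = {x ∈ ℝⁿ | α𝟙 + x ≤ T(x) ≤ β𝟙 + x} is bounded in the Hilbert seminorm. -/
noncomputable def hseminorm {n : ℕ} [NeZero n] (z : Fin n → ℝ) : ℝ :=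
  (⨆ i, z i) - ⨅ i, z i

section helpers

variable {n : ℕ} [NeZero n]

lemma hsem_le {z : Fin n → ℝ} {lo hi : ℝ} (h1 : ∀ i, z i ≤ hi) (h2 : ∀ i, lo ≤ z i) :
    hseminorm z ≤ hi - lo := by
  have hs : (⨆ i, z i) ≤ hi := ciSup_le h1
  have hi' : lo ≤ ⨅ i, z i := le_ciInf h2
  unfold hseminorm; linarith

lemma hsem_eq {z : Fin n → ℝ} {j i : Fin n} (hj : ∀ k, z k ≤ z j) (hi : ∀ k, z i ≤ z k) :
    hseminorm z = z j - z i := by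
  have h1 : (⨆ k, z k) = z j :=
    le_antisymm (ciSup_le hj) (le_ciSup (Set.Finite.bddAbove (Set.finite_range z)) j)
  have h2 : (⨅ k, z k) = z i :=
    le_antisymm (ciInf_le (Set.Finite.bddBelow (Set.finite_range z)) i) (le_ciInf hi)
  unfold hseminorm; rw [h1, h2]

lemma hsem_nonneg (z : Fin n → ℝ) : 0 ≤ hseminorm z := by
  obtain ⟨j, hj⟩ := Finite.exists_max z
  obtain ⟨i, hi⟩ := Finite.exists_min z
  rw [hsem_eq hj hi]; linarith [hi j]

lemma cmp_low {T : (Fin n → ℝ) → (Fin n → ℝ)}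
    (hmono : ∀ x y : Fin n → ℝ, x ≤ y → T x ≤ T y)
    (hhom : ∀ (x : Fin n → ℝ) (c : ℝ), T (x + fun _ => c) = T x + fun _ => c)
    {g u : Fin n → ℝ} {lam : ℝ} (hu : g + T u = (fun _ => lam) + u)
    {c : ℝ} {x : Fin n → ℝ} (hx : (fun _ => c) + x ≤ T x)
    {i : Fin n} (hi : ∀ j, x j - u j ≤ x i - u i) : c ≤ lam - g i := by
  have hxu : x ≤ u + fun _ => x i - u i := by
    intro j; simp only [Pi.add_apply]; linarith [hi j]
  have h1 : T x ≤ T u + fun _ => x i - u i := by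
    calc T x ≤ T (u + fun _ => x i - u i) := hmono _ _ hxu
    _ = T u + fun _ => x i - u i := hhom u _
  have h2 := h1 i
  have h3 := hx i
  have h4 := congrFun hu i
  simp only [Pi.add_apply] at h2 h3 h4
  linarith

lemma cmp_high {T : (Fin n → ℝ) → (Fin n → ℝ)}
    (hmono : ∀ x y : Fin n → ℝ, x ≤ y → T x ≤ T y)
    (hhom : ∀ (x : Fin n → ℝ) (c : ℝ), T (x + fun _ => c) = T x + fun _ => c)
    {g u : Fin n → ℝ} {lam : ℝ} (hu : g + T u = (fun _ => lam) + u)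
    {d : ℝ} {x : Fin n → ℝ} (hx : T x ≤ (fun _ => d) + x)
    {j : Fin n} (hj : ∀ k, x j - u j ≤ x k - u k) : lam - g j ≤ d := by
  have hux : u ≤ x + fun _ => u j - x j := by
    intro k; simp only [Pi.add_apply]; linarith [hj k]
  have h1 : T u ≤ T x + fun _ => u j - x j := by
    calc T u ≤ T (x + fun _ => u j - x j) := hmono _ _ hux
    _ = T x + fun _ => u j - x j := hhom x _
  have h2 := h1 j
  have h3 := hx j
  have h4 := congrFun hu j
  simp only [Pi.add_apply] at h2 h3 h4
  linarith

lemma exists_eig (T : (Fin n → ℝ) → (Fin n → ℝ))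
    (hmono : ∀ x y : Fin n → ℝ, x ≤ y → T x ≤ T y)
    (hhom : ∀ (x : Fin n → ℝ) (c : ℝ), T (x + fun _ => c) = T x + fun _ => c)
    (h3 : ∀ α β : ℝ, ∃ M : ℝ, ∀ x : Fin n → ℝ,
      ((fun _ => α) + x ≤ T x ∧ T x ≤ (fun _ => β) + x) → hseminorm x ≤ M) :
    ∃ (lam : ℝ) (u : Fin n → ℝ), T u = (fun _ => lam) + u := by
  -- T is nonexpansive in the sup metric
  have key : ∀ a b : Fin n → ℝ, T a ≤ T b + fun _ => dist a b := by
    intro a b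
    have hab : a ≤ b + fun _ => dist a b := by
      intro i; simp only [Pi.add_apply]
      have h := dist_le_pi_dist a b i
      rw [Real.dist_eq] at h
      linarith [(abs_le.mp h).2]
    calc T a ≤ T (b + fun _ => dist a b) := hmono _ _ hab
    _ = T b + fun _ => dist a b := hhom b _
  have hne : ∀ x y : Fin n → ℝ, dist (T x) (T y) ≤ dist x y := by
    intro x y
    rw [dist_pi_le_iff dist_nonneg]
    intro b
    rw [Real.dist_eq, abs_le]
    have h1 := key x y b
    have h2 := key y x b
    simp only [Pi.add_apply] at h1 h2
    rw [dist_comm y x] at h2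
    constructor <;> linarith
  have hlip : LipschitzWith 1 T :=
    LipschitzWith.of_dist_le_mul (by simpa using hne)
  set K : ℝ := dist (T 0) 0 with hK
  obtain ⟨M, hM⟩ := h3 (-K) K
  set M' : ℝ := max M 0 with hM'
  have hM'0 : 0 ≤ M' := le_max_right _ _
  have main : ∀ k : ℕ, ∃ w : Fin n → ℝ, (∀ i, 0 ≤ w i ∧ w i ≤ M') ∧
      (∀ i j, |(w i - T w i) - (w j - T w j)| ≤ 2 * M' / (k + 2)) := by
    intro k
    set δ : ℝ := 1 / (k + 2) with hδdef
    have hk2 : (0:ℝ) < (k:ℝ) + 2 := by positivity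
    have hδ0 : 0 < δ := by positivity
    have hδ1 : δ < 1 := by
      rw [hδdef, div_lt_one hk2]
      linarith [Nat.cast_nonneg (α := ℝ) k]
    have hlipΦ : LipschitzWith (Real.toNNReal (1 - δ)) (fun x => T ((1 - δ) • x)) := by
      apply LipschitzWith.of_dist_le_mul
      intro x y
      calc dist (T ((1 - δ) • x)) (T ((1 - δ) • y)) ≤ dist ((1 - δ) • x) ((1 - δ) • y) :=
            hne _ _
      _ = ‖(1 - δ)‖ * dist x y := dist_smul₀ _ _ _
      _ = ↑(Real.toNNReal (1 - δ)) * dist x y := by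
            rw [Real.norm_eq_abs, abs_of_nonneg (by linarith),
              Real.coe_toNNReal _ (by linarith)]
    have hC : ContractingWith (Real.toNNReal (1 - δ)) (fun x => T ((1 - δ) • x)) := by
      refine ⟨?_, hlipΦ⟩
      have h : (Real.toNNReal (1 - δ) : ℝ) < 1 := by
        rw [Real.coe_toNNReal _ (by linarith)]; linarith
      exact_mod_cast h
    set v : Fin n → ℝ := ContractingWith.fixedPoint _ hC with hv'
    have hv : T ((1 - δ) • v) = v := hC.fixedPoint_isFixedPt
    have hKd : δ * dist v 0 ≤ K := by
      have h1 : dist v (T 0) ≤ (1 - δ) * dist v 0 := by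
        calc dist v (T 0) = dist (T ((1 - δ) • v)) (T 0) := by rw [hv]
        _ ≤ dist ((1 - δ) • v) 0 := hne _ _
        _ = dist ((1 - δ) • v) ((1 - δ) • (0 : Fin n → ℝ)) := by rw [smul_zero]
        _ = ‖(1 - δ)‖ * dist v 0 := dist_smul₀ _ _ _
        _ = (1 - δ) * dist v 0 := by rw [Real.norm_eq_abs, abs_of_nonneg (by linarith)]
      have h2 := dist_triangle v (T 0) 0
      rw [hK]; linarith
    have hvTv : ∀ i, |v i - T v i| ≤ K := by
      intro i
      have h1 : dist v (T v) ≤ δ * dist v 0 := by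
        calc dist v (T v) = dist (T ((1 - δ) • v)) (T v) := by rw [hv]
        _ ≤ dist ((1 - δ) • v) v := hne _ _
        _ = δ * dist v 0 := by
              rw [dist_eq_norm]
              have he : (1 - δ) • v - v = (-δ) • v := by
                funext t; simp [smul_eq_mul]; ring
              rw [he, norm_smul, Real.norm_eq_abs, abs_neg, abs_of_pos hδ0,
                ← dist_zero_right v]
      have h2 := dist_le_pi_dist v (T v) i
      rw [Real.dist_eq] at h2
      linarith
    have hslice : hseminorm v ≤ M := by
      apply hM v
      constructor
      · intro i; simp only [Pi.add_apply]
        have := abs_le.mp (hvTv i); linarith [this.2]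
      · intro i; simp only [Pi.add_apply]
        have := abs_le.mp (hvTv i); linarith [this.1]
    obtain ⟨p, hp⟩ := Finite.exists_min v
    obtain ⟨q, hq⟩ := Finite.exists_max v
    have hpq : v q - v p ≤ M' := by
      rw [← hsem_eq hq hp]; exact hslice.trans (le_max_left _ _)
    refine ⟨fun i => v i - v p, ?_, ?_⟩
    · intro i
      constructor
      · show (0:ℝ) ≤ v i - v p
        linarith [hp i]
      · show v i - v p ≤ M'
        linarith [hq i, hpq]
    · intro i j
      set w : Fin n → ℝ := fun i => v i - v p with hw
      have hTw : T w = fun t => T v t - v p := by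
        have h := hhom v (-(v p))
        have he : (v + fun _ => -(v p)) = w := by
          funext t; simp only [hw, Pi.add_apply]; ring
        rw [he] at h
        rw [h]; funext t; simp only [Pi.add_apply]; ring
      set a : Fin n → ℝ := fun t => v t - δ * w t with ha'
      have ha : ∀ t, T a t = v t + δ * v p := by
        have h1 : a + (fun _ => -(δ * v p)) = (1 - δ) • v := by
          funext t
          simp only [ha', hw, Pi.add_apply, Pi.smul_apply, smul_eq_mul]
          ring
        have h2 := hhom a (-(δ * v p))
        rw [h1, hv] at h2
        intro t
        have := congrFun h2 t
        simp only [Pi.add_apply] at this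
        linarith
      have hA : ∀ t, |T a t - T v t| ≤ δ * M' := by
        intro t
        have h1 : dist (T a) (T v) ≤ dist a v := hne a v
        have h2 : dist a v ≤ δ * M' := by
          rw [dist_pi_le_iff (by positivity)]
          intro b; rw [Real.dist_eq]
          have he : a b - v b = -(δ * w b) := by
            show v b - δ * w b - v b = -(δ * w b); ring
          rw [he, abs_neg, abs_mul, abs_of_pos hδ0]
          have hwb : |w b| ≤ M' := by
            rw [abs_of_nonneg (show (0:ℝ) ≤ v b - v p by linarith [hp b])]
            show v b - v p ≤ M'
            linarith [hq b, hpq]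
          exact mul_le_mul_of_nonneg_left hwb (le_of_lt hδ0)
        have h3 := dist_le_pi_dist (T a) (T v) t
        rw [Real.dist_eq] at h3
        linarith
      have hkey : ∀ t, w t - T w t = (T a t - T v t) - δ * v p := by
        intro t
        have h1 := ha t
        have h2 : T w t = T v t - v p := congrFun hTw t
        rw [h2]
        show v t - v p - (T v t - v p) = T a t - T v t - δ * v p
        linarith
      rw [hkey i, hkey j]
      have hAi := abs_le.mp (hA i)
      have hAj := abs_le.mp (hA j)
      rw [abs_le]
      have hb2 : 2 * M' / ((k:ℝ) + 2) = 2 * (δ * M') := by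
        rw [hδdef]; ring
      constructor <;> [linarith [hAi.1, hAj.2]; linarith [hAi.2, hAj.1]]
  choose w hw1 hw2 using main
  have hbox : ∀ k, w k ∈ Metric.closedBall (0 : Fin n → ℝ) M' := by
    intro k
    rw [Metric.mem_closedBall, dist_pi_le_iff hM'0]
    intro b
    rw [Real.dist_eq]
    have := hw1 k b
    rw [abs_of_nonneg (by simpa using this.1)]
    simpa using this.2
  obtain ⟨u, -, φ, hφ, hconv⟩ :=
    tendsto_subseq_of_bounded Metric.isBounded_closedBall hbox
  have hcont : Continuous T := hlip.continuous
  have hTu : ∀ i j, u i - T u i = (u j - T u j) := by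
    intro i j
    have h1 : Filter.Tendsto (fun k => w (φ k)) Filter.atTop (nhds u) := hconv
    have h2 : Filter.Tendsto (fun k => T (w (φ k))) Filter.atTop (nhds (T u)) :=
      (hcont.tendsto u).comp h1
    have hei : ∀ t : Fin n, Filter.Tendsto (fun k => w (φ k) t) Filter.atTop (nhds (u t)) :=
      fun t => ((continuous_apply t).tendsto u).comp h1
    have hTei : ∀ t : Fin n,
        Filter.Tendsto (fun k => T (w (φ k)) t) Filter.atTop (nhds (T u t)) :=
      fun t => ((continuous_apply t).tendsto (T u)).comp h2
    have h3 : Filter.Tendsto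
        (fun k => (w (φ k) i - T (w (φ k)) i) - (w (φ k) j - T (w (φ k)) j))
        Filter.atTop (nhds ((u i - T u i) - (u j - T u j))) :=
      ((hei i).sub (hTei i)).sub ((hei j).sub (hTei j))
    have h4 : Filter.Tendsto
        (fun k => (w (φ k) i - T (w (φ k)) i) - (w (φ k) j - T (w (φ k)) j))
        Filter.atTop (nhds 0) := by
      apply squeeze_zero_norm (a := fun k => 2 * M' / ((φ k : ℝ) + 2))
      · intro k
        rw [Real.norm_eq_abs]
        exact hw2 (φ k) i j
      · apply Filter.Tendsto.div_atTop tendsto_const_nhds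
        apply Filter.tendsto_atTop_add_const_right
        exact tendsto_natCast_atTop_atTop.comp hφ.tendsto_atTop
    have := tendsto_nhds_unique h3 h4
    linarith
  refine ⟨T u 0 - u 0, u, ?_⟩
  funext i
  simp only [Pi.add_apply]
  have := hTu i 0
  linarith

end helpers

theorem stmt12 {n : ℕ} [NeZero n] (T : (Fin n → ℝ) → (Fin n → ℝ))
    (hmono : ∀ x y : Fin n → ℝ, x ≤ y → T x ≤ T y)
    (hhom : ∀ (x : Fin n → ℝ) (c : ℝ), T (x + fun _ => c) = T x + fun _ => c) :
    [∀ g : Fin n → ℝ, ∃ (lam : ℝ) (u : Fin n → ℝ),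
        g + T u = (fun _ => lam) + u,
      ∀ α : ℝ, 0 ≤ α →
        ∃ M : ℝ, ∀ x : Fin n → ℝ, hseminorm (x - T x) ≤ α → hseminorm x ≤ M,
      ∀ α β : ℝ,
        ∃ M : ℝ, ∀ x : Fin n → ℝ,
          ((fun _ => α) + x ≤ T x ∧ T x ≤ (fun _ => β) + x) →
            hseminorm x ≤ M].TFAE := by
  tfae_have 1 → 3
  · intro h1 α β
    set R : ℝ := β - α + 1 with hR
    choose lam u hu using fun J : Finset (Fin n) =>
      h1 (fun i => if i ∈ J then R else 0)
    obtain ⟨D, hD0, hD⟩ : ∃ D : ℝ, 0 ≤ D ∧ ∀ J, hseminorm (u J) ≤ D := by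
      refine ⟨Finset.univ.sup' ⟨∅, Finset.mem_univ _⟩ (fun J => hseminorm (u J)),
        ?_, fun J => Finset.le_sup' (fun J => hseminorm (u J)) (Finset.mem_univ J)⟩
      exact (hsem_nonneg (u ∅)).trans
        (Finset.le_sup' (fun J => hseminorm (u J)) (Finset.mem_univ ∅))
    refine ⟨2 * D + 1, ?_⟩
    rintro x ⟨hxl, hxr⟩
    by_contra hcon
    push_neg at hcon
    obtain ⟨i₀, hi₀⟩ := Finite.exists_min x
    obtain ⟨j₁, hj₁⟩ := Finite.exists_max x
    have hxh : x j₁ - x i₀ = hseminorm x := (hsem_eq hj₁ hi₀).symm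
    set J : Finset (Fin n) := Finset.univ.filter (fun j => D + 1 < x j - x i₀) with hJ
    have hmem : ∀ t, t ∈ J ↔ D + 1 < x t - x i₀ := by
      intro t; rw [hJ, Finset.mem_filter]; simp
    obtain ⟨p, hp⟩ := Finite.exists_min (u J)
    obtain ⟨q, hq⟩ := Finite.exists_max (u J)
    have hud : u J q - u J p ≤ D := by rw [← hsem_eq hq hp]; exact hD J
    obtain ⟨is, his⟩ := Finite.exists_max (fun t => x t - u J t)
    obtain ⟨js, hjs⟩ := Finite.exists_min (fun t => x t - u J t)
    have hiJ : is ∈ J := by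
      rw [hmem]
      by_contra hni
      push_neg at hni
      have h2 := his j₁
      linarith [hq j₁, hp is, hud]
    have hjJ : js ∉ J := by
      intro hmemj
      have h1 := (hmem js).mp hmemj
      have h2 := hjs i₀
      linarith [hq js, hp i₀, hud]
    have hc1 := cmp_low hmono hhom (hu J) hxl his
    have hc2 := cmp_high hmono hhom (hu J) hxr hjs
    rw [if_pos hiJ] at hc1
    rw [if_neg hjJ] at hc2
    linarith
  tfae_have 3 → 1
  · intro h3 g
    obtain ⟨p, hp⟩ := Finite.exists_min g
    obtain ⟨q, hq⟩ := Finite.exists_max g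
    have h3' : ∀ α β : ℝ, ∃ M : ℝ, ∀ x : Fin n → ℝ,
        ((fun _ => α) + x ≤ (fun z => g + T z) x ∧
          (fun z => g + T z) x ≤ (fun _ => β) + x) → hseminorm x ≤ M := by
      intro α β
      obtain ⟨M, hM⟩ := h3 (α - g q) (β - g p)
      refine ⟨M, fun x ⟨h1, h2⟩ => hM x ⟨?_, ?_⟩⟩
      · intro i
        have := h1 i
        simp only [Pi.add_apply] at this ⊢
        linarith [hq i]
      · intro i
        have := h2 i
        simp only [Pi.add_apply] at this ⊢
        linarith [hp i]
    obtain ⟨lam, uu, huu⟩ := exists_eig (fun z => g + T z)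
      (fun x y h => by
        intro i
        simp only [Pi.add_apply]
        linarith [hmono x y h i])
      (fun x c => by
        show g + T (x + fun _ => c) = (g + T x) + fun _ => c
        rw [hhom x c, add_assoc])
      h3'
    exact ⟨lam, uu, huu⟩
  tfae_have 3 → 2
  · intro h3 α _
    obtain ⟨lam, uu, huu⟩ := exists_eig T hmono hhom h3
    obtain ⟨M, hM⟩ := h3 (lam - α) (lam + α)
    refine ⟨M, fun x hx => hM x ?_⟩
    obtain ⟨a, ha⟩ := Finite.exists_min (x - T x)
    obtain ⟨b, hb⟩ := Finite.exists_max (x - T x)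
    have hz : (x - T x) b - (x - T x) a ≤ α := by rw [← hsem_eq hb ha]; exact hx
    have hu0 : (fun _ : Fin n => (0:ℝ)) + T uu = (fun _ => lam) + uu := by
      funext t
      have := congrFun huu t
      simp only [Pi.add_apply] at this ⊢
      linarith
    have hxl : (fun _ : Fin n => -((x - T x) a + α)) + x ≤ T x := by
      intro i
      have h1 := hb i
      simp only [Pi.add_apply, Pi.sub_apply] at h1 hz ⊢
      linarith
    have hxr : T x ≤ (fun _ : Fin n => -((x - T x) a)) + x := by
      intro i
      have h1 := ha i
      simp only [Pi.add_apply, Pi.sub_apply] at h1 ⊢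
      linarith
    obtain ⟨ia, hia⟩ := Finite.exists_max (fun t => x t - uu t)
    obtain ⟨ja, hja⟩ := Finite.exists_min (fun t => x t - uu t)
    have hc1 := cmp_low hmono hhom hu0 hxl hia
    have hc2 := cmp_high hmono hhom hu0 hxr hja
    constructor
    · intro i
      have h1 := hb i
      simp only [Pi.add_apply, Pi.sub_apply] at h1 hz hc2 ⊢
      linarith
    · intro i
      have h1 := ha i
      simp only [Pi.add_apply, Pi.sub_apply] at h1 hc1 ⊢
      linarith
  tfae_have 2 → 3
  · intro h2 α β
    obtain ⟨M, hM⟩ := h2 (max (β - α) 0) (le_max_right _ _)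
    refine ⟨M, fun x ⟨ha, hb⟩ => hM x ?_⟩
    have h : hseminorm (x - T x) ≤ -α - -β := by
      apply hsem_le
      · intro i
        have := ha i
        simp only [Pi.add_apply, Pi.sub_apply] at this ⊢
        linarith
      · intro i
        have := hb i
        simp only [Pi.add_apply, Pi.sub_apply] at this ⊢
        linarith
    calc hseminorm (x - T x) ≤ -α - -β := h
    _ = β - α := by ring
    _ ≤ max (β - α) 0 := le_max_left _ _
  tfae_finish
end

section
/- Let T : ℝⁿ → ℝⁿ be a Shapley operator such that every slice space {x | α𝟙 + x ≤ T(x) ≤ β𝟙 + x} is bounded in the Hilbert seminorm. Then the set of perturbation vectors g ∈ ℝⁿ for which the operator g + T has a unique bias up to an additive constant (i.e., the set {u ∈ ℝⁿ | ∃λ ∈ ℝ, g + T(u) = λ𝟙 + u} is nonempty and is a single equivalence class modulo ℝ𝟙) is a residual subset of ℝⁿ. -/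
open Filter Topology MeasureTheory Set
open scoped NNReal ENNReal

set_option linter.unusedSectionVars false

namespace Stmt13Aux

variable {n : ℕ} [NeZero n]

noncomputable def smax (z : Fin n → ℝ) : ℝ := ⨆ i, z i
noncomputable def smin (z : Fin n → ℝ) : ℝ := ⨅ i, z i

lemma npos : 0 < n := Nat.pos_of_ne_zero (NeZero.ne n)

noncomputable def i0 {n : ℕ} [NeZero n] : Fin n := ⟨0, npos⟩

instance : Nonempty (Fin n) := ⟨i0⟩

lemma le_smax (z : Fin n → ℝ) (i : Fin n) : z i ≤ smax z :=
  le_ciSup (Set.Finite.bddAbove (Set.finite_range z)) i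

lemma smax_le {z : Fin n → ℝ} {a : ℝ} (h : ∀ i, z i ≤ a) : smax z ≤ a := ciSup_le h

lemma smin_le (z : Fin n → ℝ) (i : Fin n) : smin z ≤ z i :=
  ciInf_le (Set.Finite.bddBelow (Set.finite_range z)) i

lemma le_smin {z : Fin n → ℝ} {a : ℝ} (h : ∀ i, a ≤ z i) : a ≤ smin z := le_ciInf h

lemma exists_smax (z : Fin n → ℝ) : ∃ i, smax z = z i := by
  obtain ⟨i, hi⟩ := Finite.exists_max z
  exact ⟨i, le_antisymm (smax_le hi) (le_smax z i)⟩

lemma exists_smin (z : Fin n → ℝ) : ∃ i, smin z = z i := by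
  obtain ⟨i, hi⟩ := Finite.exists_min z
  exact ⟨i, le_antisymm (smin_le z i) (le_smin hi)⟩

lemma smin_le_smax (z : Fin n → ℝ) : smin z ≤ smax z :=
  (smin_le z i0).trans (le_smax z i0)

lemma hseminorm_eq (z : Fin n → ℝ) : hseminorm z = smax z - smin z := rfl


set_option linter.unusedSectionVars false
section Op

variable (S : (Fin n → ℝ) → Fin n → ℝ)
variable (hm : ∀ x y : Fin n → ℝ, x ≤ y → S x ≤ S y)
variable (hh : ∀ (x : Fin n → ℝ) (c : ℝ), S (x + fun _ => c) = S x + fun _ => c)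

include hm hh

lemma op_le {x y : Fin n → ℝ} {c : ℝ} (h : ∀ i, x i ≤ y i + c) :
    ∀ i, S x i ≤ S y i + c := by
  have h1 : x ≤ y + fun _ => c := fun i => h i
  have h2 := hm x (y + fun _ => c) h1
  rw [hh y c] at h2
  exact fun i => h2 i

lemma op_lipschitz : LipschitzWith 1 S := by
  refine LipschitzWith.of_dist_le_mul fun x y => ?_
  have hc : ((1:ℝ≥0):ℝ) * dist x y = dist x y := by norm_num
  rw [hc, dist_pi_le_iff dist_nonneg]
  intro i
  rw [Real.dist_eq, abs_le]
  constructor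
  · have := op_le S hm hh (x := y) (y := x) (c := dist x y)
      (fun j => by
        have h1 : y j - x j ≤ dist (x j) (y j) := by
          rw [Real.dist_eq, abs_sub_comm]; exact le_abs_self _
        have h2 := dist_le_pi_dist x y j
        linarith) i
    linarith
  · have := op_le S hm hh (x := x) (y := y) (c := dist x y)
      (fun j => by
        have h1 : x j - y j ≤ dist (x j) (y j) := le_abs_self _
        have h2 := dist_le_pi_dist x y j
        linarith) i
    linarith

lemma op_cont : Continuous S := (op_lipschitz S hm hh).continuous

omit hh in
lemma iter_mono (k : ℕ) : ∀ x y : Fin n → ℝ, x ≤ y → S^[k] x ≤ S^[k] y := by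
  induction k with
  | zero => intro x y h; simpa using h
  | succ k ih =>
    intro x y h
    rw [Function.iterate_succ_apply, Function.iterate_succ_apply]
    exact ih _ _ (hm x y h)

omit hm in
lemma iter_homog (k : ℕ) : ∀ (x : Fin n → ℝ) (c : ℝ),
    S^[k] (x + fun _ => c) = S^[k] x + fun _ => c := by
  induction k with
  | zero => intro x c; simp
  | succ k ih =>
    intro x c
    rw [Function.iterate_succ_apply, Function.iterate_succ_apply, hh, ih]

lemma op_le_smax (x y : Fin n → ℝ) : ∀ i, S x i ≤ S y i + smax (x - y) :=
  op_le S hm hh (fun i => by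
    have := le_smax (x - y) i
    simp only [Pi.sub_apply] at this
    linarith)

end Op

section Exist

variable (S : (Fin n → ℝ) → Fin n → ℝ)
variable (hm : ∀ x y : Fin n → ℝ, x ≤ y → S x ≤ S y)
variable (hh : ∀ (x : Fin n → ℝ) (c : ℝ), S (x + fun _ => c) = S x + fun _ => c)

include hm hh in
theorem exists_eigen
    (hsl : ∀ α β : ℝ, ∃ M : ℝ, ∀ x : Fin n → ℝ,
      (∀ i, α + x i ≤ S x i) → (∀ i, S x i ≤ β + x i) → smax x - smin x ≤ M) :
    ∃ (u : Fin n → ℝ) (lam : ℝ), S u = (fun _ => lam) + u := by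
  classical
  set X : ℕ → Fin n → ℝ := fun k => S^[k] 0 with hX
  have hX0 : X 0 = 0 := rfl
  have hXsucc : ∀ k, X (k + 1) = S (X k) := fun k => Function.iterate_succ_apply' S k 0
  set c : ℝ := dist (S 0) 0 with hc
  have hstep : ∀ k, dist (S (X k)) (X k) ≤ c := by
    intro k
    induction k with
    | zero => rw [hX0]
    | succ k ih =>
      rw [hXsucc k]
      have h1 := (op_lipschitz S hm hh).dist_le_mul (S (X k)) (X k)
      have h2 : ((1:ℝ≥0):ℝ) = 1 := by norm_num
      rw [h2, one_mul] at h1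
      exact h1.trans ih
  have hslice0 : ∀ k, (∀ i, -c + X k i ≤ S (X k) i) ∧ (∀ i, S (X k) i ≤ c + X k i) := by
    intro k
    have h1 : ∀ i, |S (X k) i - X k i| ≤ c := by
      intro i
      have h2 := dist_le_pi_dist (S (X k)) (X k) i
      rw [Real.dist_eq] at h2
      exact h2.trans (hstep k)
    constructor
    · intro i; have := abs_le.mp (h1 i); linarith [this.2]
    · intro i; have := abs_le.mp (h1 i); linarith [this.1]
  obtain ⟨M, hM⟩ := hsl (-c) c
  set K : ℝ := max M 0 with hKdef
  have hK0 : (0:ℝ) ≤ K := le_max_right _ _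
  have hK : ∀ k, smax (X k) - smin (X k) ≤ K := by
    intro k
    have := hM (X k) (hslice0 k).1 (hslice0 k).2
    exact this.trans (le_max_left _ _)
  have hXadd : ∀ k l, X (k + l) = S^[k] (X l) := fun k l => Function.iterate_add_apply S k l 0
  -- subadditivity of smax
  have Msub : ∀ k l, smax (X (k + l)) ≤ smax (X k) + smax (X l) := by
    intro k l
    have h1 : X l ≤ (0 : Fin n → ℝ) + fun _ => smax (X l) := by
      intro i; simpa using le_smax (X l) i
    have h2 := iter_mono S hm k _ _ h1
    rw [iter_homog S hh k] at h2
    refine smax_le fun i => ?_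
    have h3 : X (k + l) i ≤ X k i + smax (X l) := by
      have := h2 i
      rw [hXadd k l]
      simpa using this
    exact h3.trans (by have := le_smax (X k) i; linarith)
  have msuper : ∀ k l, smin (X k) + smin (X l) ≤ smin (X (k + l)) := by
    intro k l
    have h1 : ((0 : Fin n → ℝ) + fun _ => smin (X l)) ≤ X l := by
      intro i; simpa using smin_le (X l) i
    have h2 := iter_mono S hm k _ _ h1
    rw [iter_homog S hh k] at h2
    refine le_smin fun i => ?_
    have h3 : X k i + smin (X l) ≤ X (k + l) i := by
      have := h2 i
      rw [hXadd k l]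
      simpa using this
    exact le_trans (by have := smin_le (X k) i; linarith) h3
  have hsmax0 : smax (X 0) = 0 := by
    rw [hX0]; exact le_antisymm (smax_le fun i => le_rfl) (le_smax 0 i0)
  have hsmin0 : smin (X 0) = 0 := by
    rw [hX0]; exact le_antisymm (smin_le 0 i0) (le_smin fun i => le_rfl)
  -- multiplicative bounds
  have hmulmin : ∀ a b : ℕ, (b : ℝ) * smin (X a) ≤ smin (X (a * b)) := by
    intro a b
    induction b with
    | zero => simp [hsmin0]
    | succ b ih =>
      have h1 := msuper (a * b) a
      have h2 : a * b + a = a * (b + 1) := by ring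
      rw [h2] at h1
      push_cast
      nlinarith [ih]
  have hmulmax : ∀ a b : ℕ, smax (X (a * b)) ≤ (b : ℝ) * smax (X a) := by
    intro a b
    induction b with
    | zero => simp [hsmax0]
    | succ b ih =>
      have h1 := Msub (a * b) a
      have h2 : a * b + a = a * (b + 1) := by ring
      rw [h2] at h1
      push_cast
      nlinarith [ih]
  have hminmax : ∀ k, smin (X k) ≤ smax (X k) := fun k => smin_le_smax _
  -- the eigenvalue
  have hbddb : BddBelow (Set.range fun k : ℕ => smax (X (k + 1)) / ((k : ℝ) + 1)) := by
    refine ⟨smin (X 1), ?_⟩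
    rintro a ⟨k, rfl⟩
    have hpos : (0:ℝ) < (k : ℝ) + 1 := by positivity
    rw [le_div_iff₀ hpos]
    have h1 := hmulmin 1 (k + 1)
    have h2 : 1 * (k + 1) = k + 1 := by ring
    rw [h2] at h1
    push_cast at h1
    have := hminmax (k + 1)
    nlinarith
  have hbdda : BddAbove (Set.range fun k : ℕ => smin (X (k + 1)) / ((k : ℝ) + 1)) := by
    refine ⟨smax (X 1), ?_⟩
    rintro a ⟨k, rfl⟩
    have hpos : (0:ℝ) < (k : ℝ) + 1 := by positivity
    rw [div_le_iff₀ hpos]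
    have h1 := hmulmax 1 (k + 1)
    have h2 : 1 * (k + 1) = k + 1 := by ring
    rw [h2] at h1
    push_cast at h1
    have := hminmax (k + 1)
    nlinarith
  set lam : ℝ := ⨅ k : ℕ, smax (X (k + 1)) / ((k : ℝ) + 1) with hlamdef
  set lam' : ℝ := ⨆ k : ℕ, smin (X (k + 1)) / ((k : ℝ) + 1) with hlam'def
  have cross : ∀ k j : ℕ, smin (X (k + 1)) / ((k : ℝ) + 1) ≤ smax (X (j + 1)) / ((j : ℝ) + 1) := by
    intro k j
    have hkpos : (0:ℝ) < (k : ℝ) + 1 := by positivity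
    have hjpos : (0:ℝ) < (j : ℝ) + 1 := by positivity
    rw [div_le_div_iff₀ hkpos hjpos]
    have h1 := hmulmin (k + 1) (j + 1)
    have h2 := hmulmax (j + 1) (k + 1)
    have h3 : (k + 1) * (j + 1) = (j + 1) * (k + 1) := by ring
    rw [h3] at h1
    have h4 := hminmax ((j + 1) * (k + 1))
    push_cast at h1 h2
    nlinarith
  have hlam'lam : lam' ≤ lam := by
    rw [hlamdef, hlam'def]
    exact le_ciInf fun j => ciSup_le fun k => cross k j
  have hlamlam' : lam ≤ lam' := by
    by_contra hcon
    push_neg at hcon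
    set δ := lam - lam' with hδ
    have hδpos : 0 < δ := by simp [hδ]; linarith
    obtain ⟨k, hk⟩ := exists_nat_gt (K / δ)
    have hkpos : (0:ℝ) < (k : ℝ) + 1 := by positivity
    have h1 : lam ≤ smax (X (k + 1)) / ((k : ℝ) + 1) := ciInf_le hbddb k
    have h2 : smin (X (k + 1)) / ((k : ℝ) + 1) ≤ lam' := le_ciSup hbdda k
    have h3 : smax (X (k + 1)) ≤ smin (X (k + 1)) + K := by
      have := hK (k + 1); linarith
    have h4 : K / ((k : ℝ) + 1) < δ := by
      rw [div_lt_iff₀ hkpos]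
      rw [div_lt_iff₀ hδpos] at hk
      nlinarith
    have h5 : smax (X (k + 1)) / ((k : ℝ) + 1)
        ≤ smin (X (k + 1)) / ((k : ℝ) + 1) + K / ((k : ℝ) + 1) := by
      rw [← add_div]
      gcongr
    have : lam ≤ lam' + K / ((k : ℝ) + 1) := by linarith
    linarith
  have hMb : ∀ k : ℕ, ((k : ℝ) + 1) * lam ≤ smax (X (k + 1)) := by
    intro k
    have hkpos : (0:ℝ) < (k : ℝ) + 1 := by positivity
    have h1 : lam ≤ smax (X (k + 1)) / ((k : ℝ) + 1) := ciInf_le hbddb k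
    rw [le_div_iff₀ hkpos] at h1
    linarith
  have hmb : ∀ k : ℕ, smin (X (k + 1)) ≤ ((k : ℝ) + 1) * lam := by
    intro k
    have hkpos : (0:ℝ) < (k : ℝ) + 1 := by positivity
    have h1 : smin (X (k + 1)) / ((k : ℝ) + 1) ≤ lam' := le_ciSup hbdda k
    rw [div_le_iff₀ hkpos] at h1
    nlinarith [hlam'lam]
  -- the normalized orbit
  set Y : ℕ → Fin n → ℝ := fun k => fun i => X k i - (k : ℝ) * lam with hY
  have hYb : ∀ k i, |Y k i| ≤ K := by
    intro k i
    match k with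
    | 0 => simp [hY, hX0, hK0]
    | (k + 1) =>
      have h1 : X (k + 1) i ≤ smax (X (k + 1)) := le_smax _ i
      have h2 : smin (X (k + 1)) ≤ X (k + 1) i := smin_le _ i
      have h3 := hK (k + 1)
      have h4 := hMb k
      have h5 := hmb k
      rw [abs_le]
      constructor
      · simp only [hY]; push_cast; nlinarith
      · simp only [hY]; push_cast; nlinarith
  set G : (Fin n → ℝ) → Fin n → ℝ := fun z => fun i => S z i - lam with hG
  have hGm : ∀ x y : Fin n → ℝ, x ≤ y → G x ≤ G y := by
    intro x y h i
    have := hm x y h i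
    simp only [hG]
    linarith
  have hGh : ∀ (x : Fin n → ℝ) (cc : ℝ), G (x + fun _ => cc) = G x + fun _ => cc := by
    intro x cc
    funext i
    have := congrFun (hh x cc) i
    simp only [hG, Pi.add_apply] at this ⊢
    linarith
  have hGY : ∀ k, Y (k + 1) = G (Y k) := by
    intro k
    funext i
    have h1 : Y k = X k + fun _ => -((k:ℝ) * lam) := by
      funext j; simp [hY, sub_eq_add_neg]
    rw [hG]
    simp only [h1]
    rw [hh (X k) (-((k:ℝ) * lam))]
    simp only [hY, Pi.add_apply, hXsucc k]
    push_cast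
    ring
  set Box : Set (Fin n → ℝ) := Set.Icc (fun _ => -K) (fun _ => K) with hBox
  have hBoxC : IsCompact Box := isCompact_Icc
  have hYBox : ∀ k, Y k ∈ Box := by
    intro k
    rw [hBox, Set.mem_Icc]
    constructor
    · intro i; have := abs_le.mp (hYb k i); exact this.1
    · intro i; have := abs_le.mp (hYb k i); exact this.2
  set Om : Set (Fin n → ℝ) :=
    {w | ∃ φ : ℕ → ℕ, StrictMono φ ∧ Tendsto (fun j => Y (φ j)) atTop (𝓝 w)} with hOm
  have hOmne : Om.Nonempty := by
    obtain ⟨w, _, φ, hφ, hconv⟩ := hBoxC.tendsto_subseq hYBox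
    exact ⟨w, φ, hφ, hconv⟩
  have hOmBox : Om ⊆ Box := by
    rintro w ⟨φ, hφ, hconv⟩
    exact hBoxC.isClosed.mem_of_tendsto hconv (Filter.Eventually.of_forall fun j => hYBox _)
  have hGcont : Continuous G := by
    rw [hG]
    refine continuous_pi fun i => Continuous.sub ?_ continuous_const
    exact (continuous_apply i).comp (op_cont S hm hh)
  have hpre : ∀ w ∈ Om, ∃ v ∈ Om, G v = w := by
    rintro w ⟨φ, hφ, hconv⟩
    have hφ1 : ∀ j, 1 ≤ φ (j + 1) := fun j => le_trans (Nat.succ_le_succ (Nat.zero_le j)) (hφ.le_apply)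
    have hψmono : StrictMono (fun j => φ (j + 1) - 1) := by
      intro a b hab
      have h1 : φ (a + 1) < φ (b + 1) := hφ (by omega)
      have h2 := hφ1 a
      show φ (a + 1) - 1 < φ (b + 1) - 1
      omega
    obtain ⟨v, hvBox, σ, hσ, hconv2⟩ :=
      hBoxC.tendsto_subseq (x := fun j => Y (φ (j + 1) - 1)) (fun j => hYBox _)
    refine ⟨v, ⟨(fun j => φ (j + 1) - 1) ∘ σ, hψmono.comp hσ, hconv2⟩, ?_⟩
    have h1 : Tendsto (fun j => G (Y (φ (σ j + 1) - 1))) atTop (𝓝 (G v)) :=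
      (hGcont.tendsto v).comp hconv2
    have h2 : ∀ j, G (Y (φ (σ j + 1) - 1)) = Y (φ (σ j + 1)) := by
      intro j
      rw [← hGY]
      have h9 := hφ1 (σ j)
      have h10 : φ (σ j + 1) - 1 + 1 = φ (σ j + 1) := by omega
      rw [h10]
    have hmono2 : StrictMono (fun j => σ j + 1) := fun a b hab => by
      have := hσ hab
      show σ a + 1 < σ b + 1
      omega
    have h3 : Tendsto (fun j => Y (φ (σ j + 1))) atTop (𝓝 w) :=
      hconv.comp hmono2.tendsto_atTop
    rw [show (fun j => G (Y (φ (σ j + 1) - 1))) = fun j => Y (φ (σ j + 1)) from funext h2] at h1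
    exact tendsto_nhds_unique h1 h3
  have hGinv : ∀ w ∈ Om, G w ∈ Om := by
    rintro w ⟨φ, hφ, hconv⟩
    refine ⟨fun j => φ j + 1, fun a b hab => by
      have := hφ hab
      show φ a + 1 < φ b + 1
      omega, ?_⟩
    have h1 : Tendsto (fun j => G (Y (φ j))) atTop (𝓝 (G w)) := (hGcont.tendsto w).comp hconv
    have h2 : (fun j => Y (φ j + 1)) = fun j => G (Y (φ j)) := funext fun j => hGY (φ j)
    rw [h2]
    exact h1
  -- the infimum of Omega
  have himgne : ∀ i : Fin n, ((fun w : Fin n → ℝ => w i) '' Om).Nonempty :=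
    fun i => hOmne.image _
  have himgbdd : ∀ i : Fin n, BddBelow ((fun w : Fin n → ℝ => w i) '' Om) := by
    intro i
    refine ⟨-K, ?_⟩
    rintro a ⟨w, hw, rfl⟩
    exact (hOmBox hw).1 i
  set u0 : Fin n → ℝ := fun i => sInf ((fun w : Fin n → ℝ => w i) '' Om) with hu0
  have hu0le : ∀ w ∈ Om, u0 ≤ w := by
    intro w hw i
    exact csInf_le (himgbdd i) ⟨w, hw, rfl⟩
  have hGu0 : G u0 ≤ u0 := by
    intro i
    refine le_csInf (himgne i) ?_
    rintro a ⟨w, hw, rfl⟩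
    obtain ⟨v, hv, hGv⟩ := hpre w hw
    calc G u0 i ≤ G v i := hGm u0 v (hu0le v hv) i
    _ = w i := by rw [hGv]
  set Z : ℕ → Fin n → ℝ := fun k => G^[k] u0 with hZ
  have hZsucc : ∀ k, Z (k + 1) ≤ Z k := by
    intro k
    rw [hZ]
    simp only [Function.iterate_succ_apply]
    exact iter_mono G hGm k _ _ hGu0
  have hZanti : ∀ k l, k ≤ l → Z l ≤ Z k := by
    intro k l hkl
    induction l with
    | zero => have : k = 0 := by omega
              rw [this]
    | succ l ih =>
      rcases Nat.eq_or_lt_of_le hkl with h | h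
      · rw [h]
      · exact (hZsucc l).trans (ih (by omega))
  obtain ⟨w0, hw0⟩ := hOmne
  have hwk : ∀ k, G^[k] w0 ∈ Om := by
    intro k
    induction k with
    | zero => exact hw0
    | succ k ih =>
      rw [Function.iterate_succ_apply']
      exact hGinv _ ih
  set d : ℝ := dist u0 w0 with hd
  have hZlb : ∀ k i, -K - d ≤ Z k i := by
    intro k i
    have h1 : (w0 + fun _ => -d) ≤ u0 := by
      intro j
      have h2 := dist_le_pi_dist u0 w0 j
      rw [Real.dist_eq] at h2
      have h3 := abs_le.mp (h2.trans (le_of_eq rfl))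
      simp only [Pi.add_apply]
      linarith [h3.1]
    have h4 := iter_mono G hGm k _ _ h1
    rw [iter_homog G hGh k] at h4
    have h5 := h4 i
    simp only [Pi.add_apply] at h5
    have h6 : -K ≤ G^[k] w0 i := (hOmBox (hwk k)).1 i
    have h7 : G^[k] w0 i + -d ≤ Z k i := h5
    linarith
  set uinf : Fin n → ℝ := fun i => ⨅ k, Z k i with huinf
  have hbddZ : ∀ i, BddBelow (Set.range fun k => Z k i) := by
    intro i
    exact ⟨-K - d, by rintro a ⟨k, rfl⟩; exact hZlb k i⟩
  have htend : Tendsto Z atTop (𝓝 uinf) := by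
    rw [tendsto_pi_nhds]
    intro i
    exact tendsto_atTop_ciInf (fun k l hkl => hZanti k l hkl i) (hbddZ i)
  have hfix : G uinf = uinf := by
    have h1 : Tendsto (fun k => G (Z k)) atTop (𝓝 (G uinf)) := (hGcont.tendsto _).comp htend
    have h2 : (fun k => G (Z k)) = fun k => Z (k + 1) := by
      funext k
      rw [hZ]
      exact (Function.iterate_succ_apply' G k u0).symm
    have h3 : Tendsto (fun k => Z (k + 1)) atTop (𝓝 uinf) :=
      htend.comp (tendsto_add_atTop_nat 1)
    rw [h2] at h1
    exact tendsto_nhds_unique h1 h3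
  refine ⟨uinf, lam, funext fun i => ?_⟩
  have := congrFun hfix i
  simp only [hG, Pi.add_apply] at this ⊢
  linarith

end Exist

lemma smax_zero : smax (0 : Fin n → ℝ) = 0 := by
  refine le_antisymm (smax_le fun i => le_rfl) (le_smax 0 i0)

lemma smax_le_dist (g g' : Fin n → ℝ) : smax (g' - g) ≤ dist g g' := by
  refine smax_le fun i => ?_
  have h1 := dist_le_pi_dist g g' i
  rw [Real.dist_eq] at h1
  have h2 : g' i - g i ≤ |g i - g' i| := by rw [abs_sub_comm]; exact le_abs_self _
  simpa using h2.trans h1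

section Main

variable (T : (Fin n → ℝ) → Fin n → ℝ)
variable (hmono : ∀ x y : Fin n → ℝ, x ≤ y → T x ≤ T y)
variable (hhom : ∀ (x : Fin n → ℝ) (c : ℝ), T (x + fun _ => c) = T x + fun _ => c)

include hmono hhom

lemma eig_le {g g' u v : Fin n → ℝ} {lam mu : ℝ}
    (hu : g + T u = (fun _ => lam) + u) (hv : g' + T v = (fun _ => mu) + v) :
    mu - lam ≤ smax (g' - g) := by
  obtain ⟨a, ha⟩ := exists_smax (v - u)
  have h1 := op_le_smax T hmono hhom v u a
  have h2 := congrFun hu a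
  have h3 := congrFun hv a
  simp only [Pi.add_apply] at h2 h3
  have h4 := le_smax (g' - g) a
  simp only [Pi.sub_apply] at h4 ha
  rw [ha] at h1
  linarith

lemma eig_unique {g u v : Fin n → ℝ} {lam mu : ℝ}
    (hu : g + T u = (fun _ => lam) + u) (hv : g + T v = (fun _ => mu) + v) :
    mu = lam := by
  have h1 := eig_le T hmono hhom hu hv
  have h2 := eig_le T hmono hhom hv hu
  rw [sub_self, smax_zero] at h1 h2
  linarith

lemma eig_dist {g g' u v : Fin n → ℝ} {lam mu : ℝ}
    (hu : g + T u = (fun _ => lam) + u) (hv : g' + T v = (fun _ => mu) + v) :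
    |mu - lam| ≤ dist g g' := by
  rw [abs_le]
  constructor
  · have h1 := eig_le T hmono hhom hv hu
    have h2 := (smax_le_dist g' g).trans (le_of_eq (dist_comm g' g))
    linarith
  · have h1 := eig_le T hmono hhom hu hv
    exact h1.trans (smax_le_dist g g')

lemma bias_bound
    (hsl : ∀ α β : ℝ, ∃ M : ℝ, ∀ x : Fin n → ℝ,
      (∀ i, α + x i ≤ T x i) → (∀ i, T x i ≤ β + x i) → smax x - smin x ≤ M)
    (g₀ : Fin n → ℝ) (lam₀ : ℝ) (u₀ : Fin n → ℝ)
    (h₀ : g₀ + T u₀ = (fun _ => lam₀) + u₀) :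
    ∃ M : ℝ, ∀ g u lam, dist g g₀ ≤ 1 → g + T u = (fun _ => lam) + u →
      (∀ i, |u i - u i0| ≤ M) ∧ |lam - lam₀| ≤ 1 := by
  obtain ⟨M', hM'⟩ := hsl (lam₀ - 1 - (smax g₀ + 1)) (lam₀ + 1 - (smin g₀ - 1))
  refine ⟨M', ?_⟩
  intro g u lam hdist heq
  have hlam : |lam - lam₀| ≤ 1 := (eig_dist T hmono hhom h₀ heq).trans (by
    rw [dist_comm]; exact hdist)
  have hlam' := abs_le.mp hlam
  have hgcomp : ∀ i, |g i - g₀ i| ≤ 1 := by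
    intro i
    have h1 := dist_le_pi_dist g g₀ i
    rw [Real.dist_eq] at h1
    exact h1.trans hdist
  have hTu : ∀ i, T u i = lam + u i - g i := by
    intro i
    have := congrFun heq i
    simp only [Pi.add_apply] at this
    linarith
  have hlo : ∀ i, (lam₀ - 1 - (smax g₀ + 1)) + u i ≤ T u i := by
    intro i
    rw [hTu i]
    have h1 := abs_le.mp (hgcomp i)
    have h2 := le_smax g₀ i
    linarith [hlam'.1]
  have hup : ∀ i, T u i ≤ (lam₀ + 1 - (smin g₀ - 1)) + u i := by
    intro i
    rw [hTu i]
    have h1 := abs_le.mp (hgcomp i)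
    have h2 := smin_le g₀ i
    linarith [hlam'.2]
  have hbd := hM' u hlo hup
  refine ⟨fun i => ?_, hlam⟩
  rw [abs_le]
  constructor
  · have h1 := smin_le u i
    have h2 := le_smax u i0
    linarith
  · have h1 := le_smax u i
    have h2 := smin_le u i0
    linarith

end Main

section Path

variable (T : (Fin n → ℝ) → Fin n → ℝ)
variable (hmono : ∀ x y : Fin n → ℝ, x ≤ y → T x ≤ T y)
variable (hhom : ∀ (x : Fin n → ℝ) (c : ℝ), T (x + fun _ => c) = T x + fun _ => c)

include hmono hhom in
lemma bias_path {g u v : Fin n → ℝ} {lam : ℝ}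
    (hu : g + T u = (fun _ => lam) + u) (hv : g + T v = (fun _ => lam) + v) :
    ∃ γ : ℝ → (Fin n → ℝ),
      (∀ c, g + T (γ c) = (fun _ => lam) + γ c) ∧
      (∀ c d i, |γ c i - γ d i| ≤ |c - d|) ∧
      (∀ i, γ (smax (v - u)) i = u i) ∧
      (∀ i, γ (smin (v - u)) i = v i - smin (v - u)) := by
  classical
  set R : (Fin n → ℝ) → Fin n → ℝ := fun z => fun i => g i + T z i - lam with hR
  have hRm : ∀ x y : Fin n → ℝ, x ≤ y → R x ≤ R y := by
    intro x y h i
    have := hmono x y h i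
    simp only [hR]
    linarith
  have hRh : ∀ (x : Fin n → ℝ) (cc : ℝ), R (x + fun _ => cc) = R x + fun _ => cc := by
    intro x cc
    funext i
    have := congrFun (hhom x cc) i
    simp only [hR, Pi.add_apply] at this ⊢
    linarith
  have hRu : R u = u := by
    funext i
    have := congrFun hu i
    simp only [hR, Pi.add_apply] at this ⊢
    linarith
  have hRv : R v = v := by
    funext i
    have := congrFun hv i
    simp only [hR, Pi.add_apply] at this ⊢
    linarith
  have hRku : ∀ k, R^[k] u = u := by
    intro k
    induction k with
    | zero => rfl
    | succ k ih => rw [Function.iterate_succ_apply', ih, hRu]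
  have hRkv : ∀ k, R^[k] v = v := by
    intro k
    induction k with
    | zero => rfl
    | succ k ih => rw [Function.iterate_succ_apply', ih, hRv]
  set xc : ℝ → Fin n → ℝ := fun c => fun i => max (u i) (v i - c) with hxc
  have hxcu : ∀ c, u ≤ xc c := fun c i => le_max_left _ _
  have hxcv : ∀ c, (v + fun _ => -c) ≤ xc c := fun c i => by
    simp only [hxc, Pi.add_apply]
    have : v i + -c = v i - c := by ring
    rw [this]
    exact le_max_right _ _
  have hsub : ∀ c, xc c ≤ R (xc c) := by
    intro c i
    have h1 := hRm u (xc c) (hxcu c) i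
    rw [hRu] at h1
    have h2 := hRm _ (xc c) (hxcv c) i
    rw [hRh v (-c)] at h2
    simp only [Pi.add_apply] at h2
    have h3 := congrFun hRv i
    simp only [hxc]
    rw [max_le_iff]
    refine ⟨h1, ?_⟩
    have : v i - c = v i + -c := by ring
    rw [this, ← h3]
    exact h2
  have hmonok : ∀ c, Monotone (fun k => R^[k] (xc c)) := by
    intro c
    refine monotone_nat_of_le_succ fun k => ?_
    rw [Function.iterate_succ_apply]
    exact iter_mono R hRm k _ _ (hsub c)
  set bc : ℝ → ℝ := fun c => max 0 (smax (v - u) - c) with hbc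
  have hxcub : ∀ c, xc c ≤ u + fun _ => bc c := by
    intro c i
    simp only [hxc, Pi.add_apply, hbc]
    rw [max_le_iff]
    constructor
    · nlinarith [le_max_left (0:ℝ) (smax (v - u) - c)]
    · have h1 := le_smax (v - u) i
      simp only [Pi.sub_apply] at h1
      nlinarith [le_max_right (0:ℝ) (smax (v - u) - c)]
  have hub : ∀ c k, R^[k] (xc c) ≤ u + fun _ => bc c := by
    intro c k
    have h1 := iter_mono R hRm k _ _ (hxcub c)
    rw [iter_homog R hRh k, hRku k] at h1
    exact h1
  have hbddk : ∀ c i, BddAbove (Set.range fun k => R^[k] (xc c) i) := by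
    intro c i
    refine ⟨u i + bc c, ?_⟩
    rintro a ⟨k, rfl⟩
    exact hub c k i
  set γ : ℝ → Fin n → ℝ := fun c => fun i => ⨆ k, R^[k] (xc c) i with hγ
  have htd : ∀ c, Tendsto (fun k => R^[k] (xc c)) atTop (𝓝 (γ c)) := by
    intro c
    rw [tendsto_pi_nhds]
    intro i
    exact tendsto_atTop_ciSup (fun k l hkl => hmonok c hkl i) (hbddk c i)
  have hRcont : Continuous R := by
    rw [hR]
    refine continuous_pi fun i => ?_
    exact (continuous_const.add ((continuous_apply i).comp (op_cont T hmono hhom))).sub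
      continuous_const
  have hfix : ∀ c, R (γ c) = γ c := by
    intro c
    have h1 : Tendsto (fun k => R (R^[k] (xc c))) atTop (𝓝 (R (γ c))) :=
      (hRcont.tendsto _).comp (htd c)
    have h2 : (fun k => R (R^[k] (xc c))) = fun k => R^[k + 1] (xc c) := by
      funext k
      exact (Function.iterate_succ_apply' R k (xc c)).symm
    have h3 : Tendsto (fun k => R^[k + 1] (xc c)) atTop (𝓝 (γ c)) :=
      (htd c).comp (tendsto_add_atTop_nat 1)
    rw [h2] at h1
    exact tendsto_nhds_unique h1 h3
  have hbias : ∀ c, g + T (γ c) = (fun _ => lam) + γ c := by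
    intro c
    funext i
    have := congrFun (hfix c) i
    simp only [hR] at this
    simp only [Pi.add_apply]
    linarith
  have hxclip : ∀ c d i, xc c i ≤ xc d i + |c - d| := by
    intro c d i
    simp only [hxc]
    rw [max_le_iff]
    constructor
    · have := le_max_left (u i) (v i - d)
      have h0 := abs_nonneg (c - d)
      linarith
    · have := le_max_right (u i) (v i - d)
      have h0 : d - c ≤ |c - d| := by rw [abs_sub_comm]; exact le_abs_self _
      linarith
  have hseqlip : ∀ c d k i, R^[k] (xc c) i ≤ R^[k] (xc d) i + |c - d| := by
    intro c d k i
    have h1 : xc c ≤ xc d + fun _ => |c - d| := fun j => hxclip c d j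
    have h2 := iter_mono R hRm k _ _ h1
    rw [iter_homog R hRh k] at h2
    exact h2 i
  have hlip : ∀ c d i, |γ c i - γ d i| ≤ |c - d| := by
    intro c d i
    have hcd : ∀ c' d' : ℝ, γ c' i ≤ γ d' i + |c' - d'| := by
      intro c' d'
      refine ciSup_le fun k => ?_
      have h1 := hseqlip c' d' k i
      have h2 := le_ciSup (hbddk d' i) k
      linarith
    rw [abs_le]
    constructor
    · have := hcd d c
      rw [abs_sub_comm] at this
      linarith
    · have := hcd c d
      linarith
  refine ⟨γ, hbias, hlip, ?_, ?_⟩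
  · intro i
    have hxceq : xc (smax (v - u)) = u := by
      funext j
      simp only [hxc]
      refine max_eq_left ?_
      have := le_smax (v - u) j
      simp only [Pi.sub_apply] at this
      linarith
    simp only [hγ, hxceq, hRku]
    exact ciSup_const
  · intro i
    have hxceq : xc (smin (v - u)) = v + fun _ => -(smin (v - u)) := by
      funext j
      simp only [hxc, Pi.add_apply]
      have h1 : v j + -(smin (v - u)) = v j - smin (v - u) := by ring
      rw [h1]
      refine max_eq_right ?_
      have := smin_le (v - u) j
      simp only [Pi.sub_apply] at this
      linarith
    have hfixv : ∀ k, R^[k] (v + fun _ => -(smin (v - u))) = v + fun _ => -(smin (v - u)) := by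
      intro k
      rw [iter_homog R hRh k, hRkv k]
    simp only [hγ, hxceq, hfixv]
    have h5 : (⨆ _ : ℕ, ((v + fun _ => -(smin (v - u)) : Fin n → ℝ)) i)
        = ((v + fun _ => -(smin (v - u)) : Fin n → ℝ)) i := ciSup_const
    rw [h5]
    simp only [Pi.add_apply]
    ring

end Path

noncomputable def nu (u : Fin n → ℝ) : Fin n → ℝ := fun i => u i - u (i0 : Fin n)

lemma nu_i0 (u : Fin n → ℝ) : nu u i0 = 0 := sub_self _

def badSet (T : (Fin n → ℝ) → Fin n → ℝ) : Set (Fin n → ℝ) :=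
  {g | ∃ u v : Fin n → ℝ, (∃ lam : ℝ, g + T u = (fun _ => lam) + u) ∧
    (∃ mu : ℝ, g + T v = (fun _ => mu) + v) ∧ nu u ≠ nu v}

noncomputable def xdt (d : Fin n) (t : ℝ) (w : Fin n → ℝ) : Fin n → ℝ :=
  fun k => if k = (i0 : Fin n) then 0 else if k = d then t else w k

noncomputable def Fmap (T : (Fin n → ℝ) → Fin n → ℝ) (d : Fin n) (t : ℝ)
    (w : Fin n → ℝ) : Fin n → ℝ :=
  fun i => w d + xdt d t w i - T (xdt d t w) i

section Null

variable (T : (Fin n → ℝ) → Fin n → ℝ)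
variable (hmono : ∀ x y : Fin n → ℝ, x ≤ y → T x ≤ T y)
variable (hhom : ∀ (x : Fin n → ℝ) (c : ℝ), T (x + fun _ => c) = T x + fun _ => c)

include hhom in
lemma bias_shift {g u : Fin n → ℝ} {lam : ℝ} (hu : g + T u = (fun _ => lam) + u) :
    g + T (nu u) = (fun _ => lam) + nu u := by
  have h1 : nu u = u + fun _ => -(u (i0 : Fin n)) := by
    funext i; simp [nu, sub_eq_add_neg]
  rw [h1, hhom u (-(u (i0 : Fin n)))]
  funext i
  have := congrFun hu i
  simp only [Pi.add_apply] at this ⊢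
  linarith

include hmono hhom in
lemma bad_cover :
    badSet T ⊆ ⋃ (d : Fin n) (t : ℚ), Fmap T d (t : ℝ) '' {w | w (i0 : Fin n) = 0} := by
  rintro g ⟨u, v, ⟨lam, hu⟩, ⟨mu, hv⟩, hne⟩
  have hmu : mu = lam := eig_unique T hmono hhom hu hv
  rw [hmu] at hv
  have hu' := bias_shift T hhom hu
  have hv' := bias_shift T hhom hv
  set u' : Fin n → ℝ := nu u with hu'def
  set v' : Fin n → ℝ := nu v with hv'def
  obtain ⟨d, hd⟩ : ∃ d, u' d ≠ v' d := by
    by_contra hcon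
    push_neg at hcon
    exact hne (funext hcon)
  have hdi0 : d ≠ (i0 : Fin n) := by
    intro hcon
    rw [hcon] at hd
    exact hd (by rw [hu'def, hv'def, nu_i0, nu_i0])
  obtain ⟨γ, hbias, hlip, hend1, hend2⟩ := bias_path T hmono hhom hu' hv'
  set c1 : ℝ := smax (v' - u') with hc1
  set c0 : ℝ := smin (v' - u') with hc0
  have hc01 : c0 ≤ c1 := smin_le_smax _
  set hfn : ℝ → ℝ := fun c => γ c d - γ c (i0 : Fin n) with hhfn
  have hcoordcont : ∀ i : Fin n, Continuous fun c => γ c i := by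
    intro i
    refine LipschitzWith.continuous (K := 1) ?_
    refine LipschitzWith.of_dist_le_mul fun c c' => ?_
    rw [Real.dist_eq, Real.dist_eq]
    have := hlip c c' i
    simpa using this
  have hhcont : Continuous hfn := (hcoordcont d).sub (hcoordcont (i0 : Fin n))
  have hval1 : hfn c1 = u' d := by
    simp only [hhfn]
    rw [hend1 d, hend1 (i0 : Fin n)]
    rw [hu'def, nu_i0]
    ring
  have hval2 : hfn c0 = v' d := by
    simp only [hhfn]
    rw [hend2 d, hend2 (i0 : Fin n)]
    rw [hv'def, nu_i0]
    ring
  have key : ∀ q : ℚ, ∀ cstar : ℝ, hfn cstar = (q : ℝ) →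
      g ∈ ⋃ (d : Fin n) (t : ℚ), Fmap T d (t : ℝ) '' {w | w (i0 : Fin n) = 0} := by
    intro q cstar hcs
    have hbias' : g + T (γ cstar) = (fun _ => lam) + γ cstar := hbias cstar
    have hw' := bias_shift T hhom hbias'
    set what : Fin n → ℝ := nu (γ cstar) with hwhat
    have hwhati0 : what (i0 : Fin n) = 0 := nu_i0 _
    have hwhatd : what d = (q : ℝ) := by
      rw [hwhat]
      show γ cstar d - γ cstar (i0 : Fin n) = (q : ℝ)
      rw [← hcs]
    set wit : Fin n → ℝ := fun k => if k = d then lam else what k with hwit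
    have hwitmem : wit ∈ {w : Fin n → ℝ | w (i0 : Fin n) = 0} := by
      simp only [Set.mem_setOf_eq, hwit]
      rw [if_neg (by exact fun hcon => hdi0 hcon.symm), hwhati0]
    have hxdtwit : xdt d (q : ℝ) wit = what := by
      funext k
      simp only [xdt]
      by_cases hk0 : k = (i0 : Fin n)
      · rw [if_pos hk0, hk0, hwhati0]
      · rw [if_neg hk0]
        by_cases hkd : k = d
        · rw [if_pos hkd, hkd, hwhatd]
        · rw [if_neg hkd]
          simp only [hwit]
          rw [if_neg hkd]
    have hFeq : Fmap T d (q : ℝ) wit = g := by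
      funext i
      simp only [Fmap, hxdtwit]
      have h1 : wit d = lam := by simp [hwit]
      rw [h1]
      have := congrFun hw' i
      simp only [Pi.add_apply] at this
      linarith
    refine Set.mem_iUnion.mpr ⟨d, Set.mem_iUnion.mpr ⟨q, ⟨wit, hwitmem, hFeq⟩⟩⟩
  rcases lt_or_gt_of_ne hd with hlt | hgt
  · obtain ⟨q, hq1, hq2⟩ := exists_rat_btwn hlt
    have hmem : (q : ℝ) ∈ Set.Icc (hfn c1) (hfn c0) := by
      rw [hval1, hval2]
      exact ⟨le_of_lt hq1, le_of_lt hq2⟩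
    have := intermediate_value_Icc' hc01 (hhcont.continuousOn) hmem
    obtain ⟨cstar, _, hcs⟩ := this
    exact key q cstar hcs
  · obtain ⟨q, hq1, hq2⟩ := exists_rat_btwn hgt
    have hmem : (q : ℝ) ∈ Set.Icc (hfn c0) (hfn c1) := by
      rw [hval1, hval2]
      exact ⟨le_of_lt hq1, le_of_lt hq2⟩
    have := intermediate_value_Icc hc01 (hhcont.continuousOn) hmem
    obtain ⟨cstar, _, hcs⟩ := this
    exact key q cstar hcs

include hmono hhom in
lemma fmap_lipschitz (d : Fin n) (t : ℝ) : LipschitzWith 3 (Fmap T d t) := by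
  have hxdt : ∀ w w' : Fin n → ℝ, dist (xdt d t w) (xdt d t w') ≤ dist w w' := by
    intro w w'
    rw [dist_pi_le_iff dist_nonneg]
    intro k
    simp only [xdt]
    by_cases hk0 : k = (i0 : Fin n)
    · rw [if_pos hk0, if_pos hk0]; simpa using dist_nonneg
    · rw [if_neg hk0, if_neg hk0]
      by_cases hkd : k = d
      · rw [if_pos hkd, if_pos hkd]; simpa using dist_nonneg
      · rw [if_neg hkd, if_neg hkd]
        exact dist_le_pi_dist w w' k
  refine LipschitzWith.of_dist_le_mul fun w w' => ?_
  have hc : ((3:ℝ≥0):ℝ) = 3 := by norm_num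
  rw [hc, dist_pi_le_iff (by positivity)]
  intro i
  simp only [Fmap]
  rw [Real.dist_eq]
  have h1 : |w d - w' d| ≤ dist w w' := by
    have := dist_le_pi_dist w w' d
    rwa [Real.dist_eq] at this
  have h2 : |xdt d t w i - xdt d t w' i| ≤ dist w w' := by
    have h2a := dist_le_pi_dist (xdt d t w) (xdt d t w') i
    rw [Real.dist_eq] at h2a
    exact h2a.trans (hxdt w w')
  have h3 : |T (xdt d t w) i - T (xdt d t w') i| ≤ dist w w' := by
    have h3a := dist_le_pi_dist (T (xdt d t w)) (T (xdt d t w')) i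
    rw [Real.dist_eq] at h3a
    have h3b := (op_lipschitz T hmono hhom).dist_le_mul (xdt d t w) (xdt d t w')
    have h3c : ((1:ℝ≥0):ℝ) = 1 := by norm_num
    rw [h3c, one_mul] at h3b
    exact h3a.trans (h3b.trans (hxdt w w'))
  have habs : |w d + xdt d t w i - T (xdt d t w) i - (w' d + xdt d t w' i - T (xdt d t w') i)|
      ≤ |w d - w' d| + |xdt d t w i - xdt d t w' i| + |T (xdt d t w) i - T (xdt d t w') i| := by
    have := abs_sub_abs_le_abs_sub (w d) (w' d)
    rw [abs_le]
    constructor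
    · have e1 := abs_le.mp (le_refl |w d - w' d|)
      have a1 := neg_abs_le (w d - w' d)
      have a2 := neg_abs_le (xdt d t w i - xdt d t w' i)
      have a3 := le_abs_self (T (xdt d t w) i - T (xdt d t w') i)
      linarith
    · have a1 := le_abs_self (w d - w' d)
      have a2 := le_abs_self (xdt d t w i - xdt d t w' i)
      have a3 := neg_abs_le (T (xdt d t w) i - T (xdt d t w') i)
      linarith
  linarith

lemma null_N : volume {w : Fin n → ℝ | w (i0 : Fin n) = 0} = 0 := by
  have hset : {w : Fin n → ℝ | w (i0 : Fin n) = 0}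
      = (LinearMap.ker (LinearMap.proj (R := ℝ) (φ := fun _ : Fin n => ℝ) (i0 : Fin n)) :
        Submodule ℝ (Fin n → ℝ)) := by
    ext w
    simp [LinearMap.mem_ker]
  rw [hset]
  refine MeasureTheory.Measure.addHaar_submodule volume _ ?_
  intro hcon
  have h1 : (fun _ => (1:ℝ)) ∈ LinearMap.ker (LinearMap.proj (R := ℝ)
      (φ := fun _ : Fin n => ℝ) (i0 : Fin n)) := by
    rw [hcon]; trivial
  simp [LinearMap.mem_ker] at h1

include hmono hhom in
lemma null_image (d : Fin n) (t : ℝ) :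
    volume (Fmap T d t '' {w : Fin n → ℝ | w (i0 : Fin n) = 0}) = 0 := by
  have hH : (μH[(Fintype.card (Fin n) : ℝ)] : Measure (Fin n → ℝ)) = volume :=
    MeasureTheory.hausdorffMeasure_pi_real
  have hd0 : (0:ℝ) ≤ (Fintype.card (Fin n) : ℝ) := by positivity
  have h1 := (fmap_lipschitz T hmono hhom d t).hausdorffMeasure_image_le hd0
    {w : Fin n → ℝ | w (i0 : Fin n) = 0}
  rw [hH] at h1
  rw [null_N, mul_zero] at h1
  exact le_antisymm h1 zero_le

include hmono hhom in
lemma bad_null : volume (badSet T) = 0 := by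
  refine measure_mono_null (bad_cover T hmono hhom) ?_
  refine measure_iUnion_null fun d => measure_iUnion_null fun t =>
    null_image T hmono hhom d (t : ℝ)

include hmono hhom in
lemma dense_compl_bad : Dense (badSet T)ᶜ := by
  refine dense_iff_inter_open.mpr fun U hU hUne => ?_
  by_contra hcon
  rw [Set.not_nonempty_iff_eq_empty] at hcon
  have hsub : U ⊆ badSet T := by
    intro x hx
    by_contra hxb
    exact Set.eq_empty_iff_forall_notMem.mp hcon x ⟨hx, hxb⟩
  have h0 := measure_mono_null hsub (bad_null T hmono hhom)
  exact absurd h0 (ne_of_gt (hU.measure_pos volume hUne))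

end Null

def Ok (T : (Fin n → ℝ) → Fin n → ℝ) (ε : ℝ) : Set (Fin n → ℝ) :=
  {g | ∀ u v : Fin n → ℝ, ∀ lam mu : ℝ, g + T u = (fun _ => lam) + u →
    g + T v = (fun _ => mu) + v → dist (nu u) (nu v) < ε}

lemma nu_nu (u : Fin n → ℝ) : nu (nu u) = nu u := by
  funext i
  simp [nu]

section OpenSec

variable (T : (Fin n → ℝ) → Fin n → ℝ)
variable (hmono : ∀ x y : Fin n → ℝ, x ≤ y → T x ≤ T y)
variable (hhom : ∀ (x : Fin n → ℝ) (c : ℝ), T (x + fun _ => c) = T x + fun _ => c)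

include hmono hhom

lemma exists_bias
    (hsl : ∀ α β : ℝ, ∃ M : ℝ, ∀ x : Fin n → ℝ,
      (∀ i, α + x i ≤ T x i) → (∀ i, T x i ≤ β + x i) → smax x - smin x ≤ M)
    (g : Fin n → ℝ) : ∃ (u : Fin n → ℝ) (lam : ℝ), g + T u = (fun _ => lam) + u := by
  have hm' : ∀ x y : Fin n → ℝ, x ≤ y → (fun z => g + T z) x ≤ (fun z => g + T z) y := by
    intro x y h i
    simp only [Pi.add_apply]
    have := hmono x y h i
    linarith
  have hh' : ∀ (x : Fin n → ℝ) (c : ℝ),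
      (fun z => g + T z) (x + fun _ => c) = (fun z => g + T z) x + fun _ => c := by
    intro x c
    simp only
    rw [hhom x c]
    funext i
    simp only [Pi.add_apply]
    ring
  have hsl' : ∀ α β : ℝ, ∃ M : ℝ, ∀ x : Fin n → ℝ,
      (∀ i, α + x i ≤ (fun z => g + T z) x i) →
      (∀ i, (fun z => g + T z) x i ≤ β + x i) → smax x - smin x ≤ M := by
    intro α β
    obtain ⟨M, hM⟩ := hsl (α - smax g) (β - smin g)
    refine ⟨M, fun x h1 h2 => ?_⟩
    refine hM x (fun i => ?_) (fun i => ?_)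
    · have := h1 i
      simp only [Pi.add_apply] at this
      have h3 := le_smax g i
      linarith
    · have := h2 i
      simp only [Pi.add_apply] at this
      have h3 := smin_le g i
      linarith
  obtain ⟨u, lam, hfix⟩ := exists_eigen (fun z => g + T z) hm' hh' hsl'
  exact ⟨u, lam, hfix⟩

lemma Ok_open
    (hsl : ∀ α β : ℝ, ∃ M : ℝ, ∀ x : Fin n → ℝ,
      (∀ i, α + x i ≤ T x i) → (∀ i, T x i ≤ β + x i) → smax x - smin x ≤ M)
    (ε : ℝ) : IsOpen (Ok T ε) := by
  rw [← isClosed_compl_iff]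
  refine IsSeqClosed.isClosed ?_
  intro gs g hgs hlim
  have hgs' : ∀ m, ∃ u v : Fin n → ℝ, ∃ lam mu : ℝ,
      (gs m + T u = (fun _ => lam) + u) ∧ (gs m + T v = (fun _ => mu) + v) ∧
      ε ≤ dist (nu u) (nu v) := by
    intro m
    have h := hgs m
    simp only [Ok, Set.mem_compl_iff, Set.mem_setOf_eq] at h
    push_neg at h
    exact h
  choose uu vv lam mu hbu hbv hdist using hgs'
  have hbu' : ∀ m, gs m + T (nu (uu m)) = (fun _ => lam m) + nu (uu m) :=
    fun m => bias_shift T hhom (hbu m)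
  have hbv' : ∀ m, gs m + T (nu (vv m)) = (fun _ => mu m) + nu (vv m) :=
    fun m => bias_shift T hhom (hbv m)
  obtain ⟨w₀, lam₀, h₀⟩ := exists_bias T hmono hhom hsl g
  obtain ⟨M, hM⟩ := bias_bound T hmono hhom hsl g lam₀ w₀ h₀
  obtain ⟨m₀, hm₀⟩ := Metric.tendsto_atTop.mp hlim 1 one_pos
  have htail : ∀ m : ℕ, dist (gs (m + m₀)) g ≤ 1 := fun m => (hm₀ (m + m₀) (by omega)).le
  have hboundu : ∀ (m : ℕ) (i : Fin n), |nu (uu (m + m₀)) i| ≤ M := by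
    intro m i
    have h := (hM (gs (m + m₀)) (nu (uu (m + m₀))) (lam (m + m₀)) (htail m) (hbu' _)).1 i
    rwa [nu_i0, sub_zero] at h
  have hboundv : ∀ (m : ℕ) (i : Fin n), |nu (vv (m + m₀)) i| ≤ M := by
    intro m i
    have h := (hM (gs (m + m₀)) (nu (vv (m + m₀))) (mu (m + m₀)) (htail m) (hbv' _)).1 i
    rwa [nu_i0, sub_zero] at h
  have hboundl : ∀ m : ℕ, |lam (m + m₀) - lam₀| ≤ 1 :=
    fun m => (hM (gs (m + m₀)) (nu (uu (m + m₀))) (lam (m + m₀)) (htail m) (hbu' _)).2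
  have hboundm : ∀ m : ℕ, |mu (m + m₀) - lam₀| ≤ 1 :=
    fun m => (hM (gs (m + m₀)) (nu (vv (m + m₀))) (mu (m + m₀)) (htail m) (hbv' _)).2
  have hKKc : IsCompact ((Set.Icc (fun _ => -M) (fun _ => M) : Set (Fin n → ℝ)) ×ˢ
      ((Set.Icc (fun _ => -M) (fun _ => M) : Set (Fin n → ℝ)) ×ˢ
      ((Set.Icc (lam₀ - 1) (lam₀ + 1)) ×ˢ (Set.Icc (lam₀ - 1) (lam₀ + 1))))) :=
    (isCompact_Icc).prod ((isCompact_Icc).prod ((isCompact_Icc).prod isCompact_Icc))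
  have hseqK : ∀ m : ℕ,
      (nu (uu (m + m₀)), (nu (vv (m + m₀)), (lam (m + m₀), mu (m + m₀)))) ∈
      ((Set.Icc (fun _ => -M) (fun _ => M) : Set (Fin n → ℝ)) ×ˢ
      ((Set.Icc (fun _ => -M) (fun _ => M) : Set (Fin n → ℝ)) ×ˢ
      ((Set.Icc (lam₀ - 1) (lam₀ + 1)) ×ˢ (Set.Icc (lam₀ - 1) (lam₀ + 1))))) := by
    intro m
    refine ⟨⟨fun i => (abs_le.mp (hboundu m i)).1, fun i => (abs_le.mp (hboundu m i)).2⟩,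
      ⟨fun i => (abs_le.mp (hboundv m i)).1, fun i => (abs_le.mp (hboundv m i)).2⟩,
      ?_, ?_⟩
    · have h := abs_le.mp (hboundl m); exact ⟨by linarith [h.1], by linarith [h.2]⟩
    · have h := abs_le.mp (hboundm m); exact ⟨by linarith [h.1], by linarith [h.2]⟩
  obtain ⟨p, hpK, φ, hφ, hconv⟩ := hKKc.tendsto_subseq hseqK
  have hc_u : Tendsto (fun j => nu (uu (φ j + m₀))) atTop (𝓝 p.1) :=
    (continuous_fst.tendsto p).comp hconv
  have hc_v : Tendsto (fun j => nu (vv (φ j + m₀))) atTop (𝓝 p.2.1) :=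
    ((continuous_fst.comp continuous_snd).tendsto p).comp hconv
  have hc_l : Tendsto (fun j => lam (φ j + m₀)) atTop (𝓝 p.2.2.1) :=
    ((continuous_fst.comp (continuous_snd.comp continuous_snd)).tendsto p).comp hconv
  have hc_m : Tendsto (fun j => mu (φ j + m₀)) atTop (𝓝 p.2.2.2) :=
    ((continuous_snd.comp (continuous_snd.comp continuous_snd)).tendsto p).comp hconv
  have hmono4 : StrictMono (fun j => φ j + m₀) := fun a b h => by
    show φ a + m₀ < φ b + m₀
    have := hφ h
    omega
  have hc_g : Tendsto (fun j => gs (φ j + m₀)) atTop (𝓝 g) :=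
    hlim.comp hmono4.tendsto_atTop
  have hTcont := op_cont T hmono hhom
  -- limit equation for u
  have hequ : g + T p.1 = (fun _ => p.2.2.1) + p.1 := by
    have hL : Tendsto (fun j => gs (φ j + m₀) + T (nu (uu (φ j + m₀)))) atTop
        (𝓝 (g + T p.1)) := hc_g.add ((hTcont.tendsto p.1).comp hc_u)
    have hR : Tendsto (fun j => (fun _ : Fin n => lam (φ j + m₀)) + nu (uu (φ j + m₀)))
        atTop (𝓝 ((fun _ => p.2.2.1) + p.1)) := by
      refine Tendsto.add ?_ hc_u
      rw [tendsto_pi_nhds]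
      intro i
      exact hc_l
    have heq : (fun j => gs (φ j + m₀) + T (nu (uu (φ j + m₀)))) =
        fun j => (fun _ : Fin n => lam (φ j + m₀)) + nu (uu (φ j + m₀)) :=
      funext fun j => hbu' (φ j + m₀)
    rw [heq] at hL
    exact tendsto_nhds_unique hL hR
  have heqv : g + T p.2.1 = (fun _ => p.2.2.2) + p.2.1 := by
    have hL : Tendsto (fun j => gs (φ j + m₀) + T (nu (vv (φ j + m₀)))) atTop
        (𝓝 (g + T p.2.1)) := hc_g.add ((hTcont.tendsto p.2.1).comp hc_v)
    have hR : Tendsto (fun j => (fun _ : Fin n => mu (φ j + m₀)) + nu (vv (φ j + m₀)))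
        atTop (𝓝 ((fun _ => p.2.2.2) + p.2.1)) := by
      refine Tendsto.add ?_ hc_v
      rw [tendsto_pi_nhds]
      intro i
      exact hc_m
    have heq : (fun j => gs (φ j + m₀) + T (nu (vv (φ j + m₀)))) =
        fun j => (fun _ : Fin n => mu (φ j + m₀)) + nu (vv (φ j + m₀)) :=
      funext fun j => hbv' (φ j + m₀)
    rw [heq] at hL
    exact tendsto_nhds_unique hL hR
  -- limit of distances
  have hdlim : Tendsto (fun j => dist (nu (uu (φ j + m₀))) (nu (vv (φ j + m₀)))) atTop
      (𝓝 (dist p.1 p.2.1)) := hc_u.dist hc_v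
  have hdge : ε ≤ dist p.1 p.2.1 := by
    refine ge_of_tendsto hdlim (Filter.Eventually.of_forall fun j => ?_)
    exact hdist (φ j + m₀)
  -- normalization of limits
  have hpu0 : p.1 (i0 : Fin n) = 0 := by
    have h1 : Tendsto (fun j => nu (uu (φ j + m₀)) (i0 : Fin n)) atTop
        (𝓝 (p.1 (i0 : Fin n))) := ((continuous_apply (i0 : Fin n)).tendsto p.1).comp hc_u
    have h2 : (fun j => nu (uu (φ j + m₀)) (i0 : Fin n)) = fun _ => (0:ℝ) :=
      funext fun j => nu_i0 _
    rw [h2] at h1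
    exact tendsto_nhds_unique h1 tendsto_const_nhds
  have hpv0 : p.2.1 (i0 : Fin n) = 0 := by
    have h1 : Tendsto (fun j => nu (vv (φ j + m₀)) (i0 : Fin n)) atTop
        (𝓝 (p.2.1 (i0 : Fin n))) := ((continuous_apply (i0 : Fin n)).tendsto p.2.1).comp hc_v
    have h2 : (fun j => nu (vv (φ j + m₀)) (i0 : Fin n)) = fun _ => (0:ℝ) :=
      funext fun j => nu_i0 _
    rw [h2] at h1
    exact tendsto_nhds_unique h1 tendsto_const_nhds
  have hnup : nu p.1 = p.1 := by
    funext i; simp [nu, hpu0]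
  have hnvp : nu p.2.1 = p.2.1 := by
    funext i; simp [nu, hpv0]
  simp only [Ok, Set.mem_compl_iff, Set.mem_setOf_eq]
  push_neg
  exact ⟨p.1, p.2.1, p.2.2.1, p.2.2.2, hequ, heqv, by rw [hnup, hnvp]; exact hdge⟩

end OpenSec
end Stmt13Aux


open Stmt13Aux in
theorem stmt13 {n : ℕ} [NeZero n] (T : (Fin n → ℝ) → (Fin n → ℝ))
    (hmono : ∀ x y : Fin n → ℝ, x ≤ y → T x ≤ T y)
    (hhom : ∀ (x : Fin n → ℝ) (c : ℝ), T (x + fun _ => c) = T x + fun _ => c)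
    (hslice : ∀ α β : ℝ, ∃ M : ℝ, ∀ x : Fin n → ℝ,
      ((fun _ => α) + x ≤ T x ∧ T x ≤ (fun _ => β) + x) → hseminorm x ≤ M) :
    {g : Fin n → ℝ | ∃ u : Fin n → ℝ,
        (∃ lam : ℝ, g + T u = (fun _ => lam) + u) ∧
        ∀ v : Fin n → ℝ, (∃ mu : ℝ, g + T v = (fun _ => mu) + v) →
          ∃ c : ℝ, v = u + fun _ => c} ∈ residual (Fin n → ℝ) := by
  classical
  have hsl : ∀ α β : ℝ, ∃ M : ℝ, ∀ x : Fin n → ℝ,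
      (∀ i, α + x i ≤ T x i) → (∀ i, T x i ≤ β + x i) → smax x - smin x ≤ M := by
    intro α β
    obtain ⟨M, hM⟩ := hslice α β
    exact ⟨M, fun x h1 h2 => hM x ⟨fun i => h1 i, fun i => h2 i⟩⟩
  rw [mem_residual_iff]
  refine ⟨Set.range (fun k : ℕ => Ok T (1 / ((k:ℝ) + 1))), ?_, ?_, ?_, ?_⟩
  · rintro t ⟨k, rfl⟩
    exact Ok_open T hmono hhom hsl _
  · rintro t ⟨k, rfl⟩
    refine Dense.mono ?_ (dense_compl_bad T hmono hhom)
    intro g hg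
    intro u v lam mu hu hv
    have hne : nu u = nu v := by
      by_contra hne
      exact hg ⟨u, v, ⟨lam, hu⟩, ⟨mu, hv⟩, hne⟩
    rw [hne, dist_self]
    positivity
  · exact Set.countable_range _
  · intro g hg
    obtain ⟨u, lam, hu⟩ := exists_bias T hmono hhom hsl g
    refine ⟨u, ⟨lam, hu⟩, ?_⟩
    rintro v ⟨mu, hv⟩
    have hdist0 : dist (nu u) (nu v) = 0 := by
      by_contra hne0
      have hpos : 0 < dist (nu u) (nu v) :=
        lt_of_le_of_ne dist_nonneg (Ne.symm hne0)
      obtain ⟨k, hk⟩ := exists_nat_gt (1 / dist (nu u) (nu v))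
      have h2 : 1 / dist (nu u) (nu v) < (k:ℝ) + 1 := hk.trans (by linarith)
      rw [div_lt_iff₀ hpos] at h2
      have hlt : 1 / ((k:ℝ) + 1) < dist (nu u) (nu v) := by
        rw [div_lt_iff₀ (by positivity)]
        nlinarith
      have hmem := hg (Ok T (1 / ((k:ℝ) + 1))) ⟨k, rfl⟩
      have := hmem u v lam mu hu hv
      linarith
    have hne : nu u = nu v := by rwa [dist_eq_zero] at hdist0
    refine ⟨v (i0 : Fin n) - u (i0 : Fin n), ?_⟩
    funext i
    have h3 := congrFun hne i
    simp only [nu] at h3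
    simp only [Pi.add_apply]
    linarith
end

section
/- Let T : ℝⁿ → ℝⁿ be a Shapley operator and suppose there exist λ ∈ ℝ and u ∈ ℝⁿ with T(u) = λ𝟙 + u. Then for every x ∈ ℝⁿ and every coordinate i, the sequence (Tᵏ(x))_i / k converges to λ as k → ∞; in particular the mean payoff limit lim_k Tᵏ(0)/k exists and equals λ𝟙. -/
open Filter

theorem stmt14 {n : ℕ} (T : (Fin n → ℝ) → (Fin n → ℝ))
    (hmono : ∀ x y : Fin n → ℝ, x ≤ y → T x ≤ T y)
    (hhom : ∀ (x : Fin n → ℝ) (c : ℝ), T (x + fun _ => c) = T x + fun _ => c)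
    (lam : ℝ) (u : Fin n → ℝ) (hu : T u = (fun _ => lam) + u) :
    (∀ (x : Fin n → ℝ) (i : Fin n),
      Tendsto (fun k : ℕ => (T^[k] x i) / k) atTop (nhds lam)) ∧
    Tendsto (fun k : ℕ => ((k : ℝ))⁻¹ • T^[k] 0) atTop
      (nhds (fun _ => lam : Fin n → ℝ)) := by
  -- iterated monotonicity
  have hmonoIter : ∀ (k : ℕ) (x y : Fin n → ℝ), x ≤ y → T^[k] x ≤ T^[k] y := by
    intro k
    induction k with
    | zero => intro x y h; simpa using h
    | succ k ih =>
      intro x y h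
      rw [Function.iterate_succ_apply, Function.iterate_succ_apply]
      exact ih _ _ (hmono _ _ h)
  -- iterated homogeneity
  have hhomIter : ∀ (k : ℕ) (x : Fin n → ℝ) (c : ℝ),
      T^[k] (x + fun _ => c) = T^[k] x + fun _ => c := by
    intro k
    induction k with
    | zero => intro x c; simp
    | succ k ih =>
      intro x c
      rw [Function.iterate_succ_apply, hhom x c, ih, ← Function.iterate_succ_apply]
  -- iterate at u
  have hIterU : ∀ (k : ℕ), T^[k] u = (fun _ => (k : ℝ) * lam) + u := by
    intro k
    induction k with
    | zero => funext j; simp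
    | succ k ih =>
      rw [Function.iterate_succ_apply', ih]
      have : ((fun _ => (k : ℝ) * lam) + u) = u + fun _ => (k : ℝ) * lam := by
        funext j; simp [add_comm]
      rw [this, hhom u ((k : ℝ) * lam), hu]
      funext j
      simp
      ring
  -- auxiliary limit
  have haux : ∀ b : ℝ, Tendsto (fun k : ℕ => ((k : ℝ) * lam + b) / k) atTop (nhds lam) := by
    intro b
    have h1 : Tendsto (fun k : ℕ => lam + b * (1 / (k : ℝ))) atTop (nhds (lam + b * 0)) :=
      tendsto_const_nhds.add (tendsto_one_div_atTop_nhds_zero_nat.const_mul b)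
    rw [mul_zero, add_zero] at h1
    refine h1.congr' ?_
    filter_upwards [eventually_ge_atTop 1] with k hk
    have hk0 : (k : ℝ) ≠ 0 := by positivity
    field_simp
  have key : ∀ (x : Fin n → ℝ) (i : Fin n),
      Tendsto (fun k : ℕ => (T^[k] x i) / k) atTop (nhds lam) := by
    intro x i
    set c := ‖x - u‖ with hc
    have habs : ∀ j, |x j - u j| ≤ c := by
      intro j
      have := norm_le_pi_norm (x - u) j
      simpa [Real.norm_eq_abs] using this
    have hub : x ≤ u + fun _ => c := by
      intro j
      have := (abs_le.mp (habs j)).2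
      simpa using by linarith
    have hlb : (u + fun _ => -c) ≤ x := by
      intro j
      have := (abs_le.mp (habs j)).1
      simpa using by linarith
    have hup : ∀ k : ℕ, T^[k] x i ≤ (k : ℝ) * lam + (u i + c) := by
      intro k
      have := hmonoIter k x (u + fun _ => c) hub i
      rw [hhomIter k u c, hIterU k] at this
      simpa [add_assoc] using this
    have hlo : ∀ k : ℕ, (k : ℝ) * lam + (u i + -c) ≤ T^[k] x i := by
      intro k
      have := hmonoIter k (u + fun _ => -c) x hlb i
      rw [hhomIter k u (-c), hIterU k] at this
      simpa [add_assoc] using this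
    refine tendsto_of_tendsto_of_tendsto_of_le_of_le (haux (u i + -c)) (haux (u i + c)) ?_ ?_
    · intro k
      rcases Nat.eq_zero_or_pos k with rfl | hk
      · simp
      · exact div_le_div_of_nonneg_right (hlo k) (by positivity)
    · intro k
      rcases Nat.eq_zero_or_pos k with rfl | hk
      · simp
      · exact div_le_div_of_nonneg_right (hup k) (by positivity)
  refine ⟨key, ?_⟩
  rw [tendsto_pi_nhds]
  intro i
  have := key 0 i
  refine this.congr ?_
  intro k
  simp [div_eq_inv_mul]
end
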